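/- arXiv:2406.07675 — 8 statements merged into one kernel-verified Lean document; each statement's English description precedes it below -/
import Mathlib

section
/- Let R be an associative ring with involution *, let P be a prime ideal of R such that the quotient ring R/P has characteristic different from 2, and suppose Z(R) ∩ S(R) is not contained in P. If [x, x*] ∈ P for all x ∈ R, then R/P is an integral domain (i.e., R/P is commutative and has no nonzero zero divisors). -/
/-- Lemma 1, cf. [SA, Lemma 2.2].
Let `R` be a ring with involution `*` (modeled by `StarRing`), `P` a prime two-sided ideal
of `R` such that `char (R/P) ≠ 2` (equivalently, since `P` is proper, `(2 : R) ∉ P`) and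
`Z(R) ∩ S(R) ⊄ P`.  If `[x, x*] ∈ P` for all `x ∈ R`, then `R/P` is an integral domain
(i.e. `R/P` is nontrivial, commutative, and has no nonzero zero divisors; all of which is
expressed here via membership in `P`). -/
theorem statement0 {R : Type*} [Ring R] [StarRing R] (P : TwoSidedIdeal R)
    -- `P` is a proper two-sided ideal
    (hP_proper : (1 : R) ∉ P)
    -- `P` is a prime ideal: `aRb ⊆ P` implies `a ∈ P` or `b ∈ P`
    (hP_prime : ∀ a b : R, (∀ r : R, a * r * b ∈ P) → a ∈ P ∨ b ∈ P)
    -- `char (R/P) ≠ 2`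
    (hchar : (2 : R) ∉ P)
    -- `Z(R) ∩ S(R) ⊄ P`
    (hsecond : ∃ s : R, (∀ r : R, s * r = r * s) ∧ star s = -s ∧ s ∉ P)
    -- `[x, x*] ∈ P` for all `x ∈ R`
    (h : ∀ x : R, x * star x - star x * x ∈ P) :
    -- `R/P` is an integral domain
    (1 : R) ∉ P ∧ (∀ x y : R, x * y - y * x ∈ P) ∧
      (∀ x y : R, x * y ∈ P → x ∈ P ∨ y ∈ P) := by
  obtain ⟨s, hs, hss, hsP⟩ := hsecond
  -- linearized hypothesis
  have hL : ∀ x y : R,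
      x * star y + y * star x - star y * x - star x * y ∈ P := by
    intro x y
    have h1 := h (x + y)
    have h2 := P.sub_mem (P.sub_mem h1 (h x)) (h y)
    have e : (x + y) * star (x + y) - star (x + y) * (x + y)
        - (x * star x - star x * x) - (y * star y - star y * y)
        = x * star y + y * star x - star y * x - star x * y := by
      simp only [star_add]; noncomm_ring
    rwa [e] at h2
  -- step 1
  have step1 : ∀ x z : R,
      z * star x + star z * x - x * star z - star x * z ∈ P := by
    intro x z
    set t := z * star x + star z * x - x * star z - star x * z with ht
    have e1 : star (s * z) = -(s * star z) := by
      rw [star_mul, hss, mul_neg, ← hs]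
    have k1 : x * (s * star z) = s * (x * star z) := by
      rw [← mul_assoc, ← hs, mul_assoc]
    have k2 : star x * (s * z) = s * (star x * z) := by
      rw [← mul_assoc, ← hs, mul_assoc]
    have hst : s * t ∈ P := by
      have h2 := hL x (s * z)
      have e : x * star (s * z) + (s * z) * star x - star (s * z) * x
          - star x * (s * z) = s * t := by
        rw [e1, mul_neg, k1, k2, ht]
        noncomm_ring
      rwa [e] at h2
    rcases hP_prime s t (fun r => by
      have : s * r * t = r * (s * t) := by rw [hs, mul_assoc]
      rw [this]
      exact P.mul_mem_left _ _ hst) with h' | h'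
    · exact absurd h' hsP
    · exact h'
  -- commutativity mod P
  have comm : ∀ x y : R, x * y - y * x ∈ P := by
    have key : ∀ x z : R, z * star x - star x * z ∈ P := by
      intro x z
      have h2 := P.add_mem (hL x z) (step1 x z)
      have e : (x * star z + z * star x - star z * x - star x * z)
          + (z * star x + star z * x - x * star z - star x * z)
          = 2 * (z * star x - star x * z) := by noncomm_ring
      rw [e] at h2
      rcases hP_prime 2 (z * star x - star x * z) (fun r => by
        have : (2 : R) * r * (z * star x - star x * z)
            = r * (2 * (z * star x - star x * z)) := by noncomm_ring
        rw [this]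
        exact P.mul_mem_left _ _ h2) with h' | h'
      · exact absurd h' hchar
      · exact h'
    intro x y
    have := key (star x) y
    rw [star_star] at this
    simpa using P.neg_mem this
  refine ⟨hP_proper, comm, fun x y hxy => ?_⟩
  apply hP_prime x y
  intro r
  have e : x * r * y = (x * r - r * x) * y + r * (x * y) := by noncomm_ring
  rw [e]
  exact P.add_mem (P.mul_mem_right _ _ (comm x r)) (P.mul_mem_left _ _ hxy)
end

section
/- Let R be an associative ring with involution *, let P be a prime ideal of R such that R/P has characteristic different from 2, and suppose * is of P-second kind (Z(R) ∩ S(R) is not contained in P). If d₁ and d₂ are derivations of R such that the image of [d₁(x), x*] + [x, d₂(x*)] lies in Z(R/P) for all x ∈ R, then R/P is an integral domain, or both d₁(R) ⊆ P and d₂(R) ⊆ P. -/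
namespace St1

variable {Q : Type*} [Ring Q]

def brk (a b : Q) : Q := a * b - b * a

def Ctr (a : Q) : Prop := ∀ r : Q, a * r = r * a

lemma Ctr.add {a b : Q} (ha : Ctr a) (hb : Ctr b) : Ctr (a + b) := fun r => by
  rw [add_mul, mul_add, ha r, hb r]

lemma Ctr.sub {a b : Q} (ha : Ctr a) (hb : Ctr b) : Ctr (a - b) := fun r => by
  rw [sub_mul, mul_sub, ha r, hb r]

lemma Ctr.neg {a : Q} (ha : Ctr a) : Ctr (-a) := fun r => by
  rw [neg_mul, mul_neg, ha r]

lemma Ctr.mul {a b : Q} (ha : Ctr a) (hb : Ctr b) : Ctr (a * b) := fun r => by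
  rw [mul_assoc, hb r, ← mul_assoc, ha r, mul_assoc]

lemma Ctr.brk_eq_zero {a : Q} (ha : Ctr a) (b : Q) : brk a b = 0 := by
  simp [brk, ha b, sub_eq_zero]

lemma Ctr.brk_eq_zero' {a : Q} (ha : Ctr a) (b : Q) : brk b a = 0 := by
  simp [brk, (ha b).symm, sub_eq_zero]

lemma brk_neg_right (a b : Q) : brk a (-b) = - brk a b := by simp [brk]; abel

lemma brk_neg_left (a b : Q) : brk (-a) b = - brk a b := by simp [brk]; abel

lemma brk_zero_left (b : Q) : brk 0 b = 0 := by simp [brk]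

lemma brk_zero_right (b : Q) : brk b 0 = 0 := by simp [brk]

lemma brk_self (a : Q) : brk a a = 0 := by simp [brk]

lemma Ctr.of_neg {a : Q} (ha : Ctr (-a)) : Ctr a := fun r => by
  have := ha r
  rw [neg_mul, mul_neg, neg_inj] at this
  exact this

lemma brk_swap (a b : Q) : brk a b = - brk b a := by simp only [brk]; abel

lemma brk_add_left (a b c : Q) : brk (a + b) c = brk a c + brk b c := by
  simp only [brk]; noncomm_ring

lemma brk_brk_swap (a w : Q) : brk a (brk a w) = brk (brk w a) a := by
  simp only [brk]; noncomm_ring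

/-- L1 : if the inner derivation by `a` squares to zero, `a` is central. -/
lemma L1 (hpr : ∀ a b : Q, (∀ r : Q, a * r * b = 0) → a = 0 ∨ b = 0)
    (h2 : ∀ a : Q, a + a = 0 → a = 0)
    (a : Q) (h : ∀ w : Q, brk a (brk a w) = 0) : Ctr a := by
  have hprod : ∀ u v : Q, brk a u * brk a v = 0 := by
    intro u v
    have key : brk a (brk a (u * v)) =
        brk a (brk a u) * v + (brk a u * brk a v + brk a u * brk a v)
          + u * brk a (brk a v) := by
      simp only [brk]; noncomm_ring
    rw [h (u*v), h u, h v] at key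
    apply h2
    simpa using key.symm
  have hmid : ∀ u t v : Q, brk a u * t * brk a v = 0 := by
    intro u t v
    have e : brk a (u * t) * brk a v
        = brk a u * t * brk a v + u * (brk a t * brk a v) := by
      simp only [brk]; noncomm_ring
    rw [hprod (u*t) v, hprod t v, mul_zero] at e
    simpa using e.symm
  intro r
  have h0 : brk a r = 0 := by
    rcases hpr (brk a r) (brk a r) (fun t => hmid r t r) with h' | h' <;> exact h'
  exact sub_eq_zero.mp h0

/-- L2 : if all commutators with `a` are central, then `a` is central. -/
lemma L2 (hpr : ∀ a b : Q, (∀ r : Q, a * r * b = 0) → a = 0 ∨ b = 0)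
    (h2 : ∀ a : Q, a + a = 0 → a = 0)
    (a : Q) (h : ∀ w : Q, Ctr (brk a w)) : Ctr a := by
  apply L1 hpr h2
  intro w
  have := (h w) a
  simp only [brk] at this ⊢
  rw [this]; abel

section Steps

private lemma sigc (σ : Q) (hσ : ∀ r : Q, σ * r = r * σ) (a b : Q) :
    a * (σ * b) = σ * (a * b) := by
  rw [← mul_assoc, ← hσ a, mul_assoc]

private lemma sigc' (σ : Q) (hσ : ∀ r : Q, σ * r = r * σ) (a : Q) : a * σ = σ * a :=
  (hσ a).symm

lemma stepPhi (d1x d1y tx ty qx qy ex ey : Q) :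
    (brk (d1x + d1y) (tx + ty) + brk (qx + qy) (ex + ey)
      - (brk d1x tx + brk qx ex)) - (brk d1y ty + brk qy ey)
    = brk d1x ty + brk d1y tx + (brk qx ey + brk qy ex) := by
  simp only [brk]; noncomm_ring

lemma stepA (σ : Q) (hσ : ∀ r : Q, σ * r = r * σ) (d1x d1y tx ty qx qy ex ey c1 c2 : Q) :
    (brk d1x (-(σ * ty)) + brk (c1 * qy + σ * d1y) tx
      + (brk qx (-(σ * ey) - ty * c2) + brk (σ * qy) ex))
    + σ * (brk d1x ty + brk d1y tx + (brk qx ey + brk qy ex))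
    = (σ * (brk d1y tx + brk qy ex) + σ * (brk d1y tx + brk qy ex))
      + brk (c1 * qy) tx - brk qx (ty * c2) := by
  simp only [brk, mul_add, add_mul, mul_sub, sub_mul, mul_neg, neg_mul, mul_assoc,
    sigc σ hσ, sigc' σ hσ]
  abel

lemma stepD (σ : Q) (hσ : ∀ r : Q, σ * r = r * σ) (d1y tx ty qx qy ex c1 c2 : Q) :
    ((σ * (brk (c1 * qy + σ * d1y) tx + brk (σ * qy) ex)
        + σ * (brk (c1 * qy + σ * d1y) tx + brk (σ * qy) ex))
      + brk (c1 * (σ * qy)) tx - brk qx (-(σ * ty) * c2))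
    - σ * ((σ * (brk d1y tx + brk qy ex) + σ * (brk d1y tx + brk qy ex))
        + brk (c1 * qy) tx - brk qx (ty * c2))
    = σ * ((brk (c1 * qy) tx + brk qx (ty * c2))
        + (brk (c1 * qy) tx + brk qx (ty * c2))) := by
  simp only [brk, mul_add, add_mul, mul_sub, sub_mul, mul_neg, neg_mul, mul_assoc,
    sigc σ hσ, sigc' σ hσ]
  abel

lemma stepD2 (σ : Q) (hσ : ∀ r : Q, σ * r = r * σ) (tx ty qx qy c1 c2 : Q) :
    brk (c1 * (σ * qy)) tx + brk qx (-(σ * ty) * c2)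
    = σ * (brk (c1 * qy) tx - brk qx (ty * c2)) := by
  simp only [brk, mul_add, add_mul, mul_sub, sub_mul, mul_neg, neg_mul, mul_assoc,
    sigc σ hσ, sigc' σ hσ]
  abel

lemma stepF1 (X Y : Q) : (X + Y) + (X - Y) = X + X := by abel

lemma stepF2 (X Y : Q) : (X + Y) - (X - Y) = Y + Y := by abel

lemma stepK (σ G X Y : Q) :
    ((σ * G + σ * G) + X - Y + Y) - X = σ * (G + G) := by
  rw [mul_add]; abel

lemma stepDiag (A B c : Q) :
    brk (A * c + c * A) c + brk (c * c) B
    = (brk A c + brk c B) * c + c * (brk A c + brk c B) := by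
  simp only [brk]; noncomm_ring

lemma stepM (dt qt z γ : Q) (hz : ∀ r : Q, z * r = r * z) :
    brk (dt * γ + qt * z) γ = brk dt γ * γ + z * brk qt γ := by
  simp only [brk, mul_add, add_mul, mul_sub, sub_mul, mul_assoc,
    sigc z hz, sigc' z hz]
  abel

lemma stepM2 (ζ β γ z : Q) (hz : ∀ r : Q, z * r = r * z) (hζ : ∀ r : Q, ζ * r = r * ζ) :
    brk (ζ * γ + z * β) γ = z * brk β γ := by
  simp only [brk, mul_add, add_mul, mul_sub, sub_mul, mul_assoc,
    sigc z hz, sigc' z hz, sigc ζ hζ, sigc' ζ hζ]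
  abel

end Steps

/-- The main quotient-level theorem. -/
theorem keyQ {R : Type*} [Ring R] {Q : Type*} [Ring Q]
    (q : R →+* Q) (hq : Function.Surjective q)
    (hpr : ∀ a b : Q, (∀ r : Q, a * r * b = 0) → a = 0 ∨ b = 0)
    (h2 : ∀ a : Q, a + a = 0 → a = 0)
    (s : R) (hσ : ∀ r : Q, q s * r = r * q s) (hσ0 : q s ≠ 0)
    (D₁ D₂ τ E : R → Q)
    (hD₁a : ∀ x y : R, D₁ (x + y) = D₁ x + D₁ y)
    (hD₁m : ∀ x y : R, D₁ (x * y) = D₁ x * q y + q x * D₁ y)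
    (hD₂a : ∀ x y : R, D₂ (x + y) = D₂ x + D₂ y)
    (hD₂m : ∀ x y : R, D₂ (x * y) = D₂ x * q y + q x * D₂ y)
    (hτa : ∀ x y : R, τ (x + y) = τ x + τ y)
    (hEa : ∀ x y : R, E (x + y) = E x + E y)
    (hτs : ∀ y : R, τ (s * y) = -(q s * τ y))
    (hEs : ∀ y : R, E (s * y) = -(q s * E y) - τ y * D₂ s)
    (hτE : ∀ w : R, ∃ x : R, τ x = q w ∧ E x = D₂ w)
    (hmain : ∀ x : R, Ctr (brk (D₁ x) (τ x) + brk (q x) (E x)))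
    (hnc : ¬ ∀ u v : Q, u * v = v * u) :
    ∀ x : R, D₁ x = 0 ∧ D₂ x = 0 := by
  have hσc : Ctr (q s) := hσ
  -- cancellation helpers
  have hcancel : ∀ z w : Q, Ctr z → z * w = 0 → z = 0 ∨ w = 0 := by
    intro z w hz h0
    refine hpr z w fun r => ?_
    rw [hz r, mul_assoc, h0, mul_zero]
  have hσcan : ∀ w : Q, q s * w = 0 → w = 0 := by
    intro w h0
    rcases hcancel _ _ hσc h0 with h' | h'
    · exact absurd h' hσ0
    · exact h'
  have hσctr : ∀ w : Q, Ctr (q s * w) → Ctr w := by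
    intro w h r
    have h1 : q s * (w * r - r * w) = 0 := by
      rw [mul_sub, ← mul_assoc, h r, ← mul_assoc, ← hσ r, mul_assoc, sub_self]
    exact sub_eq_zero.mp (hσcan _ h1)
  have h2ctr : ∀ w : Q, Ctr (w + w) → Ctr w := by
    intro w h r
    have h' := h r
    rw [add_mul, mul_add] at h'
    have h1 : (w * r - r * w) + (w * r - r * w) = 0 := by
      have e : (w * r - r * w) + (w * r - r * w) = (w * r + w * r) - (r * w + r * w) := by
        abel
      rw [e, h', sub_self]
    exact sub_eq_zero.mp (h2 _ h1)
  -- noncommutativity witnesses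
  have hex : ∃ u t : Q, brk u t ≠ 0 := by
    by_contra hcon
    push_neg at hcon
    exact hnc fun u v => sub_eq_zero.mp (hcon u v)
  obtain ⟨u₀, t₀, hut⟩ := hex
  have hnc' : ¬ Ctr u₀ := fun hC => hut (hC.brk_eq_zero t₀)
  obtain ⟨x₀, hx₀⟩ := hq u₀
  have hx₀nc : ¬ Ctr (q x₀) := by rw [hx₀]; exact hnc'
  -- τ is surjective
  have hτsurj : ∀ u : Q, ∃ x : R, τ x = u := by
    intro u
    obtain ⟨w, rfl⟩ := hq u
    obtain ⟨x, hx, -⟩ := hτE w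
    exact ⟨x, hx⟩
  -- linearized main identity
  have hΦ : ∀ x y : R, Ctr (brk (D₁ x) (τ y) + brk (D₁ y) (τ x)
      + (brk (q x) (E y) + brk (q y) (E x))) := by
    intro x y
    have h1 := ((hmain (x+y)).sub (hmain x)).sub (hmain y)
    rw [hD₁a, hτa, hEa, map_add] at h1
    exact (stepPhi (D₁ x) (D₁ y) (τ x) (τ y) (q x) (q y) (E x) (E y)) ▸ h1
  -- step (A)
  have hA : ∀ x y : R, Ctr ((q s * (brk (D₁ y) (τ x) + brk (q y) (E x))
      + q s * (brk (D₁ y) (τ x) + brk (q y) (E x)))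
      + brk (D₁ s * q y) (τ x) - brk (q x) (τ y * D₂ s)) := by
    intro x y
    have h1 := (hΦ x (s*y)).add (hσc.mul (hΦ x y))
    rw [hτs, hEs, hD₁m, map_mul] at h1
    exact (stepA (q s) hσ (D₁ x) (D₁ y) (τ x) (τ y) (q x) (q y) (E x) (E y)
      (D₁ s) (D₂ s)) ▸ h1
  -- step (D)
  have hD : ∀ x y : R, Ctr (brk (D₁ s * q y) (τ x) + brk (q x) (τ y * D₂ s)) := by
    intro x y
    have h1 := (hA x (s*y)).sub (hσc.mul (hA x y))
    rw [hτs, hD₁m, map_mul] at h1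
    have h1' := (stepD (q s) hσ (D₁ y) (τ x) (τ y) (q x) (q y) (E x)
      (D₁ s) (D₂ s)) ▸ h1
    exact h2ctr _ (hσctr _ h1')
  -- step (D2)
  have hD2 : ∀ x y : R, Ctr (brk (D₁ s * q y) (τ x) - brk (q x) (τ y * D₂ s)) := by
    intro x y
    have h1 := hD x (s*y)
    rw [hτs, map_mul] at h1
    exact hσctr _ ((stepD2 (q s) hσ (τ x) (τ y) (q x) (q y) (D₁ s) (D₂ s)) ▸ h1)
  have hF1 : ∀ x y : R, Ctr (brk (D₁ s * q y) (τ x)) := by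
    intro x y
    exact h2ctr _ ((stepF1 (brk (D₁ s * q y) (τ x)) (brk (q x) (τ y * D₂ s)))
      ▸ ((hD x y).add (hD2 x y)))
  have hF2 : ∀ x y : R, Ctr (brk (q x) (τ y * D₂ s)) := by
    intro x y
    exact h2ctr _ ((stepF2 (brk (D₁ s * q y) (τ x)) (brk (q x) (τ y * D₂ s)))
      ▸ ((hD x y).sub (hD2 x y)))
  -- step (K)
  have hK : ∀ x y : R, Ctr (brk (D₁ y) (τ x) + brk (q y) (E x)) := by
    intro x y
    have h1 := ((hA x y).add (hF2 x y)).sub (hF1 x y)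
    have h1' := (stepK (q s) (brk (D₁ y) (τ x) + brk (q y) (E x))
      (brk (D₁ s * q y) (τ x)) (brk (q x) (τ y * D₂ s))) ▸ h1
    exact h2ctr _ (hσctr _ h1')
  -- step (K')
  have hΛ : ∀ y w : R, Ctr (brk (D₁ y) (q w) + brk (q y) (D₂ w)) := by
    intro y w
    obtain ⟨x, hx1, hx2⟩ := hτE w
    have h1 := hK x y
    rw [hx1, hx2] at h1
    exact h1

  -- elements of the kernel are killed by D₁ and D₂
  have hzbr : ∀ z c : Q, Ctr z → Ctr (z * c) → ∀ t : Q, z * brk c t = 0 := by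
    intro z c hz h1 t
    have e1 : z * (c * t) = t * (z * c) := by rw [← mul_assoc, h1 t]
    have e2 : z * (t * c) = t * (z * c) := by rw [← mul_assoc, hz t, mul_assoc]
    simp only [brk, mul_sub, e1, e2, sub_self]
  have hker₁ : ∀ y : R, q y = 0 → D₁ y = 0 := by
    have hcgen : ∀ z : R, q z = 0 → Ctr (D₁ z) := by
      intro z hz
      apply L2 hpr h2
      intro u
      obtain ⟨x, hx⟩ := hτsurj u
      have h1 := hK x z
      rw [hx, hz, brk_zero_left, add_zero] at h1
      exact h1
    intro y hy
    have hc : Ctr (D₁ y) := hcgen y hy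
    have hmul : ∀ r : R, Ctr (D₁ y * q r) := by
      intro r
      have hz : q (y * r) = 0 := by rw [map_mul, hy, zero_mul]
      have h1 := hcgen (y*r) hz
      rw [hD₁m, hy, zero_mul, add_zero] at h1
      exact h1
    have hzero : D₁ y * brk u₀ t₀ = 0 := by
      obtain ⟨r, hr⟩ := hq u₀
      refine hzbr (D₁ y) u₀ hc ?_ t₀
      rw [← hr]; exact hmul r
    rcases hcancel (D₁ y) (brk u₀ t₀) hc hzero with h' | h'
    · exact h'
    · exact absurd h' hut
  have hker₂ : ∀ w : R, q w = 0 → D₂ w = 0 := by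
    have hcgen : ∀ z : R, q z = 0 → Ctr (D₂ z) := by
      intro z hz
      apply L2 hpr h2
      intro u
      obtain ⟨y, hy⟩ := hq u
      have h1 := hΛ y z
      rw [hz, brk_zero_right, zero_add, hy] at h1
      -- h1 : Ctr (brk u (D₂ z))
      rw [brk_swap] at h1
      exact Ctr.of_neg h1
    intro w hw
    have hc : Ctr (D₂ w) := hcgen w hw
    have hmul : ∀ r : R, Ctr (D₂ w * q r) := by
      intro r
      have hz : q (w * r) = 0 := by rw [map_mul, hw, zero_mul]
      have h1 := hcgen (w*r) hz
      rw [hD₂m, hw, zero_mul, add_zero] at h1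
      exact h1
    have hzero : D₂ w * brk u₀ t₀ = 0 := by
      obtain ⟨r, hr⟩ := hq u₀
      refine hzbr (D₂ w) u₀ hc ?_ t₀
      rw [← hr]; exact hmul r
    rcases hcancel (D₂ w) (brk u₀ t₀) hc hzero with h' | h'
    · exact h'
    · exact absurd h' hut
  -- the standard "a group is not the union of two proper subgroups" killer
  have hkill : ∀ f : R → Q, (∀ a b : R, f (a + b) = f a + f b) →
      (∀ a : R, f a = 0 ∨ Ctr (q a)) → ∀ a : R, f a = 0 := by
    intro f hfa hdich a
    rcases hdich a with h | h
    · exact h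
    rcases hdich x₀ with h0 | h0
    swap
    · exact absurd h0 hx₀nc
    rcases hdich (a + x₀) with h1 | h1
    · have e := hfa a x₀
      rw [h1, h0, add_zero] at e
      exact e.symm
    · exfalso
      apply hx₀nc
      intro r
      have e := h1 r
      rw [map_add, add_mul, mul_add, h r] at e
      exact add_left_cancel e
  -- the diagonal of Λ vanishes
  have hΛdiag : ∀ y : R, brk (D₁ y) (q y) + brk (q y) (D₂ y) = 0 := by
    intro y
    have hTc : Ctr (brk (D₁ y) (q y) + brk (q y) (D₂ y)) := hΛ y y
    have h1 := hΛ (y*y) y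
    rw [hD₁m, map_mul] at h1
    have h1' := (stepDiag (D₁ y) (D₂ y) (q y)) ▸ h1
    have e : (brk (D₁ y) (q y) + brk (q y) (D₂ y)) * q y
          + q y * (brk (D₁ y) (q y) + brk (q y) (D₂ y))
        = (brk (D₁ y) (q y) + brk (q y) (D₂ y)) * q y
          + (brk (D₁ y) (q y) + brk (q y) (D₂ y)) * q y := by
      rw [← hTc (q y)]
    have hTq : Ctr ((brk (D₁ y) (q y) + brk (q y) (D₂ y)) * q y) := h2ctr _ (e ▸ h1')
    by_cases hy : Ctr (q y)
    · rw [hy.brk_eq_zero' (D₁ y), hy.brk_eq_zero (D₂ y), add_zero]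
    · have hexy : ∃ t : Q, brk (q y) t ≠ 0 := by
        by_contra hcon
        push_neg at hcon
        exact hy fun r => sub_eq_zero.mp (hcon r)
      obtain ⟨t, ht⟩ := hexy
      have h0 := hzbr _ (q y) hTc hTq t
      rcases hcancel _ _ hTc h0 with h' | h'
      · exact h'
      · exact absurd h' ht
  -- hence D := D₁ - D₂ is commuting
  have hdiag' : ∀ y : R, brk (D₁ y - D₂ y) (q y) = 0 := by
    intro y
    have e : brk (D₁ y - D₂ y) (q y) = brk (D₁ y) (q y) + brk (q y) (D₂ y) := by
      simp only [brk]; noncomm_ring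
    rw [e, hΛdiag]
  have hlin : ∀ y w : R, brk (D₁ y - D₂ y) (q w) + brk (D₁ w - D₂ w) (q y) = 0 := by
    intro y w
    have h1 := hdiag' (y + w)
    rw [hD₁a, hD₂a, map_add] at h1
    have e : brk (D₁ y + D₁ w - (D₂ y + D₂ w)) (q y + q w)
        = brk (D₁ y - D₂ y) (q y) + brk (D₁ w - D₂ w) (q w)
          + (brk (D₁ y - D₂ y) (q w) + brk (D₁ w - D₂ w) (q y)) := by
      simp only [brk]; noncomm_ring
    rw [e, hdiag' y, hdiag' w, zero_add, zero_add] at h1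
    exact h1
  have hDm1 : ∀ y w : R, (D₁ y - D₂ y) * brk (q w) (q y) = 0 := by
    intro y w
    have h1 := hlin y (y*w)
    rw [hD₁m, hD₂m, map_mul] at h1
    have e : brk (D₁ y - D₂ y) (q y * q w)
          + brk (D₁ y * q w + q y * D₁ w - (D₂ y * q w + q y * D₂ w)) (q y)
        = (D₁ y - D₂ y) * brk (q w) (q y)
          + q y * (brk (D₁ y - D₂ y) (q w) + brk (D₁ w - D₂ w) (q y))
          + (brk (D₁ y - D₂ y) (q y) * q w + brk (D₁ y - D₂ y) (q y) * q w) := by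
      simp only [brk]; noncomm_ring
    rw [e, hlin y w, hdiag' y, mul_zero, add_zero, zero_mul, add_zero, add_zero] at h1
    exact h1
  have hDmdich : ∀ y : R, D₁ y - D₂ y = 0 ∨ Ctr (q y) := by
    intro y
    by_cases h0 : D₁ y - D₂ y = 0
    · left; exact h0
    right
    have hall : ∀ w : R, brk (q w) (q y) = 0 := by
      intro w
      have hmid : ∀ t : R, (D₁ y - D₂ y) * q t * brk (q w) (q y) = 0 := by
        intro t
        have h1 := hDm1 y (t*w)
        rw [map_mul] at h1
        have e : (D₁ y - D₂ y) * brk (q t * q w) (q y)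
            = (D₁ y - D₂ y) * q t * brk (q w) (q y)
              + ((D₁ y - D₂ y) * brk (q t) (q y)) * q w := by
          simp only [brk]; noncomm_ring
        rw [e, hDm1 y t, zero_mul, add_zero] at h1
        exact h1
      have hmid' : ∀ u : Q, (D₁ y - D₂ y) * u * brk (q w) (q y) = 0 := by
        intro u; obtain ⟨t, rfl⟩ := hq u; exact hmid t
      rcases hpr _ _ hmid' with h' | h'
      · exact absurd h' h0
      · exact h'
    intro r
    obtain ⟨w, rfl⟩ := hq r
    exact (sub_eq_zero.mp (hall w)).symm
  have hDm0 : ∀ y : R, D₂ y = D₁ y := by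
    intro y
    have h1 := hkill (fun y => D₁ y - D₂ y)
      (by intro a b; simp only [hD₁a, hD₂a]; abel) hDmdich y
    exact (sub_eq_zero.mp h1).symm
  -- now both derivations agree; δ := D₁ sends commutators to the center
  have hzc : ∀ y w : R, Ctr (D₁ (y*w - w*y)) := by
    intro y w
    have hD₁z : D₁ 0 = 0 := by
      have h' := hD₁a 0 0
      rw [add_zero] at h'
      exact left_eq_add.mp h'
    have hD₁n : ∀ a : R, D₁ (-a) = - D₁ a := by
      intro a
      have h' := hD₁a a (-a)
      rw [add_neg_cancel, hD₁z] at h'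
      exact (neg_eq_of_add_eq_zero_right h'.symm).symm
    have e : D₁ (y*w - w*y) = brk (D₁ y) (q w) + brk (q y) (D₁ w) := by
      rw [sub_eq_add_neg, hD₁a, hD₁n, hD₁m, hD₁m]
      simp only [brk]; noncomm_ring
    rw [e]
    have h1 := hΛ y w
    rw [hDm0 w] at h1
    exact h1

  -- (Y1)
  have hY1 : ∀ x y : R, Ctr (brk (D₁ x) (q (x*y - y*x))) := by
    intro x y
    have h1 := hzc x (x*y)
    have h2' := hzc x (y*x)
    have e1 : x*(x*y) - x*y*x = x*(x*y - y*x) := by noncomm_ring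
    have e2 : x*(y*x) - y*x*x = (x*y - y*x)*x := by noncomm_ring
    rw [e1] at h1
    rw [e2] at h2'
    have h3 := h1.sub h2'
    rw [hD₁m, hD₁m] at h3
    have hz := hzc x y
    have e3 : D₁ x * q (x*y - y*x) + q x * D₁ (x*y - y*x)
          - (D₁ (x*y - y*x) * q x + q (x*y - y*x) * D₁ x)
        = brk (D₁ x) (q (x*y - y*x))
          + (q x * D₁ (x*y - y*x) - D₁ (x*y - y*x) * q x) := by
      simp only [brk]; abel
    rw [e3] at h3
    have e4 : q x * D₁ (x*y - y*x) - D₁ (x*y - y*x) * q x = 0 := by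
      rw [hz (q x), sub_self]
    rw [e4, add_zero] at h3
    exact h3
  -- (Y1L)
  have hY1L : ∀ x w y : R, Ctr (brk (D₁ x) (q (w*y - y*w)) + brk (D₁ w) (q (x*y - y*x))) := by
    intro x w y
    have h1 := hY1 (x+w) y
    have e : (x+w)*y - y*(x+w) = (x*y - y*x) + (w*y - y*w) := by noncomm_ring
    rw [e, hD₁a, map_add] at h1
    have e2 : brk (D₁ x + D₁ w) (q (x*y - y*x) + q (w*y - y*w))
        = brk (D₁ x) (q (x*y - y*x)) + brk (D₁ w) (q (w*y - y*w))
          + (brk (D₁ x) (q (w*y - y*w)) + brk (D₁ w) (q (x*y - y*x))) := by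
      simp only [brk]; noncomm_ring
    rw [e2] at h1
    have h3 := (h1.sub (hY1 x y)).sub (hY1 w y)
    have e3 : ∀ A B C : Q, A + B + C - A - B = C := by intro A B C; abel
    rw [e3] at h3
    exact h3
  -- (H3)
  have hH3 : ∀ a b c : R, Ctr (brk (D₁ b) (q (a*c - c*a)) - brk (D₁ c) (q (a*b - b*a))) := by
    intro a b c
    have h1 := hzc a (b*c)
    have h2' := hzc a (c*b)
    have e1 : a*(b*c) - b*c*a = b*(a*c - c*a) + (a*b - b*a)*c := by noncomm_ring
    have e2 : a*(c*b) - c*b*a = c*(a*b - b*a) + (a*c - c*a)*b := by noncomm_ring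
    rw [e1] at h1
    rw [e2] at h2'
    rw [hD₁a, hD₁m, hD₁m] at h1 h2'
    have h3 := h1.sub h2'
    have hz1 := hzc a c
    have hz2 := hzc a b
    have e3 : D₁ b * q (a*c - c*a) + q b * D₁ (a*c - c*a)
          + (D₁ (a*b - b*a) * q c + q (a*b - b*a) * D₁ c)
          - (D₁ c * q (a*b - b*a) + q c * D₁ (a*b - b*a)
            + (D₁ (a*c - c*a) * q b + q (a*c - c*a) * D₁ b))
        = brk (D₁ b) (q (a*c - c*a)) - brk (D₁ c) (q (a*b - b*a))
          + ((q b * D₁ (a*c - c*a) - D₁ (a*c - c*a) * q b)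
            + (D₁ (a*b - b*a) * q c - q c * D₁ (a*b - b*a))) := by
      simp only [brk]; abel
    rw [e3] at h3
    have e4 : q b * D₁ (a*c - c*a) - D₁ (a*c - c*a) * q b = 0 := by
      rw [hz1 (q b), sub_self]
    have e5 : D₁ (a*b - b*a) * q c - q c * D₁ (a*b - b*a) = 0 := by
      rw [hz2 (q c), sub_self]
    rw [e4, e5, add_zero, add_zero] at h3
    exact h3
  -- (Y2)
  have hY2 : ∀ a b c : R, Ctr (brk (D₁ b) (q (a*c - c*a))) := by
    intro a b c
    have h1 := hY1L b c a
    have e1 : (c*a - a*c : R) = -(a*c - c*a) := by noncomm_ring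
    have e2 : (b*a - a*b : R) = -(a*b - b*a) := by noncomm_ring
    rw [e1, e2, map_neg, map_neg, brk_neg_right, brk_neg_right] at h1
    have h1' : Ctr (brk (D₁ b) (q (a*c - c*a)) + brk (D₁ c) (q (a*b - b*a))) := by
      have h2' := h1.neg
      rw [neg_add, neg_neg, neg_neg] at h2'
      exact h2'
    have h3 := h1'.add (hH3 a b c)
    have e3 : ∀ A B : Q, (A + B) + (A - B) = A + A := by intro A B; abel
    rw [e3] at h3
    exact h2ctr _ h3
  -- per-commutator dichotomy
  have hM : ∀ a c : R, D₁ (a*c - c*a) = 0 ∨ Ctr (q (a*c - c*a)) := by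
    intro a c
    by_cases hz0 : D₁ (a*c - c*a) = 0
    · left; exact hz0
    right
    have hzC : Ctr (D₁ (a*c - c*a)) := hzc a c
    have hkey : ∀ t : R,
        D₁ (a*c - c*a) * brk (brk (q t) (q (a*c - c*a))) (q (a*c - c*a)) = 0 := by
      intro t
      have h1 := hY2 a (t * (a*c - c*a)) c
      rw [hD₁m, stepM (D₁ t) (q t) (D₁ (a*c - c*a)) (q (a*c - c*a)) hzC] at h1
      have h0 := h1.brk_eq_zero (q (a*c - c*a))
      rw [stepM2 (brk (D₁ t) (q (a*c - c*a))) (brk (q t) (q (a*c - c*a)))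
        (q (a*c - c*a)) (D₁ (a*c - c*a)) hzC (hY2 a t c)] at h0
      exact h0
    apply L1 hpr h2
    intro w
    obtain ⟨t, rfl⟩ := hq w
    have h' := (hcancel _ _ hzC (hkey t)).resolve_left hz0
    rw [brk_brk_swap]
    exact h'
  -- for each a : either all commutators with a are killed, or q a is central
  have hMa : ∀ a : R, (∀ c : R, D₁ (a*c - c*a) = 0) ∨ Ctr (q a) := by
    intro a
    by_cases hB : ∀ c : R, Ctr (q (a*c - c*a))
    · right
      apply L2 hpr h2
      intro w
      obtain ⟨c, rfl⟩ := hq w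
      have h1 := hB c
      have e : q (a*c - c*a) = brk (q a) (q c) := by
        rw [map_sub, map_mul, map_mul]; rfl
      rw [e] at h1
      exact h1
    · left
      push_neg at hB
      obtain ⟨c₁, hc₁⟩ := hB
      have hc₁0 : D₁ (a*c₁ - c₁*a) = 0 := (hM a c₁).resolve_right hc₁
      intro c
      rcases hM a c with h | h
      · exact h
      rcases hM a (c + c₁) with h' | h'
      · have e : a*(c + c₁) - (c + c₁)*a = (a*c - c*a) + (a*c₁ - c₁*a) := by noncomm_ring
        rw [e, hD₁a, hc₁0, add_zero] at h'
        exact h'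
      · exfalso
        apply hc₁
        have e : a*(c + c₁) - (c + c₁)*a = (a*c - c*a) + (a*c₁ - c₁*a) := by noncomm_ring
        rw [e, map_add] at h'
        have h'' := h'.sub h
        rw [add_sub_cancel_left] at h''
        exact h''
  have hMall : ∀ a c : R, D₁ (a*c - c*a) = 0 := by
    intro a c
    refine hkill (fun a => D₁ (a*c - c*a)) ?_ (fun a => (hMa a).imp (fun h => h c) id) a
    intro u v
    show D₁ ((u+v)*c - c*(u+v)) = D₁ (u*c - c*u) + D₁ (v*c - c*v)
    have e : (u+v)*c - c*(u+v) = (u*c - c*u) + (v*c - c*v) := by noncomm_ring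
    rw [e, hD₁a]
  -- final step
  have hδγ : ∀ a c : R, D₁ a * brk (q a) (q c) = 0 := by
    intro a c
    have h1 := hMall a (a*c)
    have e : a*(a*c) - a*c*a = a*(a*c - c*a) := by noncomm_ring
    rw [e, hD₁m, hMall a c, mul_zero, add_zero] at h1
    have e2 : q (a*c - c*a) = brk (q a) (q c) := by
      rw [map_sub, map_mul, map_mul]; rfl
    rw [e2] at h1
    exact h1
  have hdichδ : ∀ a : R, D₁ a = 0 ∨ Ctr (q a) := by
    intro a
    by_cases h0 : D₁ a = 0
    · left; exact h0
    right
    have hall : ∀ c : R, brk (q a) (q c) = 0 := by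
      intro c
      have hmid : ∀ t : R, D₁ a * q t * brk (q a) (q c) = 0 := by
        intro t
        have h1 := hδγ a (t*c)
        have e : brk (q a) (q (t*c))
            = q t * brk (q a) (q c) + brk (q a) (q t) * q c := by
          rw [map_mul]; simp only [brk]; noncomm_ring
        rw [e, mul_add] at h1
        have e2 : D₁ a * (brk (q a) (q t) * q c) = (D₁ a * brk (q a) (q t)) * q c := by
          rw [mul_assoc]
        rw [e2, hδγ a t, zero_mul, add_zero, ← mul_assoc] at h1
        exact h1
      have hmid' : ∀ u : Q, D₁ a * u * brk (q a) (q c) = 0 := by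
        intro u; obtain ⟨t, rfl⟩ := hq u; exact hmid t
      rcases hpr _ _ hmid' with h' | h'
      · exact absurd h' h0
      · exact h'
    intro r
    obtain ⟨c, rfl⟩ := hq r
    exact sub_eq_zero.mp (hall c)
  have hδ0 : ∀ a : R, D₁ a = 0 := hkill D₁ hD₁a hdichδ
  intro x
  refine ⟨hδ0 x, ?_⟩
  rw [hDm0 x]
  exact hδ0 x


end St1


/-- Theorem 1.
Let `R` be a ring with involution `*`, `P` a prime ideal of `R` with `char (R/P) ≠ 2`
(equivalently, since `P` is proper, `(2 : R) ∉ P`), and suppose `*` is of `P`-second kind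
(`Z(R) ∩ S(R) ⊄ P`).  If `d₁, d₂` are derivations of `R` such that the image of
`[d₁(x), x*] + [x, d₂(x*)]` lies in `Z(R/P)` for all `x ∈ R`, then `R/P` is an integral
domain, or both `d₁(R) ⊆ P` and `d₂(R) ⊆ P`. -/
theorem statement1 {R : Type*} [Ring R] [StarRing R] (P : TwoSidedIdeal R)
    (hP_proper : (1 : R) ∉ P)
    (hP_prime : ∀ a b : R, (∀ r : R, a * r * b ∈ P) → a ∈ P ∨ b ∈ P)
    (hchar : (2 : R) ∉ P)
    (hsecond : ∃ s : R, (∀ r : R, s * r = r * s) ∧ star s = -s ∧ s ∉ P)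
    (d₁ d₂ : R → R)
    (hd₁_add : ∀ x y : R, d₁ (x + y) = d₁ x + d₁ y)
    (hd₁_mul : ∀ x y : R, d₁ (x * y) = d₁ x * y + x * d₁ y)
    (hd₂_add : ∀ x y : R, d₂ (x + y) = d₂ x + d₂ y)
    (hd₂_mul : ∀ x y : R, d₂ (x * y) = d₂ x * y + x * d₂ y)
    -- `[d₁(x), x*] + [x, d₂(x*)]` is central modulo `P` for all `x`
    (h : ∀ x r : R,
      ((d₁ x * star x - star x * d₁ x) + (x * d₂ (star x) - d₂ (star x) * x)) * r
        - r * ((d₁ x * star x - star x * d₁ x) + (x * d₂ (star x) - d₂ (star x) * x)) ∈ P) :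
    ((1 : R) ∉ P ∧ (∀ x y : R, x * y - y * x ∈ P) ∧
        (∀ x y : R, x * y ∈ P → x ∈ P ∨ y ∈ P))
      ∨ ((∀ x : R, d₁ x ∈ P) ∧ (∀ x : R, d₂ x ∈ P)) := by

  classical
  by_cases hcomm : ∀ x y : R, x * y - y * x ∈ P
  · left
    refine ⟨hP_proper, hcomm, ?_⟩
    intro x y hxy
    apply hP_prime
    intro r
    have h1 : x * (r * y - y * r) ∈ P := P.mul_mem_left _ _ (hcomm r y)
    have h2 : x * y * r ∈ P := P.mul_mem_right _ _ hxy
    have e : x * r * y = x * (r * y - y * r) + x * y * r := by noncomm_ring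
    rw [e]
    exact P.add_mem h1 h2
  · right
    obtain ⟨s, hsc, hss, hsP⟩ := hsecond
    set q : R →+* P.ringCon.Quotient := RingCon.mk' P.ringCon with hqdef
    have hqsurj : Function.Surjective q := fun a => Quotient.inductionOn' a (fun x => ⟨x, rfl⟩)
    have hmem : ∀ x : R, x ∈ P ↔ q x = 0 := by
      intro x
      rw [TwoSidedIdeal.mem_iff]
      constructor
      · intro h'
        have : q x = q 0 := (P.ringCon.eq).mpr h'
        simpa using this
      · intro h'
        have : q x = q 0 := by simpa using h'
        exact (P.ringCon.eq).mp this
    -- primeness in the quotient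
    have hprQ : ∀ a b : P.ringCon.Quotient, (∀ r, a * r * b = 0) → a = 0 ∨ b = 0 := by
      intro a b hab
      obtain ⟨x, rfl⟩ := hqsurj a
      obtain ⟨y, rfl⟩ := hqsurj b
      have h1 : ∀ r : R, x * r * y ∈ P := by
        intro r
        rw [hmem, map_mul, map_mul]
        exact hab (q r)
      rcases hP_prime x y h1 with h' | h'
      · left; exact (hmem x).mp h'
      · right; exact (hmem y).mp h'
    -- 2-torsionfreeness
    have h2Q : ∀ a : P.ringCon.Quotient, a + a = 0 → a = 0 := by
      intro a ha
      have h20 : q 2 ≠ 0 := fun hc => hchar ((hmem (2:R)).mpr hc)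
      have hmid : ∀ r : P.ringCon.Quotient, q 2 * r * a = 0 := by
        intro r
        have e : q 2 * r * a = r * (a + a) := by
          rw [map_ofNat]
          noncomm_ring
        rw [e, ha, mul_zero]
      rcases hprQ _ _ hmid with h' | h'
      · exact absurd h' h20
      · exact h'
    -- centrality of q s
    have hσQ : ∀ u, q s * u = u * q s := by
      intro u
      obtain ⟨r, rfl⟩ := hqsurj u
      rw [← map_mul, ← map_mul, hsc r]
    have hσ0 : q s ≠ 0 := fun hc => hsP ((hmem s).mpr hc)
    -- derivation negation in R
    have hd₂zero : d₂ (0 : R) = 0 := by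
      have h' := hd₂_add 0 0
      rw [add_zero] at h'
      exact left_eq_add.mp h'
    have hd₂neg : ∀ a : R, d₂ (-a) = - d₂ a := by
      intro a
      have h' := hd₂_add a (-a)
      rw [add_neg_cancel, hd₂zero] at h'
      exact (neg_eq_of_add_eq_zero_right h'.symm).symm
    -- hypotheses for keyQ
    have hτs : ∀ y : R, q (star (s*y)) = -(q s * q (star y)) := by
      intro y
      rw [star_mul, hss]
      have e : star y * -s = -(star y * s) := by noncomm_ring
      rw [e, map_neg, map_mul, ← hσQ (q (star y))]
    have hEs : ∀ y : R, q (d₂ (star (s*y))) = -(q s * q (d₂ (star y))) - q (star y) * q (d₂ s) := by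
      intro y
      rw [star_mul, hss]
      have e : star y * -s = -(star y * s) := by noncomm_ring
      rw [e, hd₂neg, hd₂_mul, map_neg, map_add, map_mul, map_mul, ← hσQ (q (d₂ (star y)))]
      abel
    have hmainQ : ∀ x : R, St1.Ctr (St1.brk (q (d₁ x)) (q (star x)) + St1.brk (q x) (q (d₂ (star x)))) := by
      intro x u
      obtain ⟨r, rfl⟩ := hqsurj u
      have h1 := (hmem _).mp (h x r)
      rw [map_sub, map_mul, map_mul, map_add, map_sub, map_sub, map_mul, map_mul,
        map_mul, map_mul] at h1
      have h2 := sub_eq_zero.mp h1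
      simp only [St1.brk]
      exact h2
    have hkey := St1.keyQ q hqsurj hprQ h2Q s hσQ hσ0
      (fun x => q (d₁ x)) (fun x => q (d₂ x)) (fun x => q (star x)) (fun x => q (d₂ (star x)))
      (fun x y => show q (d₁ (x+y)) = q (d₁ x) + q (d₁ y) by rw [hd₁_add, map_add])
      (fun x y => show q (d₁ (x*y)) = q (d₁ x) * q y + q x * q (d₁ y) by
        rw [hd₁_mul, map_add, map_mul, map_mul])
      (fun x y => show q (d₂ (x+y)) = q (d₂ x) + q (d₂ y) by rw [hd₂_add, map_add])
      (fun x y => show q (d₂ (x*y)) = q (d₂ x) * q y + q x * q (d₂ y) by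
        rw [hd₂_mul, map_add, map_mul, map_mul])
      (fun x y => show q (star (x+y)) = q (star x) + q (star y) by rw [star_add, map_add])
      (fun x y => show q (d₂ (star (x+y))) = q (d₂ (star x)) + q (d₂ (star y)) by
        rw [star_add, hd₂_add, map_add])
      hτs hEs
      (fun w => ⟨star w,
        show q (star (star w)) = q w by rw [star_star],
        show q (d₂ (star (star w))) = q (d₂ w) by rw [star_star]⟩)
      hmainQ
      (by
        intro hall
        apply hcomm
        intro x y
        rw [hmem, map_sub, map_mul, map_mul, hall (q x) (q y), sub_self])
    constructor
    · intro x
      exact (hmem _).mpr (hkey x).1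
    · intro x
      exact (hmem _).mpr (hkey x).2
end

section
/- Let R be an associative ring with involution *, let P be a prime ideal of R such that R/P has characteristic different from 2, and suppose * is of P-second kind (Z(R) ∩ S(R) is not contained in P). If d is a derivation of R such that the image of d([x, x*]) lies in Z(R/P) for all x ∈ R, then d(R) ⊆ P or R/P is an integral domain. -/
namespace S2x
variable {Q : Type*} [Ring Q]

def Ctr (w : Q) : Prop := ∀ t : Q, w * t - t * w = 0

lemma Ctr.comm {w : Q} (h : Ctr w) (t : Q) : w * t = t * w := sub_eq_zero.mp (h t)


lemma ctr_add {a b : Q} (ha : Ctr a) (hb : Ctr b) : Ctr (a + b) := by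
  intro t
  have cert : (a+b)*t - t*(a+b) = (a*t - t*a) + (b*t - t*b) := by noncomm_ring
  rw [cert, ha t, hb t, add_zero]

lemma ctr_sub {a b : Q} (ha : Ctr a) (hb : Ctr b) : Ctr (a - b) := by
  intro t
  have cert : (a-b)*t - t*(a-b) = (a*t - t*a) - (b*t - t*b) := by noncomm_ring
  rw [cert, ha t, hb t, sub_zero]

lemma ctr_mul {a b : Q} (ha : Ctr a) (hb : Ctr b) : Ctr (a * b) := by
  intro t
  have cert : (a*b)*t - t*(a*b) = a*(b*t - t*b) + (a*t - t*a)*b := by noncomm_ring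
  rw [cert, ha t, hb t, mul_zero, zero_mul, add_zero]

section prime
variable (hQ : ∀ a b : Q, (∀ r : Q, a * r * b = 0) → a = 0 ∨ b = 0)

include hQ

lemma zann {z w : Q} (hz : Ctr z) (h : z * w = 0) : z = 0 ∨ w = 0 := by
  refine hQ z w fun r => ?_
  have e : z * r * w = r * (z * w) := by rw [hz.comm r]; noncomm_ring
  rw [e, h, mul_zero]

lemma creg {z : Q} (hz : Ctr z) (h0 : z ≠ 0) {w : Q} (h : z * w = 0) : w = 0 :=
  (zann hQ hz h).resolve_left h0

lemma ctr_two : Ctr (2 : Q) := by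
  intro t
  have h : (2:Q)*t = t*2 := by noncomm_ring
  rw [h, sub_self]

lemma two_cancel (h2 : (2:Q) ≠ 0) {w : Q} (h : w + w = 0) : w = 0 := by
  refine creg hQ (ctr_two hQ) h2 (w := w) ?_
  rw [two_mul]; exact h

lemma lemAyB (h2 : (2:Q) ≠ 0) {A B : Q}
    (hab : ∀ y : Q, A*y*B + B*y*A = 0) : A = 0 ∨ B = 0 := by
  have key : ∀ y z : Q, B*y*(B*z*A) = 0 := by
    intro y z
    have h1 := hab (y*B*z)
    have h2' := hab y
    have h3 := hab z
    have cert : B*y*(B*z*A) + B*y*(B*z*A)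
        = (A*(y*B*z)*B + B*(y*B*z)*A) - (A*y*B + B*y*A)*(z*B) + B*y*(A*z*B + B*z*A) := by
      noncomm_ring
    rw [h1, h2', h3] at cert
    simp only [zero_mul, mul_zero, zero_add, add_zero, sub_zero, zero_sub, neg_zero] at cert
    exact two_cancel hQ h2 cert
  by_cases hB : B = 0
  · exact Or.inr hB
  · have h4 : ∀ z, B*z*A = 0 := fun z => (hQ B (B*z*A) (fun r => key r z)).resolve_left hB
    exact (hQ B A h4).symm

/-- The per-`x` main lemma. -/
lemma mainlem (h2 : (2:Q) ≠ 0) (x δ t0 : Q) (Z : Q → Q)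
    (hC : ∀ y, Ctr (Z y))
    (hprod : ∀ y, Z (y*x) = Z y * x + (x*y - y*x)*δ)
    (hprod2 : ∀ y, Z (x*y) = δ*(x*y - y*x) + x * Z y)
    (ht0 : x*t0 - t0*x ≠ 0) :
    ∀ y, Z y = 0 := by
  -- annihilation helpers
  have annih : ∀ K : Q, (∀ y : Q, (x*y - y*x)*K = 0) → K = 0 := by
    intro K hK
    have h5 : ∀ y t : Q, (x*y - y*x)*t*K = 0 := by
      intro y t
      have c1 := hK (y*t); have c2 := hK t
      have cert : (x*y - y*x)*t*K = (x*(y*t) - (y*t)*x)*K - y*((x*t - t*x)*K) := by noncomm_ring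
      rw [cert, c1, c2]; simp
    exact (hQ (x*t0 - t0*x) K (fun r => h5 t0 r)).resolve_left ht0
  have annihC : ∀ z : Q, Ctr z → (∀ t : Q, z*(x*t - t*x) = 0) → z = 0 := by
    intro z cz hz
    refine (hQ z (x*t0 - t0*x) (fun r => ?_)).resolve_right ht0
    have e : z*r*(x*t0 - t0*x) = r*(z*(x*t0 - t0*x)) := by rw [cz.comm r]; noncomm_ring
    rw [e, hz t0, mul_zero]
  -- basic centrality families
  have R1c : ∀ y : Q, Ctr (Z y * x + (x*y - y*x)*δ) := by
    intro y
    have h1 := hC (y*x)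
    rw [hprod y] at h1
    exact h1
  have R2c : ∀ y : Q, Ctr (δ*(x*y - y*x) + x * Z y) := by
    intro y
    have h1 := hC (x*y)
    rw [hprod2 y] at h1
    exact h1
  have ec : ∀ y : Q, Ctr ((x*y - y*x)*δ - δ*(x*y - y*x)) := by
    intro y t
    have c1 := (R1c y) t
    have c2 := (R2c y) t
    have c4 := (hC y) x
    have cert : ((x*y - y*x)*δ - δ*(x*y - y*x))*t - t*((x*y - y*x)*δ - δ*(x*y - y*x))
        = ((Z y * x + (x*y - y*x)*δ)*t - t*(Z y * x + (x*y - y*x)*δ))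
          - ((δ*(x*y - y*x) + x * Z y)*t - t*(δ*(x*y - y*x) + x * Z y))
          - ((Z y*x - x*Z y)*t - t*(Z y*x - x*Z y)) := by noncomm_ring
    rw [cert, c1, c2, c4]
    simp
  have Finner : ∀ y t : Q,
      (x*y - y*x)*δ*t - t*((x*y - y*x)*δ) - Z y*(t*x - x*t) = 0 := by
    intro y t
    have c1 := (R1c y) t
    have c2 := (hC y) t
    have cert : (x*y - y*x)*δ*t - t*((x*y - y*x)*δ) - Z y*(t*x - x*t)
        = ((Z y * x + (x*y - y*x)*δ)*t - t*(Z y * x + (x*y - y*x)*δ))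
          - (Z y*t - t*Z y)*x := by noncomm_ring
    rw [cert, c1, c2]; simp

  -- eq2 : [u_y δ, x] = 0
  have eq2 : ∀ y : Q, (x*y - y*x)*δ*x - x*((x*y - y*x)*δ) = 0 := by
    intro y
    have h1 := Finner y x
    have cert : (x*y - y*x)*δ*x - x*((x*y - y*x)*δ)
        = ((x*y - y*x)*δ*x - x*((x*y - y*x)*δ) - Z y*(x*x - x*x)) := by noncomm_ring
    rw [cert, h1]
  have eq4 : ∀ y z : Q,
      (x*y - y*x)*z*δ*x - x*((x*y - y*x)*z*δ) - (x*y - y*x)*((x*z - z*x)*δ) = 0 := by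
    intro y z
    have c1 := eq2 (y*z)
    have c2 := eq2 z
    have cert : (x*y - y*x)*z*δ*x - x*((x*y - y*x)*z*δ) - (x*y - y*x)*((x*z - z*x)*δ)
        = ((x*(y*z) - (y*z)*x)*δ*x - x*((x*(y*z) - (y*z)*x)*δ))
          - y*((x*z - z*x)*δ*x - x*((x*z - z*x)*δ)) := by noncomm_ring
    rw [cert, c1, c2]; simp
  have eq12 : ∀ y : Q,
      (x*y - y*x)*((x*δ - δ*x)*δ + δ*(x*δ - δ*x)) = 0 := by
    intro y
    have c1 := eq4 y δ
    have c2 := eq2 y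
    have cert : (x*y - y*x)*((x*δ - δ*x)*δ + δ*(x*δ - δ*x))
        = -((x*y - y*x)*δ*δ*x - x*((x*y - y*x)*δ*δ) - (x*y - y*x)*((x*δ - δ*x)*δ))
          + ((x*y - y*x)*δ*x - x*((x*y - y*x)*δ))*δ := by noncomm_ring
    rw [cert, c1, c2]; simp
  have eqK : (x*δ - δ*x)*δ + δ*(x*δ - δ*x) = 0 := annih _ eq12
  -- ζ' = Z δ = 0
  have zeta'0 : Z δ = 0 := by
    have czx : Ctr (Z δ * x) := by
      intro t
      have c1 := (R1c δ) t
      have c1' := (R2c δ) t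
      have c2 := (hC δ) x
      have c3 := eqK
      apply two_cancel hQ h2
      have cert : (Z δ * x * t - t*(Z δ * x)) + (Z δ * x * t - t*(Z δ * x))
          = ((Z δ * x + (x*δ - δ*x)*δ)*t - t*(Z δ * x + (x*δ - δ*x)*δ))
            + ((δ*(x*δ - δ*x) + x * Z δ)*t - t*(δ*(x*δ - δ*x) + x * Z δ))
            - (((x*δ - δ*x)*δ + δ*(x*δ - δ*x))*t - t*((x*δ - δ*x)*δ + δ*(x*δ - δ*x)))
            + ((Z δ*x - x*Z δ)*t - t*(Z δ*x - x*Z δ)) := by noncomm_ring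
      rw [cert, c1, c1', c2, c3]
      simp
    refine annihC _ (hC δ) (fun t => ?_)
    have c1 := czx t
    have c2 := (hC δ) t
    have cert : Z δ * (x*t - t*x)
        = (Z δ * x * t - t*(Z δ * x)) - (Z δ*t - t*Z δ)*x := by noncomm_ring
    rw [cert, c1, c2]; simp
  have cHd : Ctr ((x*δ - δ*x)*δ) := by
    have h1 := R1c δ
    rw [zeta'0] at h1
    simp only [zero_mul, zero_add] at h1
    exact h1
  have zd0 : (x*δ - δ*x)*δ*δ = 0 := by
    apply two_cancel hQ h2
    have c1 := cHd δ
    have c2 := eqK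
    have cert : (x*δ - δ*x)*δ*δ + (x*δ - δ*x)*δ*δ
        = ((x*δ - δ*x)*δ*δ - δ*((x*δ - δ*x)*δ))
          + ((x*δ - δ*x)*δ + δ*(x*δ - δ*x))*δ := by noncomm_ring
    rw [cert, c1, c2]; simp
  have c17 : ∀ y : Q,
      Ctr ((x*y - y*x)*(x*δ - δ*x) + ((x*y - y*x)*δ - δ*(x*y - y*x))*x) := by
    intro y
    have h1 := ec (y*x)
    have e : (x*(y*x) - (y*x)*x)*δ - δ*(x*(y*x) - (y*x)*x)
        = (x*y - y*x)*(x*δ - δ*x) + ((x*y - y*x)*δ - δ*(x*y - y*x))*x := by noncomm_ring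
    rw [e] at h1
    exact h1
  have zh0 : (x*δ - δ*x)*δ*(x*δ - δ*x) = 0 := by
    apply two_cancel hQ h2
    have c1 := (c17 δ) δ
    have c2 := eqK
    have c3 := zd0
    have c4 := cHd x
    have c5 := cHd (x*δ - δ*x)
    have cert : (x*δ - δ*x)*δ*(x*δ - δ*x) + (x*δ - δ*x)*δ*(x*δ - δ*x)
        = (((x*δ - δ*x)*(x*δ - δ*x) + ((x*δ - δ*x)*δ - δ*(x*δ - δ*x))*x)*δ
            - δ*((x*δ - δ*x)*(x*δ - δ*x) + ((x*δ - δ*x)*δ - δ*(x*δ - δ*x))*x))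
          + ((x*δ - δ*x)*δ*(x*δ - δ*x) - (x*δ - δ*x)*((x*δ - δ*x)*δ))
          - (x*((x*δ - δ*x)*δ*δ) + x*((x*δ - δ*x)*δ*δ))
          - (((x*δ - δ*x)*δ*x - x*((x*δ - δ*x)*δ))*δ + ((x*δ - δ*x)*δ*x - x*((x*δ - δ*x)*δ))*δ)
          + ((x*δ - δ*x)*δ + δ*(x*δ - δ*x))*(x*δ)
          + ((x*δ - δ*x)*δ + δ*(x*δ - δ*x))*(x*δ - δ*x)
          + (((x*δ - δ*x)*δ + δ*(x*δ - δ*x))*(δ*x) + ((x*δ - δ*x)*δ + δ*(x*δ - δ*x))*(δ*x))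
          - ((x*δ - δ*x)*δ*δ*x + (x*δ - δ*x)*δ*δ*x)
          - δ*(((x*δ - δ*x)*δ + δ*(x*δ - δ*x))*x) := by noncomm_ring
    rw [cert, c1, c2, c3, c4, c5]
    simp
  -- now the case analysis
  by_cases hd0 : δ = 0
  · -- δ = 0 : direct
    intro y
    have cZyx : Ctr (Z y * x) := by
      have h1 := R1c y
      rw [hd0] at h1
      simp only [mul_zero, add_zero] at h1
      exact h1
    refine annihC _ (hC y) (fun t => ?_)
    have c1 := cZyx t
    have c2 := (hC y) t
    have cert : Z y * (x*t - t*x)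
        = (Z y * x * t - t*(Z y * x)) - (Z y*t - t*Z y)*x := by noncomm_ring
    rw [cert, c1, c2]; simp
  · by_cases hH0 : x*δ - δ*x = 0
    · -- Case A2 : δ ≠ 0, H = 0 ⇒ contradiction
      exfalso
      have hH0' : δ*x - x*δ = 0 := by
        have e : δ*x - x*δ = -(x*δ - δ*x) := by noncomm_ring
        rw [e, hH0, neg_zero]
      have eδ0 : ∀ y : Q, ((x*y - y*x)*δ - δ*(x*y - y*x))*δ = 0 := by
        intro y
        have c1 := Finner y δ
        have cert : ((x*y - y*x)*δ - δ*(x*y - y*x))*δ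
            = ((x*y - y*x)*δ*δ - δ*((x*y - y*x)*δ) - Z y*(δ*x - x*δ)) + Z y*(δ*x - x*δ) := by
          noncomm_ring
        rw [cert, c1, hH0']; simp
      have eE0 : ∀ y : Q, (x*y - y*x)*δ - δ*(x*y - y*x) = 0 := fun y =>
        (zann hQ (ec y) (eδ0 y)).resolve_right hd0
      have Z10 : ∀ t y : Q,
          (t*δ - δ*t)*(x*y - y*x) + (x*t - t*x)*(y*δ - δ*y) = 0 := by
        intro t y
        have c1 := eE0 (t*y)
        have c2 := eE0 y
        have c3 := eE0 t
        have cert : (t*δ - δ*t)*(x*y - y*x) + (x*t - t*x)*(y*δ - δ*y)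
            = ((x*(t*y) - (t*y)*x)*δ - δ*(x*(t*y) - (t*y)*x))
              - t*((x*y - y*x)*δ - δ*(x*y - y*x))
              - ((x*t - t*x)*δ - δ*(x*t - t*x))*y := by noncomm_ring
        rw [cert, c1, c2, c3]; simp
      have Z11 : ∀ t y : Q,
          (t*δ - δ*t)*y*(x*t - t*x) + (x*t - t*x)*y*(t*δ - δ*t) = 0 := by
        intro t y
        have c1 := Z10 t (y*t)
        have c2 := Z10 t y
        have cert : (t*δ - δ*t)*y*(x*t - t*x) + (x*t - t*x)*y*(t*δ - δ*t)
            = ((t*δ - δ*t)*(x*(y*t) - (y*t)*x) + (x*t - t*x)*((y*t)*δ - δ*(y*t)))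
              - ((t*δ - δ*t)*(x*y - y*x) + (x*t - t*x)*(y*δ - δ*y))*t := by noncomm_ring
        rw [cert, c1, c2]; simp
      have fork : ∀ t : Q, t*δ - δ*t = 0 ∨ x*t - t*x = 0 := fun t =>
        lemAyB hQ h2 (fun y => Z11 t y)
      have cdelta : Ctr δ := by
        by_contra hcd
        have hex : ∃ t1 : Q, ¬ (δ*t1 - t1*δ = 0) := by
          simpa [Ctr, not_forall] using hcd
        obtain ⟨t1, ht1⟩ := hex
        have h1 : x*t1 - t1*x = 0 := by
          refine (fork t1).resolve_left (fun h => ht1 ?_)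
          have e : δ*t1 - t1*δ = -(t1*δ - δ*t1) := by noncomm_ring
          rw [e, h, neg_zero]
        have h3 : t0*δ - δ*t0 = 0 := (fork t0).resolve_right ht0
        rcases fork (t0 + t1) with hA | hB
        · apply ht1
          have cert : δ*t1 - t1*δ = -(((t0+t1)*δ - δ*(t0+t1)) - (t0*δ - δ*t0)) := by noncomm_ring
          rw [cert, hA, h3]; simp
        · apply ht0
          have cert : x*t0 - t0*x = (x*(t0+t1) - (t0+t1)*x) - (x*t1 - t1*x) := by noncomm_ring
          rw [cert, hB, h1]; simp
      have Zb : ∀ y : Q, (x*y - y*x)*x - x*(x*y - y*x) = 0 := by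
        intro y
        refine creg hQ cdelta hd0 (w := (x*y - y*x)*x - x*(x*y - y*x)) ?_
        have c1 := (R2c y) x
        have c2 := (hC y) x
        have cert : δ*((x*y - y*x)*x - x*(x*y - y*x))
            = ((δ*(x*y - y*x) + x * Z y)*x - x*(δ*(x*y - y*x) + x * Z y))
              - x*(Z y*x - x*Z y) - (δ*x - x*δ)*(x*y - y*x) := by noncomm_ring
        rw [cert, c1, c2, hH0']; simp
      have Zc : ∀ y t : Q,
          δ*((x*y - y*x)*t - t*(x*y - y*x)) + Z y*(x*t - t*x) = 0 := by
        intro y t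
        have c1 := (R2c y) t
        have c2 := cdelta t
        have c3 := (hC y) x
        have c4 := (hC y) (t*x)
        have cert : δ*((x*y - y*x)*t - t*(x*y - y*x)) + Z y*(x*t - t*x)
            = ((δ*(x*y - y*x) + x * Z y)*t - t*(δ*(x*y - y*x) + x * Z y))
              - (δ*t - t*δ)*(x*y - y*x) + (Z y*x - x*Z y)*t - (Z y*(t*x) - (t*x)*Z y) := by
          noncomm_ring
        rw [cert, c1, c2, c3, c4]; simp
      have Zd : ∀ t y : Q,
          (x*t - t*x)*(x*y - y*x) + (x*y - y*x)*(x*t - t*x) = 0 := by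
        intro t y
        refine creg hQ cdelta hd0
          (w := (x*t - t*x)*(x*y - y*x) + (x*y - y*x)*(x*t - t*x)) ?_
        have A := Zc (x*y) t
        rw [hprod2 y] at A
        have c2 := Zc y t
        have cd1 := cdelta x
        have cert : δ*((x*t - t*x)*(x*y - y*x) + (x*y - y*x)*(x*t - t*x))
            = (δ*((x*(x*y) - (x*y)*x)*t - t*(x*(x*y) - (x*y)*x)) + (δ*(x*y - y*x) + x * Z y)*(x*t - t*x))
              - x*(δ*((x*y - y*x)*t - t*(x*y - y*x)) + Z y*(x*t - t*x))
              - (δ*x - x*δ)*((x*y - y*x)*t) + (δ*x - x*δ)*(t*(x*y - y*x)) := by noncomm_ring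
        rw [cert, A, c2, cd1]; simp
      have u2 : ∀ y : Q, (x*y - y*x)*(x*y - y*x) = 0 := fun y =>
        two_cancel hQ h2 (Zd y y)
      have C2s : ∀ y t : Q,
          δ*((x*y - y*x)*t*(x*y - y*x)) + Z y*((x*t - t*x)*(x*y - y*x)) = 0 := by
        intro y t
        have c1 := Zc y t
        have c2 := u2 y
        have cert : δ*((x*y - y*x)*t*(x*y - y*x)) + Z y*((x*t - t*x)*(x*y - y*x))
            = (δ*((x*y - y*x)*t - t*(x*y - y*x)) + Z y*(x*t - t*x))*(x*y - y*x)
              + δ*(t*((x*y - y*x)*(x*y - y*x))) := by noncomm_ring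
        rw [cert, c1, c2]; simp
      have C5 : ∀ s t y : Q,
          Z y*((x*s - s*x)*((x*t - t*x)*(x*y - y*x))) = 0 := by
        intro s t y
        apply two_cancel hQ h2
        have e1 := C2s y ((x*s - s*x)*t)
        have e2 := C2s y t
        have rZb := Zb s
        have rZd := Zd s y
        have rcd := cdelta (x*s - s*x)
        have rcZ := (hC y) (x*s - s*x)
        have cert : Z y*((x*s - s*x)*((x*t - t*x)*(x*y - y*x)))
              + Z y*((x*s - s*x)*((x*t - t*x)*(x*y - y*x)))
            = (δ*((x*y - y*x)*((x*s - s*x)*t)*(x*y - y*x))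
                + Z y*((x*((x*s - s*x)*t) - ((x*s - s*x)*t)*x)*(x*y - y*x)))
              + (x*s - s*x)*(δ*((x*y - y*x)*t*(x*y - y*x)) + Z y*((x*t - t*x)*(x*y - y*x)))
              + Z y*(((x*s - s*x)*x - x*(x*s - s*x))*(t*(x*y - y*x)))
              - δ*(((x*s - s*x)*(x*y - y*x) + (x*y - y*x)*(x*s - s*x))*(t*(x*y - y*x)))
              + (δ*(x*s - s*x) - (x*s - s*x)*δ)*((x*y - y*x)*(t*(x*y - y*x)))
              + (Z y*(x*s - s*x) - (x*s - s*x)*Z y)*((x*t - t*x)*(x*y - y*x)) := by noncomm_ring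
        rw [cert, e1, e2, rZb, rZd, rcd, rcZ]; simp
      have C6 : ∀ t y : Q, Z y*((x*t - t*x)*(x*y - y*x)) = 0 := by
        intro t y
        apply annih
        intro s
        have c1 := C5 s t y
        have c2 := (hC y) (x*s - s*x)
        have cert : (x*s - s*x)*(Z y*((x*t - t*x)*(x*y - y*x)))
            = Z y*((x*s - s*x)*((x*t - t*x)*(x*y - y*x)))
              - (Z y*(x*s - s*x) - (x*s - s*x)*Z y)*((x*t - t*x)*(x*y - y*x)) := by noncomm_ring
        rw [cert, c1, c2]; simp
      have C7 : ∀ t : Q, (x*t0 - t0*x)*t*(x*t0 - t0*x) = 0 := by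
        intro t
        refine creg hQ cdelta hd0 (w := (x*t0 - t0*x)*t*(x*t0 - t0*x)) ?_
        have c1 := C2s t0 t
        rw [C6 t t0] at c1
        simpa using c1
      exact ht0 ((hQ _ _ C7).elim id id)
    ·
      -- Case B : H ≠ 0
      have z0 : (x*δ - δ*x)*δ = 0 := (zann hQ cHd zh0).resolve_right hH0
      have dH0 : δ*(x*δ - δ*x) = 0 := by
        have h1 := eqK
        rw [z0, zero_add] at h1
        exact h1
      have eH0 : ∀ y : Q, ((x*y - y*x)*δ - δ*(x*y - y*x))*(x*δ - δ*x) = 0 := by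
        intro y
        apply two_cancel hQ h2
        apply two_cancel hQ h2
        have cB := (c17 y) δ
        have rce := (ec y) δ
        have cert : (((x*y - y*x)*δ - δ*(x*y - y*x))*(x*δ - δ*x)
              + ((x*y - y*x)*δ - δ*(x*y - y*x))*(x*δ - δ*x))
            + (((x*y - y*x)*δ - δ*(x*y - y*x))*(x*δ - δ*x)
              + ((x*y - y*x)*δ - δ*(x*y - y*x))*(x*δ - δ*x))
            = ((x*y - y*x)*(δ*(x*δ - δ*x)) + (x*y - y*x)*(δ*(x*δ - δ*x)))
              - ((x*y - y*x)*((x*δ - δ*x)*δ) + (x*y - y*x)*((x*δ - δ*x)*δ))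
              - ((((x*y - y*x)*δ - δ*(x*y - y*x))*δ - δ*((x*y - y*x)*δ - δ*(x*y - y*x)))*x
                + (((x*y - y*x)*δ - δ*(x*y - y*x))*δ - δ*((x*y - y*x)*δ - δ*(x*y - y*x)))*x)
              + ((((x*y - y*x)*(x*δ - δ*x) + ((x*y - y*x)*δ - δ*(x*y - y*x))*x)*δ
                  - δ*((x*y - y*x)*(x*δ - δ*x) + ((x*y - y*x)*δ - δ*(x*y - y*x))*x))
                + (((x*y - y*x)*(x*δ - δ*x) + ((x*y - y*x)*δ - δ*(x*y - y*x))*x)*δ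
                  - δ*((x*y - y*x)*(x*δ - δ*x) + ((x*y - y*x)*δ - δ*(x*y - y*x))*x))) := by
          noncomm_ring
        rw [cert, dH0, z0, rce, cB]; simp
      have e0 : ∀ y : Q, (x*y - y*x)*δ - δ*(x*y - y*x) = 0 := fun y =>
        (zann hQ (ec y) (eH0 y)).resolve_right hH0
      intro y
      have ZH0 : Z y*(x*δ - δ*x) = 0 := by
        have c1 := Finner y δ
        have cert : Z y*(x*δ - δ*x)
            = ((x*y - y*x)*δ*δ - δ*((x*y - y*x)*δ) - Z y*(δ*x - x*δ))
              - ((x*y - y*x)*δ - δ*(x*y - y*x))*δ := by noncomm_ring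
        rw [cert, c1, e0 y]; simp
      exact (zann hQ (hC y) ZH0).resolve_right hH0

lemma ctr_half (h2 : (2:Q) ≠ 0) {a : Q} (h : Ctr (a + a)) : Ctr a := by
  intro t
  apply two_cancel hQ h2
  have cert : (a*t - t*a) + (a*t - t*a) = (a+a)*t - t*(a+a) := by noncomm_ring
  rw [cert, h t]

lemma ctr_of_comm_ctr {u : Q} (h : ∀ a : Q, Ctr (u*a - a*u)) : Ctr u := by
  have key : ∀ a a' : Q, (u*a' - a'*u)*(u*a - a*u) = 0 := by
    intro a a'
    have h1 := h (u*a)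
    have e : u*(u*a) - (u*a)*u = u*(u*a - a*u) := by noncomm_ring
    rw [e] at h1
    have c1 := h1 a'
    have c2 := (h a) a'
    have cert : (u*a' - a'*u)*(u*a - a*u)
        = (u*(u*a - a*u)*a' - a'*(u*(u*a - a*u))) - u*((u*a - a*u)*a' - a'*(u*a - a*u)) := by
      noncomm_ring
    rw [cert, c1, c2]; simp
  intro a
  have := zann hQ (h a) (key a a)
  exact this.elim id id

lemma lemB (hnc : ∃ a b : Q, a*b - b*a ≠ 0) {l : Q}
    (hl : ∀ a b : Q, Ctr (l*(a*b - b*a))) : l = 0 := by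
  have step1 : ∀ a b : Q, l*(a*b - b*a) = 0 := by
    intro a b
    have hz := hl a b
    have hza := hl a (b*a)
    have e : l*(a*(b*a) - (b*a)*a) = (l*(a*b - b*a))*a := by noncomm_ring
    rw [e] at hza
    have hcomm : ∀ t, (l*(a*b - b*a))*(a*t - t*a) = 0 := by
      intro t
      have c1 := hza t
      have c2 := hz t
      have cert : (l*(a*b - b*a))*(a*t - t*a)
          = ((l*(a*b - b*a))*a*t - t*((l*(a*b - b*a))*a))
            - ((l*(a*b - b*a))*t - t*(l*(a*b - b*a)))*a := by noncomm_ring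
      rw [cert, c1, c2]; simp
    by_cases hz0 : l*(a*b - b*a) = 0
    · exact hz0
    · have hacen : ∀ t : Q, a*t - t*a = 0 := fun t =>
        (zann hQ hz (hcomm t)).resolve_left hz0
      exact absurd (by rw [hacen b, mul_zero]) hz0
  have step2 : ∀ a t b' : Q, l*b'*(a*t - t*a) = 0 := by
    intro a t b'
    have s1 := step1 a (b'*t)
    have s2 := step1 a b'
    have cert : l*b'*(a*t - t*a)
        = l*(a*(b'*t) - (b'*t)*a) - (l*(a*b' - b'*a))*t := by noncomm_ring
    rw [cert, s1, s2]; simp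
  obtain ⟨a, b, hab⟩ := hnc
  exact (hQ l (a*b - b*a) (fun r => step2 a b r)).resolve_right hab

/-- Core theorem: a derivation on a "prime" ring with `d[x,y]` central is zero,
provided the ring is noncommutative and 2-torsion-free-ish. -/
theorem core (h2 : (2:Q) ≠ 0)
    (d : Q → Q) (dadd : ∀ a b, d (a+b) = d a + d b)
    (dmul : ∀ a b, d (a*b) = d a * b + a * d b)
    (dc : ∀ x y : Q, Ctr (d (x*y - y*x)))
    (hnc : ∃ a b : Q, a*b - b*a ≠ 0) : ∀ x, d x = 0 := by
  have d0 : d 0 = 0 := by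
    have h := dadd 0 0
    simp only [add_zero] at h
    exact (add_eq_left.mp h.symm)
  have zeta0 : ∀ x y : Q, d (x*y - y*x) = 0 := by
    intro x y
    by_cases hx : ∀ t, x*t - t*x = 0
    · have e : x*y - y*x = 0 := hx y
      rw [e, d0]
    · push_neg at hx
      obtain ⟨t0, ht0⟩ := hx
      refine mainlem hQ h2 x (d x) t0 (fun y => d (x*y - y*x)) (fun y => dc x y)
        (fun y => ?_) (fun y => ?_) ht0 y
      · show d (x*(y*x) - (y*x)*x) = d (x*y - y*x) * x + (x*y - y*x)*d x
        have e : x*(y*x) - (y*x)*x = (x*y - y*x)*x := by noncomm_ring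
        rw [e, dmul]
      · show d (x*(x*y) - (x*y)*x) = d x * (x*y - y*x) + x * d (x*y - y*x)
        have e : x*(x*y) - (x*y)*x = x*(x*y - y*x) := by noncomm_ring
        rw [e, dmul]
  have step : ∀ x y : Q, (x*y - y*x) * d x = 0 := by
    intro x y
    have h1 := zeta0 x (y*x)
    have e : x*(y*x) - (y*x)*x = (x*y - y*x)*x := by noncomm_ring
    rw [e, dmul, zeta0 x y] at h1
    simpa using h1
  have step2 : ∀ x t y : Q, (x*t - t*x)*y*(d x) = 0 := by
    intro x t y
    have c1 := step x (t*y)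
    have c2 := step x y
    have cert : (x*t - t*x)*y*(d x)
        = (x*(t*y) - (t*y)*x)*d x - t*((x*y - y*x)*d x) := by noncomm_ring
    rw [cert, c1, c2]; simp
  have dichot : ∀ x : Q, (∀ t, x*t - t*x = 0) ∨ d x = 0 := by
    intro x
    by_cases hx : ∀ t, x*t - t*x = 0
    · exact Or.inl hx
    · right
      push_neg at hx
      obtain ⟨t0, ht0⟩ := hx
      exact (hQ (x*t0 - t0*x) (d x) (fun r => step2 x t0 r)).resolve_left ht0
  intro x
  by_cases hdx : d x = 0
  · exact hdx
  · exfalso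
    obtain ⟨a0, b0, hab0⟩ := hnc
    have hxc : ∀ t, x*t - t*x = 0 := (dichot x).resolve_right hdx
    have hanc : ¬ (∀ t, a0*t - t*a0 = 0) := fun h => hab0 (h b0)
    have hda0 : d a0 = 0 := (dichot a0).resolve_left hanc
    have hsum : ¬ (∀ t, (x+a0)*t - t*(x+a0) = 0) := by
      intro h
      apply hanc
      intro t
      have c1 := h t
      have c2 := hxc t
      have cert : a0*t - t*a0 = ((x+a0)*t - t*(x+a0)) - (x*t - t*x) := by noncomm_ring
      rw [cert, c1, c2]; simp
    have hd : d (x+a0) = 0 := (dichot (x+a0)).resolve_left hsum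
    rw [dadd, hda0, add_zero] at hd
    exact hdx hd

end prime

/-- Reduction: star elimination and descent to the quotient. -/
theorem reduction {R : Type*} [Ring R] [StarRing R]
    (hQp : ∀ a b : Q, (∀ r : Q, a * r * b = 0) → a = 0 ∨ b = 0)
    (h2Q : (2:Q) ≠ 0)
    (π : R →+* Q) (hsurj : Function.Surjective π)
    (s : R) (hs : ∀ r : R, s*r = r*s) (hstar : star s = -s) (hσ0 : π s ≠ 0)
    (D : R → Q) (Dadd : ∀ a b : R, D (a+b) = D a + D b)
    (Dmul : ∀ a b : R, D (a*b) = D a * π b + π a * D b)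
    (hst : ∀ x : R, Ctr (D (x*star x - star x*x)))
    (hnc : ∃ A B : Q, A*B - B*A ≠ 0) :
    ∀ r : R, D r = 0 := by
  have hs' : ∀ a : R, a * s = s * a := fun a => (hs a).symm
  have hsw : ∀ a b : R, a * (s * b) = s * (a * b) := fun a b => by
    rw [← mul_assoc, ← hs a, mul_assoc]
  have ctrσ : Ctr (π s) := by
    intro t
    obtain ⟨r, rfl⟩ := hsurj t
    rw [← map_mul, ← map_mul, hs r, sub_self]
  have D0 : D 0 = 0 := by
    have h := Dadd 0 0
    simp only [add_zero] at h
    exact (add_eq_left.mp h.symm)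
  have Dneg : ∀ a : R, D (-a) = -(D a) := by
    intro a
    have h := Dadd a (-a)
    rw [add_neg_cancel, D0] at h
    exact (eq_neg_of_add_eq_zero_right h.symm)
  have Dsub : ∀ a b : R, D (a - b) = D a - D b := by
    intro a b
    rw [sub_eq_add_neg, Dadd, Dneg, ← sub_eq_add_neg]
  have cE : ∀ x y : R,
      Ctr (D ((x*star y - star y*x) + (y*star x - star x*y))) := by
    intro x y
    have h1 := hst (x+y)
    have h2x := hst x
    have h3 := hst y
    have e : (x+y)*star (x+y) - star (x+y)*(x+y)
        = (x*star x - star x*x) + ((y*star y - star y*y)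
            + ((x*star y - star y*x) + (y*star x - star x*y))) := by
      rw [star_add]; noncomm_ring
    rw [e, Dadd, Dadd] at h1
    have h4 := ctr_sub (ctr_sub h1 h2x) h3
    have e2 : (D (x*star x - star x*x) + (D (y*star y - star y*y)
            + D ((x*star y - star y*x) + (y*star x - star x*y))))
          - D (x*star x - star x*x) - D (y*star y - star y*y)
        = D ((x*star y - star y*x) + (y*star x - star x*y)) := by abel
    rw [e2] at h4
    exact h4
  have cE' : ∀ x y : R,
      Ctr (D ((x*y - y*x) + (star y*star x - star x*star y))) := by
    intro x y
    have h1 := cE x (star y)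
    rw [star_star] at h1
    exact h1
  have I3p : ∀ x y : R,
      ((s*x)*y - y*(s*x)) + (star y*star (s*x) - star (s*x)*star y)
        = s*((x*y - y*x) - (star y*star x - star x*star y)) := by
    intro x y
    rw [star_mul, hstar, mul_neg, hs' (star x)]
    rw [mul_neg, neg_mul]
    rw [hsw y x, hsw (star y) (star x)]
    noncomm_ring
  have I3m : ∀ x y : R,
      ((s*x)*y - y*(s*x)) - (star y*star (s*x) - star (s*x)*star y)
        = s*((x*y - y*x) + (star y*star x - star x*star y)) := by
    intro x y
    rw [star_mul, hstar, mul_neg, hs' (star x)]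
    rw [mul_neg, neg_mul]
    rw [hsw y x, hsw (star y) (star x)]
    noncomm_ring
  have cJ : ∀ x y : R,
      Ctr (D (s*((x*y - y*x) - (star y*star x - star x*star y)))) := by
    intro x y
    have h1 := cE' (s*x) y
    rw [I3p x y] at h1
    exact h1
  have cF' : ∀ x y : R,
      Ctr (D (s*(s*((x*y - y*x) + (star y*star x - star x*star y))))) := by
    intro x y
    have h1 := cJ (s*x) y
    rw [show s*(((s*x)*y - y*(s*x)) - (star y*star (s*x) - star (s*x)*star y))
        = s*(s*((x*y - y*x) + (star y*star x - star x*star y))) from by rw [I3m x y]] at h1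
    exact h1
  have cL : ∀ x y : R,
      Ctr (D (s*(s*(s*((x*y - y*x) - (star y*star x - star x*star y)))))) := by
    intro x y
    have h1 := cF' (s*x) y
    rw [show s*(s*(((s*x)*y - y*(s*x)) + (star y*star (s*x) - star (s*x)*star y)))
        = s*(s*(s*((x*y - y*x) - (star y*star x - star x*star y)))) from by rw [I3p x y]] at h1
    exact h1
  have DS0 : D s = 0 := by
    have hl : ∀ A B : Q, Ctr ((π s*(π s*D s))*(A*B - B*A)) := by
      intro A B
      obtain ⟨a, rfl⟩ := hsurj A
      obtain ⟨b, rfl⟩ := hsurj B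
      have expF' : D (s*(s*((a*b - b*a) + (star b*star a - star a*star b))))
          = D s*(π s*π ((a*b - b*a) + (star b*star a - star a*star b)))
            + (π s*(D s*π ((a*b - b*a) + (star b*star a - star a*star b)))
              + π s*(π s*D ((a*b - b*a) + (star b*star a - star a*star b)))) := by
        rw [Dmul, Dmul, map_mul, mul_add]
      have hcF := cF' a b
      rw [expF'] at hcF
      have c3 : Ctr (π s*(π s*D ((a*b - b*a) + (star b*star a - star a*star b)))) :=
        ctr_mul ctrσ (ctr_mul ctrσ (cE' a b))
      have h4 := ctr_sub hcF c3
      have e2 : (D s*(π s*π ((a*b - b*a) + (star b*star a - star a*star b)))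
            + (π s*(D s*π ((a*b - b*a) + (star b*star a - star a*star b)))
              + π s*(π s*D ((a*b - b*a) + (star b*star a - star a*star b)))))
          - π s*(π s*D ((a*b - b*a) + (star b*star a - star a*star b)))
          = D s*(π s*π ((a*b - b*a) + (star b*star a - star a*star b)))
            + π s*(D s*π ((a*b - b*a) + (star b*star a - star a*star b))) := by abel
      rw [e2] at h4
      have eA : D s*(π s*π ((a*b - b*a) + (star b*star a - star a*star b)))
          = π s*(D s*π ((a*b - b*a) + (star b*star a - star a*star b))) := by
        rw [← mul_assoc, ← ctrσ.comm (D s), mul_assoc]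
      rw [eA] at h4
      have cW : Ctr (π s*(D s*π ((a*b - b*a) + (star b*star a - star a*star b)))) :=
        ctr_half hQp h2Q h4
      have expL : D (s*(s*(s*((a*b - b*a) - (star b*star a - star a*star b)))))
          = D s*(π s*(π s*π ((a*b - b*a) - (star b*star a - star a*star b))))
            + (π s*(D s*(π s*π ((a*b - b*a) - (star b*star a - star a*star b))))
              + π s*(π s*D (s*((a*b - b*a) - (star b*star a - star a*star b))))) := by
        rw [Dmul, Dmul, map_mul, map_mul, mul_add]
      have hcL := cL a b
      rw [expL] at hcL
      have c3' : Ctr (π s*(π s*D (s*((a*b - b*a) - (star b*star a - star a*star b))))) :=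
        ctr_mul ctrσ (ctr_mul ctrσ (cJ a b))
      have h5 := ctr_sub hcL c3'
      have e3 : (D s*(π s*(π s*π ((a*b - b*a) - (star b*star a - star a*star b))))
            + (π s*(D s*(π s*π ((a*b - b*a) - (star b*star a - star a*star b))))
              + π s*(π s*D (s*((a*b - b*a) - (star b*star a - star a*star b))))))
          - π s*(π s*D (s*((a*b - b*a) - (star b*star a - star a*star b))))
          = D s*(π s*(π s*π ((a*b - b*a) - (star b*star a - star a*star b))))
            + π s*(D s*(π s*(π ((a*b - b*a) - (star b*star a - star a*star b))))) := by abel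
      rw [e3] at h5
      have eB : D s*(π s*(π s*π ((a*b - b*a) - (star b*star a - star a*star b))))
          = π s*(D s*(π s*(π ((a*b - b*a) - (star b*star a - star a*star b))))) := by
        rw [← mul_assoc, ← ctrσ.comm (D s), mul_assoc]
      rw [eB] at h5
      have cV1 : Ctr (π s*(D s*(π s*(π ((a*b - b*a) - (star b*star a - star a*star b)))))) :=
        ctr_half hQp h2Q h5
      have eC : D s*(π s*(π ((a*b - b*a) - (star b*star a - star a*star b))))
          = π s*(D s*(π ((a*b - b*a) - (star b*star a - star a*star b)))) := by
        rw [← mul_assoc, ← ctrσ.comm (D s), mul_assoc]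
      rw [eC] at cV1
      have cSum := ctr_add (ctr_mul ctrσ cW) cV1
      have e4 : π s*(π s*(D s*π ((a*b - b*a) + (star b*star a - star a*star b))))
            + π s*(π s*(D s*(π ((a*b - b*a) - (star b*star a - star a*star b)))))
          = π s*(π s*(D s*(π ((a*b - b*a) + (star b*star a - star a*star b))
              + π ((a*b - b*a) - (star b*star a - star a*star b))))) := by
        rw [mul_add (D s), mul_add (π s), mul_add (π s)]
      rw [e4] at cSum
      have e5 : π ((a*b - b*a) + (star b*star a - star a*star b))
            + π ((a*b - b*a) - (star b*star a - star a*star b))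
          = π (a*b - b*a) + π (a*b - b*a) := by
        rw [← map_add, ← map_add]
        congr 1
        noncomm_ring
      rw [e5] at cSum
      have e6 : π s*(π s*(D s*(π (a*b - b*a) + π (a*b - b*a))))
          = (π s*(π s*D s))*(π (a*b - b*a)) + (π s*(π s*D s))*(π (a*b - b*a)) := by
        rw [mul_add (D s)]
        noncomm_ring
      rw [e6] at cSum
      have cFin : Ctr ((π s*(π s*D s))*(π (a*b - b*a))) := ctr_half hQp h2Q cSum
      rw [map_sub, map_mul, map_mul] at cFin
      exact cFin
    have hl0 : π s*(π s*D s) = 0 := lemB hQp hnc (fun A B => hl A B)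
    have h1 : π s*D s = 0 := creg hQp ctrσ hσ0 hl0
    exact creg hQp ctrσ hσ0 h1
  have hmainQ : ∀ x y : R, Ctr (D (x*y - y*x)) := by
    intro x y
    have hJ := cJ x y
    have expJ : D (s*((x*y - y*x) - (star y*star x - star x*star y)))
        = π s*D ((x*y - y*x) - (star y*star x - star x*star y)) := by
      rw [Dmul, DS0, zero_mul, zero_add]
    rw [expJ] at hJ
    have cDv : Ctr (D ((x*y - y*x) - (star y*star x - star x*star y))) := by
      intro t
      refine creg hQp ctrσ hσ0 ?_
      have c1 := hJ t
      have c2 := ctrσ t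
      have cert : π s*(D ((x*y - y*x) - (star y*star x - star x*star y))*t
            - t*D ((x*y - y*x) - (star y*star x - star x*star y)))
          = ((π s*D ((x*y - y*x) - (star y*star x - star x*star y)))*t
              - t*(π s*D ((x*y - y*x) - (star y*star x - star x*star y))))
            - (π s*t - t*π s)*D ((x*y - y*x) - (star y*star x - star x*star y)) := by
        noncomm_ring
      rw [cert, c1, c2]; simp
    have hsum := ctr_add (cE' x y) cDv
    have e : D ((x*y - y*x) + (star y*star x - star x*star y))
          + D ((x*y - y*x) - (star y*star x - star x*star y))
        = D (x*y - y*x) + D (x*y - y*x) := by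
      rw [← Dadd, ← Dadd]
      congr 1
      noncomm_ring
    rw [e] at hsum
    exact ctr_half hQp h2Q hsum
  have cDP : ∀ q : R, π q = 0 → Ctr (D q) := by
    intro q hq
    have cK : ∀ A : Q, Ctr (D q*A - A*D q) := by
      intro A
      obtain ⟨y, rfl⟩ := hsurj A
      have h1 := hmainQ q y
      have e : D (q*y - y*q) = D q*π y - π y*D q := by
        rw [Dsub, Dmul, Dmul, hq]
        simp
      rw [e] at h1
      exact h1
    exact ctr_of_comm_ctr hQp cK
  have DP0 : ∀ q : R, π q = 0 → D q = 0 := by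
    intro q hq
    have cDq := cDP q hq
    have cA : ∀ A : Q, Ctr (D q*A) := by
      intro A
      obtain ⟨y, rfl⟩ := hsurj A
      have h1 := cDP (q*y) (by rw [map_mul, hq, zero_mul])
      have e : D (q*y) = D q*π y := by
        rw [Dmul, hq, zero_mul, add_zero]
      rw [e] at h1
      exact h1
    have hann : ∀ A t : Q, D q*(A*t - t*A) = 0 := by
      intro A t
      have c1 := (cA A) t
      have c2 := cDq t
      have cert : D q*(A*t - t*A) = (D q*A)*t - t*(D q*A) - (D q*t - t*D q)*A := by noncomm_ring
      rw [cert, c1, c2]; simp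
    obtain ⟨A0, B0, hab0⟩ := hnc
    refine (hQp (D q) (A0*B0 - B0*A0) (fun r => ?_)).resolve_right hab0
    have e : D q*r*(A0*B0 - B0*A0) = r*(D q*(A0*B0 - B0*A0)) := by
      rw [cDq.comm r]; noncomm_ring
    rw [e, hann A0 B0, mul_zero]
  have keyF : ∀ (A : Q) (r : R), π r = A → D (hsurj A).choose = D r := by
    intro A r hr
    have h1 : π ((hsurj A).choose - r) = 0 := by
      rw [map_sub, (hsurj A).choose_spec, hr, sub_self]
    have h2 := DP0 _ h1
    rw [Dsub] at h2
    exact sub_eq_zero.mp h2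
  set F : Q → Q := fun A => D (hsurj A).choose with hF
  have Fadd : ∀ A B : Q, F (A+B) = F A + F B := by
    intro A B
    obtain ⟨a, ha⟩ := hsurj A
    obtain ⟨b, hb⟩ := hsurj B
    rw [hF]
    simp only []
    rw [keyF A a ha, keyF B b hb, keyF (A+B) (a+b) (by rw [map_add, ha, hb]), Dadd]
  have Fmul : ∀ A B : Q, F (A*B) = F A * B + A * F B := by
    intro A B
    obtain ⟨a, ha⟩ := hsurj A
    obtain ⟨b, hb⟩ := hsurj B
    rw [hF]
    simp only []
    rw [keyF A a ha, keyF B b hb, keyF (A*B) (a*b) (by rw [map_mul, ha, hb]), Dmul, ha, hb]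
  have Fc : ∀ A B : Q, Ctr (F (A*B - B*A)) := by
    intro A B
    obtain ⟨a, ha⟩ := hsurj A
    obtain ⟨b, hb⟩ := hsurj B
    rw [hF]
    simp only []
    rw [keyF (A*B - B*A) (a*b - b*a) (by rw [map_sub, map_mul, map_mul, ha, hb])]
    exact hmainQ a b
  have hcore := core hQp h2Q F Fadd Fmul Fc hnc
  intro r
  have hr := hcore (π r)
  rw [hF] at hr
  simp only [] at hr
  rw [keyF (π r) r rfl] at hr
  exact hr

end S2x
/-- Corollary 1.
Let `R` be a ring with involution `*`, `P` a prime ideal of `R` with `char (R/P) ≠ 2`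
(equivalently, since `P` is proper, `(2 : R) ∉ P`), and suppose `*` is of `P`-second kind
(`Z(R) ∩ S(R) ⊄ P`).  If `d` is a derivation of `R` such that the image of `d([x, x*])`
lies in `Z(R/P)` for all `x ∈ R`, then `d(R) ⊆ P` or `R/P` is an integral domain. -/
theorem statement2 {R : Type*} [Ring R] [StarRing R] (P : TwoSidedIdeal R)
    (hP_proper : (1 : R) ∉ P)
    (hP_prime : ∀ a b : R, (∀ r : R, a * r * b ∈ P) → a ∈ P ∨ b ∈ P)
    (hchar : (2 : R) ∉ P)
    (hsecond : ∃ s : R, (∀ r : R, s * r = r * s) ∧ star s = -s ∧ s ∉ P)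
    (d : R → R)
    (hd_add : ∀ x y : R, d (x + y) = d x + d y)
    (hd_mul : ∀ x y : R, d (x * y) = d x * y + x * d y)
    -- `d([x, x*])` is central modulo `P` for all `x`
    (h : ∀ x r : R,
      d (x * star x - star x * x) * r - r * d (x * star x - star x * x) ∈ P) :
    (∀ x : R, d x ∈ P)
      ∨ ((1 : R) ∉ P ∧ (∀ x y : R, x * y - y * x ∈ P) ∧
          (∀ x y : R, x * y ∈ P → x ∈ P ∨ y ∈ P)) := by
  classical
  set π : R →+* P.ringCon.Quotient := RingCon.mk' P.ringCon with hπ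
  have memP : ∀ r : R, r ∈ P ↔ π r = 0 := by
    intro r
    rw [TwoSidedIdeal.mem_iff]
    constructor
    · intro hr
      calc π r = π 0 := (RingCon.eq _).mpr hr
        _ = 0 := map_zero π
    · intro hr
      have h0 : π r = π 0 := by rw [hr, map_zero]
      exact (RingCon.eq _).mp h0
  have hsurj : Function.Surjective π := fun q => Quot.inductionOn q (fun r => ⟨r, rfl⟩)
  have hQp : ∀ a b : P.ringCon.Quotient, (∀ r, a * r * b = 0) → a = 0 ∨ b = 0 := by
    intro A B hAB
    obtain ⟨a, rfl⟩ := hsurj A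
    obtain ⟨b, rfl⟩ := hsurj B
    have hmem : ∀ r : R, a*r*b ∈ P := by
      intro r
      refine (memP _).mpr ?_
      rw [map_mul, map_mul]
      exact hAB (π r)
    rcases hP_prime a b hmem with hh | hh
    · exact Or.inl ((memP a).mp hh)
    · exact Or.inr ((memP b).mp hh)
  have h2Q : (2 : P.ringCon.Quotient) ≠ 0 := by
    intro h0
    apply hchar
    refine (memP 2).mpr ?_
    calc π (2:R) = (2 : P.ringCon.Quotient) := map_ofNat π 2
      _ = 0 := h0
  by_cases hcomm : ∀ A B : P.ringCon.Quotient, A*B - B*A = 0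
  · refine Or.inr ⟨hP_proper, ?_, ?_⟩
    · intro x y
      refine (memP _).mpr ?_
      rw [map_sub, map_mul, map_mul]
      exact hcomm _ _
    · intro x y hxy
      refine hP_prime x y (fun r => ?_)
      refine (memP _).mpr ?_
      have hxyQ : π x * π y = 0 := by
        rw [← map_mul]
        exact (memP _).mp hxy
      have e : π (x*r*y) = π r * (π x * π y) := by
        rw [map_mul, map_mul]
        have e2 : π x * π r = π r * π x := sub_eq_zero.mp (hcomm (π x) (π r))
        rw [e2, mul_assoc]
      rw [e, hxyQ, mul_zero]
  · push_neg at hcomm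
    obtain ⟨A0, B0, hnc0⟩ := hcomm
    obtain ⟨s, hs, hstar, hsP⟩ := hsecond
    have hσ0 : π s ≠ 0 := fun h0 => hsP ((memP s).mpr h0)
    have hst : ∀ x : R, S2x.Ctr (π (d (x*star x - star x*x))) := by
      intro x t
      obtain ⟨r, rfl⟩ := hsurj t
      have := (memP _).mp (h x r)
      rw [map_sub, map_mul, map_mul] at this
      exact this
    have hred := S2x.reduction hQp h2Q π hsurj s hs hstar hσ0
      (fun r => π (d r))
      (fun a b => by show π (d (a+b)) = π (d a) + π (d b); rw [hd_add a b, map_add])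
      (fun a b => by
        show π (d (a*b)) = π (d a) * π b + π a * π (d b)
        rw [hd_mul a b, map_add, map_mul, map_mul])
      hst ⟨A0, B0, hnc0⟩
    refine Or.inl (fun x => (memP (d x)).mpr ?_)
    exact hred x
end

section
/- Let R be a 2-torsion free prime ring with involution * of the second kind (Z(R) ∩ S(R) ≠ {0}), and let d₁ and d₂ be nonzero derivations of R. Then [d₁(x), x*] + [x, d₂(x*)] ∈ Z(R) for all x ∈ R if and only if R is an integral domain; likewise, [d₁(x), x*] − [x, d₂(x*)] ∈ Z(R) for all x ∈ R if and only if R is an integral domain. -/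
/-!
Write `T(x, y) = [d₁ x, y] + [x, d₂ y]`; the hypothesis says `T(x, x*) ∈ Z`. Fix a nonzero
central `s` with `s* = -s` (so `d₁ s`, `d₂ s` are central too). Linearizing and substituting
`x ↦ x s`, `y ↦ y s` shows that `s d₁ s [x, y] + s d₂ s [y*, x*]` and
`s d₂ s ([x, y] + [y*, x*])` are central. If `R` is not commutative, some commutator is not
central, and in a prime ring this forces `d₁ s = d₂ s`. If this element is nonzero, `[x, x*]` is
central for all `x`, and the substitution `y ↦ y s` once more makes every commutator central.
If it is zero, `T(x, y)` itself is central: then `d₁ - d₂` is commuting, so it vanishes by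
Posner's theorem, and `d₁ [x, y] ∈ Z` makes a noncentral commutator `c` commute with `d₁(R)`.
Then `d₁` kills the centralizer of `c`, so `d₁² = 0` and `d₁ = 0` by Posner's first theorem.
The case of the minus sign is the case of the plus sign for `-d₂`.
-/

open Subring

namespace PrimeRing

variable {R : Type*} [Ring R]

theorem mul_comm_of_mem_center {z : R} (hz : z ∈ center R) (r : R) : z * r = r * z :=
  (mem_center_iff.mp hz r).symm

theorem eq_zero_or_eq_zero_of_mul_eq_zero_of_mem_center
    (hprime : ∀ a b : R, (∀ r : R, a * r * b = 0) → a = 0 ∨ b = 0)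
    {z a : R} (hz : z ∈ center R) (h : z * a = 0) : z = 0 ∨ a = 0 :=
  hprime z a fun r => by rw [← mem_center_iff.mp hz r, mul_assoc, h, mul_zero]

theorem eq_zero_or_mem_center_of_forall_mul_mul_lie_eq_zero
    (hprime : ∀ a b : R, (∀ r : R, a * r * b = 0) → a = 0 ∨ b = 0)
    {a x : R} (h : ∀ r y, a * r * ⁅x, y⁆ = 0) : a = 0 ∨ x ∈ center R :=
  or_iff_not_imp_left.mpr fun ha => mem_center_iff.mpr fun y =>
    (sub_eq_zero.mp ((hprime a _ (h · y)).resolve_left ha)).symm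

theorem eq_zero_or_mem_center_of_mul_mem_center
    (hprime : ∀ a b : R, (∀ r : R, a * r * b = 0) → a = 0 ∨ b = 0)
    {z a : R} (hz : z ∈ center R) (hza : z * a ∈ center R) : z = 0 ∨ a ∈ center R := by
  refine eq_zero_or_mem_center_of_forall_mul_mul_lie_eq_zero hprime fun r y => ?_
  have h1 := mem_center_iff.mp hz
  have h2 := mem_center_iff.mp hza y
  linear_combination (norm := noncomm_ring [Ring.lie_def])
    -(h1 r) * (a * y - y * a) - r * h2 + r * h1 y * a

theorem mem_center_of_forall_lie_mem_center
    (hprime : ∀ a b : R, (∀ r : R, a * r * b = 0) → a = 0 ∨ b = 0)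
    {x : R} (h : ∀ y, ⁅x, y⁆ ∈ center R) : x ∈ center R := by
  refine mem_center_iff.mpr fun y => ?_
  have hyx : ⁅x, y⁆ * x ∈ center R := by
    have : ⁅x, y * x⁆ = ⁅x, y⁆ * x := by noncomm_ring [Ring.lie_def]
    exact this ▸ h (y * x)
  rcases eq_zero_or_mem_center_of_mul_mem_center hprime (h y) hyx with hxy | hx
  · exact (sub_eq_zero.mp hxy).symm
  · exact mem_center_iff.mp hx y

theorem mul_comm_of_forall_lie_mem_center
    (hprime : ∀ a b : R, (∀ r : R, a * r * b = 0) → a = 0 ∨ b = 0)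
    (h : ∀ x y : R, ⁅x, y⁆ ∈ center R) (a b : R) : a * b = b * a :=
  mul_comm_of_mem_center (mem_center_of_forall_lie_mem_center hprime (h a)) b

theorem mem_center_of_two_mul_mem_center (h2tor : ∀ a : R, 2 * a = 0 → a = 0) {a : R}
    (h : 2 * a ∈ center R) : a ∈ center R :=
  mem_center_iff.mpr fun u =>
    sub_eq_zero.mp (h2tor _ (by linear_combination (norm := noncomm_ring) mem_center_iff.mp h u))

section Derivation

variable (d : R →+ R)

theorem deriv_mem_center (hd : ∀ x y : R, d (x * y) = d x * y + x * d y) {z : R}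
    (hz : z ∈ center R) : d z ∈ center R :=
  mem_center_iff.mpr fun r => by
    have hzr : d (r * z) = d (z * r) := by rw [mem_center_iff.mp hz r]
    linear_combination (norm := noncomm_ring) hd z r - hd r z + hzr - mem_center_iff.mp hz (d r)

theorem deriv_mul_lie_eq_zero_of_commuting (hd : ∀ x y : R, d (x * y) = d x * y + x * d y)
    (h : ∀ x, ⁅d x, x⁆ = 0) (x y : R) : d x * ⁅x, y⁆ = 0 := by
  have lin : ∀ a b, ⁅d a, b⁆ + ⁅d b, a⁆ = 0 := fun a b => by
    have := h (a + b)
    rw [map_add] at this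
    linear_combination (norm := noncomm_ring [Ring.lie_def]) this - h a - h b
  have := lin x (x * y)
  rw [hd] at this
  linear_combination (norm := noncomm_ring [Ring.lie_def]) -this + x * lin x y + 2 * h x * y

theorem deriv_eq_zero_or_mem_center_of_commuting
    (hprime : ∀ a b : R, (∀ r : R, a * r * b = 0) → a = 0 ∨ b = 0)
    (hd : ∀ x y : R, d (x * y) = d x * y + x * d y) (h : ∀ x, ⁅d x, x⁆ = 0) (x : R) :
    d x = 0 ∨ x ∈ center R := by
  refine eq_zero_or_mem_center_of_forall_mul_mul_lie_eq_zero hprime fun r y => ?_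
  have e1 := deriv_mul_lie_eq_zero_of_commuting d hd h x (r * y)
  have e2 := deriv_mul_lie_eq_zero_of_commuting d hd h x r
  linear_combination (norm := noncomm_ring [Ring.lie_def]) e1 - e2 * y

theorem mul_comm_of_commuting_deriv
    (hprime : ∀ a b : R, (∀ r : R, a * r * b = 0) → a = 0 ∨ b = 0)
    (hd : ∀ x y : R, d (x * y) = d x * y + x * d y) (hd0 : d ≠ 0) (h : ∀ x, ⁅d x, x⁆ = 0)
    (a b : R) : a * b = b * a := by
  have key := deriv_eq_zero_or_mem_center_of_commuting d hprime hd h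
  obtain ⟨c, hc⟩ : ∃ c, d c ≠ 0 := by
    by_contra! h0
    exact hd0 (AddMonoidHom.ext h0)
  have haZ : a ∈ center R := by
    refine (key a).elim (fun ha => ?_) id
    have hac : a + c ∈ center R := (key (a + c)).resolve_left (by rwa [map_add, ha, zero_add])
    simpa using sub_mem hac ((key c).resolve_left hc)
  exact mul_comm_of_mem_center haZ b

theorem eq_zero_of_deriv_deriv_eq_zero
    (hprime : ∀ a b : R, (∀ r : R, a * r * b = 0) → a = 0 ∨ b = 0)
    (h2tor : ∀ a : R, 2 * a = 0 → a = 0)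
    (hd : ∀ x y : R, d (x * y) = d x * y + x * d y) (h : ∀ x, d (d x) = 0) : d = 0 := by
  have hmul : ∀ a b, d a * d b = 0 := fun a b => h2tor _ <| by
    have := h (a * b)
    rw [hd, map_add, hd, hd, h, h] at this
    linear_combination (norm := noncomm_ring) this
  have hmul_mul : ∀ a t b, d a * t * d b = 0 := fun a t b => by
    have := hmul a (t * b)
    rw [hd] at this
    linear_combination (norm := noncomm_ring) this - hmul a t * b
  ext a
  exact (hprime _ _ (hmul_mul a · a)).elim id id

theorem deriv_eq_zero_of_mem_center
    (hprime : ∀ a b : R, (∀ r : R, a * r * b = 0) → a = 0 ∨ b = 0)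
    (hd : ∀ x y : R, d (x * y) = d x * y + x * d y) (h : ∀ x y : R, d ⁅x, y⁆ ∈ center R)
    {w v : R} (hwv : ⁅w, v⁆ ∉ center R) {z : R} (hz : z ∈ center R) : d z = 0 := by
  have hzwv : d z * ⁅w, v⁆ ∈ center R := by
    have hlie : ⁅w, z * v⁆ = z * ⁅w, v⁆ := by
      linear_combination (norm := noncomm_ring [Ring.lie_def]) mem_center_iff.mp hz w * v
    have : d z * ⁅w, v⁆ = d ⁅w, z * v⁆ - z * d ⁅w, v⁆ := by rw [hlie, hd]; abel
    exact this ▸ sub_mem (h w (z * v)) (mul_mem hz (h w v))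
  have hdz := deriv_mem_center d hd hz
  exact (eq_zero_or_mem_center_of_mul_mem_center hprime hdz hzwv).resolve_right hwv

theorem lie_deriv_eq_zero_of_deriv_lie_mem_center
    (hprime : ∀ a b : R, (∀ r : R, a * r * b = 0) → a = 0 ∨ b = 0)
    (h2tor : ∀ a : R, 2 * a = 0 → a = 0)
    (hd : ∀ x y : R, d (x * y) = d x * y + x * d y) (h : ∀ x y : R, d ⁅x, y⁆ ∈ center R)
    (hZ : ∀ z ∈ center R, d z = 0) {c : R} (hc : c ∉ center R) (hdc : d c ∈ center R)
    (r : R) : ⁅c, d r⁆ = 0 := by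
  have hμ_eq : d ⁅c, r⁆ = ⁅c, d r⁆ := by
    rw [Ring.lie_def, map_sub, hd, hd]
    linear_combination (norm := noncomm_ring [Ring.lie_def]) -mem_center_iff.mp hdc r
  have hμ : ⁅c, d r⁆ ∈ center R := hμ_eq ▸ h c r
  have hW_eq : d ⁅c, r * c⁆ = ⁅c, d r⁆ * c + ⁅c, r⁆ * d c := by
    have : ⁅c, r * c⁆ = ⁅c, r⁆ * c := by noncomm_ring [Ring.lie_def]
    rw [this, hd, hμ_eq]
  have hW : ⁅c, d r⁆ * c + ⁅c, r⁆ * d c ∈ center R := hW_eq ▸ h c (r * c)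
  have hμ_mul : ⁅c, d r⁆ * d c = 0 := h2tor _ <| by
    have := hZ _ hW
    rw [map_add, hd, hd, hZ _ hμ, hZ _ hdc, hμ_eq] at this
    linear_combination (norm := noncomm_ring) this
  rcases eq_zero_or_eq_zero_of_mul_eq_zero_of_mem_center hprime hμ hμ_mul with hμ0 | hdc0
  · exact hμ0
  · rw [hdc0, mul_zero, add_zero] at hW
    exact (eq_zero_or_mem_center_of_mul_mem_center hprime hμ hW).resolve_right hc

theorem deriv_eq_zero_of_lie_eq_zero
    (hprime : ∀ a b : R, (∀ r : R, a * r * b = 0) → a = 0 ∨ b = 0)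
    (hd : ∀ x y : R, d (x * y) = d x * y + x * d y) {c : R} (hc : c ∉ center R)
    (hcd : ∀ r, ⁅c, d r⁆ = 0) {z : R} (hz : ⁅c, z⁆ = 0) : d z = 0 := by
  have hmul : ∀ r, d z * ⁅c, r⁆ = 0 := fun r => by
    have := hcd (z * r)
    rw [hd] at this
    linear_combination (norm := noncomm_ring [Ring.lie_def])
      this - hcd z * r - hz * d r - z * hcd r
  refine (eq_zero_or_mem_center_of_forall_mul_mul_lie_eq_zero hprime fun t r => ?_).resolve_right
    hc
  linear_combination (norm := noncomm_ring [Ring.lie_def]) hmul (t * r) - hmul t * r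

theorem mul_comm_of_deriv_lie_mem_center
    (hprime : ∀ a b : R, (∀ r : R, a * r * b = 0) → a = 0 ∨ b = 0)
    (h2tor : ∀ a : R, 2 * a = 0 → a = 0)
    (hd : ∀ x y : R, d (x * y) = d x * y + x * d y) (hd0 : d ≠ 0)
    (h : ∀ x y : R, d ⁅x, y⁆ ∈ center R) (a b : R) : a * b = b * a := by
  by_contra hab
  obtain ⟨w, v, hwv⟩ : ∃ w v : R, ⁅w, v⁆ ∉ center R := by
    by_contra! hc
    exact hab (mul_comm_of_forall_lie_mem_center hprime hc a b)
  have hZ : ∀ z ∈ center R, d z = 0 := fun z => deriv_eq_zero_of_mem_center d hprime hd h hwv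
  have hcd := lie_deriv_eq_zero_of_deriv_lie_mem_center d hprime h2tor hd h hZ hwv (h w v)
  exact hd0 <| eq_zero_of_deriv_deriv_eq_zero d hprime h2tor hd fun r =>
    deriv_eq_zero_of_lie_eq_zero d hprime hd hwv hcd (hcd r)

end Derivation

section TwoDerivations

variable (d₁ d₂ : R →+ R)

theorem lie_sub_deriv_self_eq_zero
    (hprime : ∀ a b : R, (∀ r : R, a * r * b = 0) → a = 0 ∨ b = 0)
    (h2tor : ∀ a : R, 2 * a = 0 → a = 0)
    (hd₂ : ∀ x y : R, d₂ (x * y) = d₂ x * y + x * d₂ y)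
    (h : ∀ x y : R, ⁅d₁ x, y⁆ + ⁅x, d₂ y⁆ ∈ center R) (x : R) : ⁅d₁ x - d₂ x, x⁆ = 0 := by
  have hτ : ⁅d₁ x - d₂ x, x⁆ ∈ center R := by
    have : ⁅d₁ x - d₂ x, x⁆ = ⁅d₁ x, x⁆ + ⁅x, d₂ x⁆ := by noncomm_ring [Ring.lie_def]
    exact this ▸ h x x
  have hτx : ⁅d₁ x - d₂ x, x⁆ * x ∈ center R := by
    refine mem_center_of_two_mul_mem_center h2tor ?_
    have : 2 * (⁅d₁ x - d₂ x, x⁆ * x) = ⁅d₁ x, x * x⁆ + ⁅x, d₂ (x * x)⁆ := by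
      rw [hd₂]
      linear_combination (norm := noncomm_ring [Ring.lie_def]) -mem_center_iff.mp hτ x
    exact this ▸ h x (x * x)
  refine (eq_zero_or_mem_center_of_mul_mem_center hprime hτ hτx).elim id fun hx => ?_
  exact sub_eq_zero.mpr (mem_center_iff.mp hx _)

theorem mul_comm_of_lie_deriv_add_lie_deriv_mem_center
    (hprime : ∀ a b : R, (∀ r : R, a * r * b = 0) → a = 0 ∨ b = 0)
    (h2tor : ∀ a : R, 2 * a = 0 → a = 0)
    (hd₁ : ∀ x y : R, d₁ (x * y) = d₁ x * y + x * d₁ y)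
    (hd₂ : ∀ x y : R, d₂ (x * y) = d₂ x * y + x * d₂ y) (hd₁0 : d₁ ≠ 0)
    (h : ∀ x y : R, ⁅d₁ x, y⁆ + ⁅x, d₂ y⁆ ∈ center R) (a b : R) : a * b = b * a := by
  by_cases hd : d₁ = d₂
  · subst hd
    refine mul_comm_of_deriv_lie_mem_center d₁ hprime h2tor hd₁ hd₁0 (fun x y => ?_) a b
    have : d₁ ⁅x, y⁆ = ⁅d₁ x, y⁆ + ⁅x, d₁ y⁆ := by
      rw [Ring.lie_def, map_sub, hd₁, hd₁]; noncomm_ring [Ring.lie_def]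
    exact this ▸ h x y
  · refine mul_comm_of_commuting_deriv (d₁ - d₂) hprime (fun x y => ?_) (sub_ne_zero.mpr hd)
      (lie_sub_deriv_self_eq_zero d₁ d₂ hprime h2tor hd₂ h) a b
    simp only [AddMonoidHom.sub_apply, hd₁, hd₂]
    noncomm_ring

end TwoDerivations

section Involution

variable [StarRing R]

theorem mul_comm_of_lie_star_mem_center
    (hprime : ∀ a b : R, (∀ r : R, a * r * b = 0) → a = 0 ∨ b = 0)
    (h2tor : ∀ a : R, 2 * a = 0 → a = 0)
    {s : R} (hs : s ∈ center R) (hss : star s = -s) (hs0 : s ≠ 0)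
    (h : ∀ x : R, ⁅x, star x⁆ ∈ center R) (a b : R) : a * b = b * a := by
  have hlin : ∀ x y : R, ⁅x, star y⁆ + ⁅y, star x⁆ ∈ center R := fun x y => by
    have : ⁅x, star y⁆ + ⁅y, star x⁆ = ⁅x + y, star (x + y)⁆ - ⁅x, star x⁆ - ⁅y, star y⁆ := by
      rw [star_add]; noncomm_ring [Ring.lie_def]
    exact this ▸ sub_mem (sub_mem (h _) (h x)) (h y)
  have hlie : ∀ x y : R, ⁅y, star x⁆ ∈ center R := fun x y => by
    have hsy : s * (2 * ⁅y, star x⁆) ∈ center R := by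
      have : s * (2 * ⁅y, star x⁆)
          = ⁅x, star (y * s)⁆ + ⁅y * s, star x⁆ + s * (⁅x, star y⁆ + ⁅y, star x⁆) := by
        simp only [star_mul, hss, Ring.lie_def, mul_sub, sub_mul, neg_mul, mul_neg,
          mul_assoc, mul_comm_of_mem_center hs]
        noncomm_ring
      exact this ▸ add_mem (hlin x (y * s)) (mul_mem hs (hlin x y))
    exact mem_center_of_two_mul_mem_center h2tor
      ((eq_zero_or_mem_center_of_mul_mem_center hprime hs hsy).resolve_left hs0)
  refine mul_comm_of_forall_lie_mem_center hprime (fun x y => ?_) a b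
  simpa using hlie (star y) x

variable (d₁ d₂ : R →+ R)

theorem linearized_mem_center
    (H : ∀ x : R, ⁅d₁ x, star x⁆ + ⁅x, d₂ (star x)⁆ ∈ center R) (x y : R) :
    ⁅d₁ x, y⁆ + ⁅x, d₂ y⁆ + (⁅d₁ (star y), star x⁆ + ⁅star y, d₂ (star x)⁆) ∈ center R := by
  have : ⁅d₁ x, y⁆ + ⁅x, d₂ y⁆ + (⁅d₁ (star y), star x⁆ + ⁅star y, d₂ (star x)⁆)
      = ⁅d₁ (x + star y), star (x + star y)⁆ + ⁅x + star y, d₂ (star (x + star y))⁆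
        - (⁅d₁ x, star x⁆ + ⁅x, d₂ (star x)⁆)
        - (⁅d₁ (star y), star (star y)⁆ + ⁅star y, d₂ (star (star y))⁆) := by
    simp only [star_add, star_star, map_add]
    noncomm_ring [Ring.lie_def]
  exact this ▸ sub_mem (sub_mem (H _) (H x)) (H (star y))

theorem linearized_mul_skew_mem_center
    (hd₁ : ∀ x y : R, d₁ (x * y) = d₁ x * y + x * d₁ y)
    (hd₂ : ∀ x y : R, d₂ (x * y) = d₂ x * y + x * d₂ y)
    {s : R} (hs : s ∈ center R) (hss : star s = -s)
    (H : ∀ x : R, ⁅d₁ x, star x⁆ + ⁅x, d₂ (star x)⁆ ∈ center R) (x y : R) :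
    s * (2 * (⁅d₁ x, y⁆ + ⁅x, d₂ y⁆)) + ⁅x, y⁆ * d₁ s - ⁅star y, star x⁆ * d₂ s
      ∈ center R := by
  have hc₁ := mul_comm_of_mem_center (deriv_mem_center d₁ hd₁ hs)
  have hc₂ := mul_comm_of_mem_center (deriv_mem_center d₂ hd₂ hs)
  have : s * (2 * (⁅d₁ x, y⁆ + ⁅x, d₂ y⁆)) + ⁅x, y⁆ * d₁ s - ⁅star y, star x⁆ * d₂ s
      = ⁅d₁ (x * s), y⁆ + ⁅x * s, d₂ y⁆
          + (⁅d₁ (star y), star (x * s)⁆ + ⁅star y, d₂ (star (x * s))⁆)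
        + s * (⁅d₁ x, y⁆ + ⁅x, d₂ y⁆ + (⁅d₁ (star y), star x⁆ + ⁅star y, d₂ (star x)⁆)) := by
    simp only [star_mul, hss, neg_mul, map_neg, hd₁, hd₂]
    -- Move `d₁ s` and `d₂ s`, then `s`, to the right end of each monomial; what remains is an
    -- identity in the free ring.
    simp only [Ring.lie_def, mul_sub, sub_mul, mul_add, add_mul, neg_mul, mul_neg, mul_assoc,
      hc₁, hc₂]
    simp only [mul_assoc, mul_comm_of_mem_center hs]
    noncomm_ring
  exact this ▸ add_mem (linearized_mem_center d₁ d₂ H (x * s) y)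
    (mul_mem hs (linearized_mem_center d₁ d₂ H x y))

theorem mul_lie_mem_center
    (h2tor : ∀ a : R, 2 * a = 0 → a = 0)
    (hd₁ : ∀ x y : R, d₁ (x * y) = d₁ x * y + x * d₁ y)
    (hd₂ : ∀ x y : R, d₂ (x * y) = d₂ x * y + x * d₂ y)
    {s : R} (hs : s ∈ center R) (hss : star s = -s)
    (H : ∀ x : R, ⁅d₁ x, star x⁆ + ⁅x, d₂ (star x)⁆ ∈ center R) (x y : R) :
    s * d₁ s * ⁅x, y⁆ + s * d₂ s * ⁅star y, star x⁆ ∈ center R := by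
  have hc₁ := mul_comm_of_mem_center (deriv_mem_center d₁ hd₁ hs)
  have hc₂ := mul_comm_of_mem_center (deriv_mem_center d₂ hd₂ hs)
  have hI := linearized_mul_skew_mem_center d₁ d₂ hd₁ hd₂ hs hss H
  refine mem_center_of_two_mul_mem_center h2tor ?_
  have : 2 * (s * d₁ s * ⁅x, y⁆ + s * d₂ s * ⁅star y, star x⁆)
      = s * (2 * (⁅d₁ (x * s), y⁆ + ⁅x * s, d₂ y⁆)) + ⁅x * s, y⁆ * d₁ s
          - ⁅star y, star (x * s)⁆ * d₂ s
        - s * (s * (2 * (⁅d₁ x, y⁆ + ⁅x, d₂ y⁆)) + ⁅x, y⁆ * d₁ s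
            - ⁅star y, star x⁆ * d₂ s) := by
    simp only [star_mul, hss, neg_mul, hd₁]
    simp only [Ring.lie_def, mul_sub, sub_mul, mul_add, add_mul, neg_mul, mul_neg, mul_assoc,
      hc₁, hc₂]
    simp only [mul_assoc, mul_comm_of_mem_center hs]
    noncomm_ring
  exact this ▸ sub_mem (hI (x * s) y) (mul_mem hs (hI x y))

theorem mul_lie_add_lie_star_mem_center
    (h2tor : ∀ a : R, 2 * a = 0 → a = 0)
    (hd₁ : ∀ x y : R, d₁ (x * y) = d₁ x * y + x * d₁ y)
    (hd₂ : ∀ x y : R, d₂ (x * y) = d₂ x * y + x * d₂ y)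
    {s : R} (hs : s ∈ center R) (hss : star s = -s)
    (H : ∀ x : R, ⁅d₁ x, star x⁆ + ⁅x, d₂ (star x)⁆ ∈ center R) (x y : R) :
    s * d₂ s * (⁅x, y⁆ + ⁅star y, star x⁆) ∈ center R := by
  have hc₂ := mul_comm_of_mem_center (deriv_mem_center d₂ hd₂ hs)
  have hI := linearized_mul_skew_mem_center d₁ d₂ hd₁ hd₂ hs hss H
  refine mem_center_of_two_mul_mem_center h2tor ?_
  have : 2 * (s * d₂ s * (⁅x, y⁆ + ⁅star y, star x⁆))
      = s * (2 * (⁅d₁ x, y * s⁆ + ⁅x, d₂ (y * s)⁆)) + ⁅x, y * s⁆ * d₁ s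
          - ⁅star (y * s), star x⁆ * d₂ s
        - s * (s * (2 * (⁅d₁ x, y⁆ + ⁅x, d₂ y⁆)) + ⁅x, y⁆ * d₁ s
            - ⁅star y, star x⁆ * d₂ s) := by
    simp only [star_mul, hss, neg_mul, hd₂]
    simp only [Ring.lie_def, mul_sub, sub_mul, mul_add, add_mul, neg_mul, mul_neg, mul_assoc,
      hc₂]
    simp only [mul_assoc, mul_comm_of_mem_center hs]
    noncomm_ring
  exact this ▸ sub_mem (hI x (y * s)) (mul_mem hs (hI x y))

theorem deriv_eq_deriv_of_skew
    (hprime : ∀ a b : R, (∀ r : R, a * r * b = 0) → a = 0 ∨ b = 0)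
    (h2tor : ∀ a : R, 2 * a = 0 → a = 0)
    (hd₁ : ∀ x y : R, d₁ (x * y) = d₁ x * y + x * d₁ y)
    (hd₂ : ∀ x y : R, d₂ (x * y) = d₂ x * y + x * d₂ y)
    {s : R} (hs : s ∈ center R) (hss : star s = -s) (hs0 : s ≠ 0)
    (H : ∀ x : R, ⁅d₁ x, star x⁆ + ⁅x, d₂ (star x)⁆ ∈ center R)
    {w v : R} (hwv : ⁅w, v⁆ ∉ center R) : d₁ s = d₂ s := by
  have hz : s * (d₁ s - d₂ s) ∈ center R :=
    mul_mem hs (sub_mem (deriv_mem_center d₁ hd₁ hs) (deriv_mem_center d₂ hd₂ hs))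
  have hzwv : s * (d₁ s - d₂ s) * ⁅w, v⁆ ∈ center R := by
    have : s * (d₁ s - d₂ s) * ⁅w, v⁆ = s * d₁ s * ⁅w, v⁆ + s * d₂ s * ⁅star v, star w⁆
        - s * d₂ s * (⁅w, v⁆ + ⁅star v, star w⁆) := by noncomm_ring
    exact this ▸ sub_mem (mul_lie_mem_center d₁ d₂ h2tor hd₁ hd₂ hs hss H w v)
      (mul_lie_add_lie_star_mem_center d₁ d₂ h2tor hd₁ hd₂ hs hss H w v)
  have hz0 := (eq_zero_or_mem_center_of_mul_mem_center hprime hz hzwv).resolve_right hwv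
  exact sub_eq_zero.mp
    ((eq_zero_or_eq_zero_of_mul_eq_zero_of_mem_center hprime hs hz0).resolve_left hs0)

theorem mul_comm_of_lie_deriv_star_add_mem_center
    (hprime : ∀ a b : R, (∀ r : R, a * r * b = 0) → a = 0 ∨ b = 0)
    (h2tor : ∀ a : R, 2 * a = 0 → a = 0)
    (hd₁ : ∀ x y : R, d₁ (x * y) = d₁ x * y + x * d₁ y)
    (hd₂ : ∀ x y : R, d₂ (x * y) = d₂ x * y + x * d₂ y) (hd₁0 : d₁ ≠ 0)
    {s : R} (hs : s ∈ center R) (hss : star s = -s) (hs0 : s ≠ 0)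
    (H : ∀ x : R, ⁅d₁ x, star x⁆ + ⁅x, d₂ (star x)⁆ ∈ center R) (a b : R) : a * b = b * a := by
  by_contra hab
  obtain ⟨w, v, hwv⟩ : ∃ w v : R, ⁅w, v⁆ ∉ center R := by
    by_contra! hc
    exact hab (mul_comm_of_forall_lie_mem_center hprime hc a b)
  have hδ := deriv_eq_deriv_of_skew d₁ d₂ hprime h2tor hd₁ hd₂ hs hss hs0 H hwv
  by_cases hδ0 : d₂ s = 0
  · refine hab (mul_comm_of_lie_deriv_add_lie_deriv_mem_center d₁ d₂ hprime h2tor hd₁ hd₂ hd₁0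
      (fun x y => ?_) a b)
    have hI := linearized_mul_skew_mem_center d₁ d₂ hd₁ hd₂ hs hss H x y
    rw [hδ, hδ0, mul_zero, mul_zero, add_zero, sub_zero] at hI
    exact mem_center_of_two_mul_mem_center h2tor
      ((eq_zero_or_mem_center_of_mul_mem_center hprime hs hI).resolve_left hs0)
  · have hsδ : s * d₂ s ∈ center R := mul_mem hs (deriv_mem_center d₂ hd₂ hs)
    have hsδ0 : s * d₂ s ≠ 0 := fun h =>
      (eq_zero_or_eq_zero_of_mul_eq_zero_of_mem_center hprime hs h).elim hs0 hδ0
    refine hab (mul_comm_of_lie_star_mem_center hprime h2tor hs hss hs0 (fun x => ?_) a b)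
    have hB := mul_lie_add_lie_star_mem_center d₁ d₂ h2tor hd₁ hd₂ hs hss H x (star x)
    rw [star_star, ← two_mul] at hB
    exact mem_center_of_two_mul_mem_center h2tor
      ((eq_zero_or_mem_center_of_mul_mem_center hprime hsδ hB).resolve_left hsδ0)

end Involution

theorem domain_of_mul_comm
    (hprime : ∀ a b : R, (∀ r : R, a * r * b = 0) → a = 0 ∨ b = 0)
    {s : R} (hs0 : s ≠ 0) (hcomm : ∀ a b : R, a * b = b * a) :
    (0 : R) ≠ 1 ∧ (∀ a b : R, a * b = b * a) ∧ ∀ a b : R, a * b = 0 → a = 0 ∨ b = 0 :=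
  ⟨fun h => hs0 (by rw [← mul_one s, ← h, mul_zero]), hcomm,
    fun a b hab => hprime a b fun r => by rw [hcomm a r, mul_assoc, hab, mul_zero]⟩

end PrimeRing

theorem statement3_general {R : Type*} [Ring R] [StarRing R]
    -- `R` is prime
    (hprime : ∀ a b : R, (∀ r : R, a * r * b = 0) → a = 0 ∨ b = 0)
    -- `R` is 2-torsion free
    (h2tor : ∀ a : R, 2 * a = 0 → a = 0)
    -- `*` is of the second kind
    (hsecond : ∃ s : R, (∀ r : R, s * r = r * s) ∧ star s = -s ∧ s ≠ 0)
    (d₁ d₂ : R → R)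
    (hd₁_add : ∀ x y : R, d₁ (x + y) = d₁ x + d₁ y)
    (hd₁_mul : ∀ x y : R, d₁ (x * y) = d₁ x * y + x * d₁ y)
    (hd₂_add : ∀ x y : R, d₂ (x + y) = d₂ x + d₂ y)
    (hd₂_mul : ∀ x y : R, d₂ (x * y) = d₂ x * y + x * d₂ y)
    (hd₁_ne : ∃ x : R, d₁ x ≠ 0) :
    ((∀ x r : R,
        ((d₁ x * star x - star x * d₁ x) + (x * d₂ (star x) - d₂ (star x) * x)) * r
          = r * ((d₁ x * star x - star x * d₁ x) + (x * d₂ (star x) - d₂ (star x) * x)))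
      ↔ ((0 : R) ≠ 1 ∧ (∀ a b : R, a * b = b * a) ∧
          (∀ a b : R, a * b = 0 → a = 0 ∨ b = 0)))
    ∧
    ((∀ x r : R,
        ((d₁ x * star x - star x * d₁ x) - (x * d₂ (star x) - d₂ (star x) * x)) * r
          = r * ((d₁ x * star x - star x * d₁ x) - (x * d₂ (star x) - d₂ (star x) * x)))
      ↔ ((0 : R) ≠ 1 ∧ (∀ a b : R, a * b = b * a) ∧
          (∀ a b : R, a * b = 0 → a = 0 ∨ b = 0))) := by
  obtain ⟨s, hs, hss, hs0⟩ := hsecond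
  have hsZ : s ∈ center R := mem_center_iff.mpr fun r => (hs r).symm
  let D₁ : R →+ R := AddMonoidHom.mk' d₁ hd₁_add
  let D₂ : R →+ R := AddMonoidHom.mk' d₂ hd₂_add
  have hD₁0 : D₁ ≠ 0 := fun h => hd₁_ne.elim fun x hx => hx (DFunLike.congr_fun h x)
  have hnegD₂ : ∀ x y : R, (-D₂) (x * y) = (-D₂) x * y + x * (-D₂) y := fun x y => by
    simp only [AddMonoidHom.neg_apply, D₂, AddMonoidHom.mk'_apply, hd₂_mul]
    noncomm_ring
  refine ⟨⟨fun h => ?_, fun hR x r => hR.2.1 _ r⟩, ⟨fun h => ?_, fun hR x r => hR.2.1 _ r⟩⟩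
  · refine PrimeRing.domain_of_mul_comm hprime hs0
      (PrimeRing.mul_comm_of_lie_deriv_star_add_mem_center D₁ D₂ hprime h2tor hd₁_mul hd₂_mul
        hD₁0 hsZ hss hs0 fun x => ?_)
    exact mem_center_iff.mpr fun r => (h x r).symm
  · refine PrimeRing.domain_of_mul_comm hprime hs0
      (PrimeRing.mul_comm_of_lie_deriv_star_add_mem_center D₁ (-D₂) hprime h2tor hd₁_mul hnegD₂
        hD₁0 hsZ hss hs0 fun x => ?_)
    have : ⁅D₁ x, star x⁆ + ⁅x, (-D₂) (star x)⁆ = ⁅d₁ x, star x⁆ - ⁅x, d₂ (star x)⁆ := by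
      simp only [AddMonoidHom.neg_apply, D₁, D₂, AddMonoidHom.mk'_apply]
      noncomm_ring [Ring.lie_def]
    exact this ▸ mem_center_iff.mpr fun r => (h x r).symm

/-- Corollary 2.
Let `R` be a 2-torsion free prime ring with involution `*` of the second kind
(`Z(R) ∩ S(R) ≠ {0}`), and let `d₁, d₂` be nonzero derivations of `R`.  Then
`[d₁(x), x*] ± [x, d₂(x*)] ∈ Z(R)` for all `x ∈ R` if and only if `R` is an
integral domain (for either choice of sign). -/
theorem statement3 {R : Type*} [Ring R] [StarRing R]
    -- `R` is prime
    (hprime : ∀ a b : R, (∀ r : R, a * r * b = 0) → a = 0 ∨ b = 0)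
    -- `R` is 2-torsion free
    (h2tor : ∀ a : R, 2 * a = 0 → a = 0)
    -- `*` is of the second kind
    (hsecond : ∃ s : R, (∀ r : R, s * r = r * s) ∧ star s = -s ∧ s ≠ 0)
    (d₁ d₂ : R → R)
    (hd₁_add : ∀ x y : R, d₁ (x + y) = d₁ x + d₁ y)
    (hd₁_mul : ∀ x y : R, d₁ (x * y) = d₁ x * y + x * d₁ y)
    (hd₂_add : ∀ x y : R, d₂ (x + y) = d₂ x + d₂ y)
    (hd₂_mul : ∀ x y : R, d₂ (x * y) = d₂ x * y + x * d₂ y)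
    (hd₁_ne : ∃ x : R, d₁ x ≠ 0) (hd₂_ne : ∃ x : R, d₂ x ≠ 0) :
    ((∀ x r : R,
        ((d₁ x * star x - star x * d₁ x) + (x * d₂ (star x) - d₂ (star x) * x)) * r
          = r * ((d₁ x * star x - star x * d₁ x) + (x * d₂ (star x) - d₂ (star x) * x)))
      ↔ ((0 : R) ≠ 1 ∧ (∀ a b : R, a * b = b * a) ∧
          (∀ a b : R, a * b = 0 → a = 0 ∨ b = 0)))
    ∧
    ((∀ x r : R,
        ((d₁ x * star x - star x * d₁ x) - (x * d₂ (star x) - d₂ (star x) * x)) * r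
          = r * ((d₁ x * star x - star x * d₁ x) - (x * d₂ (star x) - d₂ (star x) * x)))
      ↔ ((0 : R) ≠ 1 ∧ (∀ a b : R, a * b = b * a) ∧
          (∀ a b : R, a * b = 0 → a = 0 ∨ b = 0))) :=
  statement3_general hprime h2tor hsecond d₁ d₂ hd₁_add hd₁_mul hd₂_add hd₂_mul hd₁_ne
end

section
/- Let R be a 2-torsion free prime ring with involution * of the second kind (Z(R) ∩ S(R) ≠ {0}), and let F be a generalized derivation of R associated with a nonzero derivation d. Then F(x ∘ x*) + d([x, x*]) ∈ Z(R) for all x ∈ R if and only if R is an integral domain; likewise, F(x ∘ x*) − d([x, x*]) ∈ Z(R) for all x ∈ R if and only if R is an integral domain. -/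
namespace St4

variable {R : Type*} [Ring R]

def IsCtr {R : Type*} [Ring R] (a : R) : Prop := ∀ r : R, a * r = r * a

theorem ctr_add {a b : R} (ha : IsCtr a) (hb : IsCtr b) : IsCtr (a + b) := by
  intro r; rw [add_mul, mul_add, ha r, hb r]

theorem ctr_sub {a b : R} (ha : IsCtr a) (hb : IsCtr b) : IsCtr (a - b) := by
  intro r; rw [sub_mul, mul_sub, ha r, hb r]

theorem ctr_two (h2tor : ∀ a : R, 2 * a = 0 → a = 0) {a : R}
    (h : IsCtr (2 * a)) : IsCtr a := by
  intro r
  have h1 := h r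
  have h2 : 2 * (a * r - r * a) = 0 := by
    have e : 2 * (a * r - r * a) = 2 * a * r - r * (2 * a) := by noncomm_ring
    rw [e, h1, sub_self]
  have h3 := h2tor _ h2
  rwa [sub_eq_zero] at h3

theorem ctr_mul {a b : R} (ha : IsCtr a) (hb : IsCtr b) : IsCtr (a * b) := by
  intro r
  rw [mul_assoc, hb r, ← mul_assoc, ha r, mul_assoc]

theorem ctr_pull {c : R} (hc : IsCtr c) (a b : R) : a * (c * b) = c * (a * b) := by
  rw [← mul_assoc, ← hc a, mul_assoc]

theorem ctr_swap {c : R} (hc : IsCtr c) (a : R) : a * c = c * a := (hc a).symm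

theorem ctr_cancel (hprime : ∀ a b : R, (∀ r : R, a * r * b = 0) → a = 0 ∨ b = 0)
    {c w : R} (hc : IsCtr c) (hcne : c ≠ 0) (h : c * w = 0) : w = 0 := by
  rcases hprime c w (fun r => by rw [mul_assoc, ← ctr_pull hc, h, mul_zero]) with h' | h'
  · exact absurd h' hcne
  · exact h'

theorem ctr_factor (hprime : ∀ a b : R, (∀ r : R, a * r * b = 0) → a = 0 ∨ b = 0)
    {c w : R} (hc : IsCtr c) (hcne : c ≠ 0) (h : IsCtr (c * w)) : IsCtr w := by
  intro r
  have h1 := h r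
  have h2 : c * (w * r - r * w) = 0 := by
    rw [mul_sub, ← mul_assoc, h1, ctr_pull hc, sub_self]
  have h3 := ctr_cancel hprime hc hcne h2
  rwa [sub_eq_zero] at h3

theorem ctr_d {d : R → R} (hd_mul : ∀ x y : R, d (x * y) = d x * y + x * d y)
    {c : R} (hc : IsCtr c) : IsCtr (d c) := by
  intro r
  have h1 := hd_mul c r
  have h2 := hd_mul r c
  rw [hc r, h2, hc (d r)] at h1
  rw [add_comm (d r * c)] at h1
  exact (add_right_cancel h1).symm

theorem comm_of_comm (hprime : ∀ a b : R, (∀ r : R, a * r * b = 0) → a = 0 ∨ b = 0)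
    (hc : ∀ u v : R, IsCtr (u * v - v * u)) : ∀ a b : R, a * b = b * a := by
  intro x y
  set c := x * y - y * x with hcdef
  have hcC : IsCtr c := hc x y
  have hcy : IsCtr (c * y) := by
    have h := hc (x * y) y
    have e : x * y * y - y * (x * y) = c * y := by rw [hcdef]; noncomm_ring
    rwa [e] at h
  have h0 : c * c = 0 := by
    have h1 : (c * y) * x = c * (x * y) := by rw [hcy x, ctr_pull hcC]
    have h2 : c * (y * x - x * y) = 0 := by
      rw [mul_sub, ← mul_assoc, sub_eq_zero, h1]
    have e : y * x - x * y = -c := by rw [hcdef]; abel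
    rw [e, mul_neg, neg_eq_zero] at h2
    exact h2
  have hor : c = 0 ∨ c = 0 := hprime c c (fun r => by
    rw [hcC r, mul_assoc, h0, mul_zero])
  have hc0 : c = 0 := hor.elim id id
  rw [hcdef] at hc0
  exact sub_eq_zero.mp hc0

theorem main_comm {R : Type*} [Ring R] [StarRing R]
    (hprime : ∀ a b : R, (∀ r : R, a * r * b = 0) → a = 0 ∨ b = 0)
    (h2tor : ∀ a : R, 2 * a = 0 → a = 0)
    (s : R) (hsC : IsCtr s) (hss : star s = -s) (hsne : s ≠ 0)
    (F d : R → R)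
    (hd_add : ∀ x y : R, d (x + y) = d x + d y)
    (hd_mul : ∀ x y : R, d (x * y) = d x * y + x * d y)
    (hd_ne : ∃ x : R, d x ≠ 0)
    (hF_add : ∀ x y : R, F (x + y) = F x + F y)
    (hF_mul : ∀ x y : R, F (x * y) = F x * y + x * d y)
    (hplus : ∀ x : R,
      IsCtr (F (x * star x + star x * x) + d (x * star x - star x * x))) :
    ∀ a b : R, a * b = b * a := by
  -- additive basics
  have d0 : d 0 = 0 := by
    have h := hd_add 0 0
    rw [add_zero] at h
    exact (left_eq_add.mp h)
  have dneg : ∀ x : R, d (-x) = -d x := by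
    intro x
    have h := hd_add x (-x)
    rw [add_neg_cancel, d0] at h
    exact (neg_eq_of_add_eq_zero_right h.symm).symm
  have dsub : ∀ x y : R, d (x - y) = d x - d y := by
    intro x y; rw [sub_eq_add_neg, hd_add, dneg, sub_eq_add_neg]
  have d1 : d 1 = 0 := by
    have h := hd_mul 1 1
    simp only [mul_one, one_mul] at h
    exact (left_eq_add.mp h)
  have F2 : ∀ a : R, F (2 * a) = 2 * F a := by
    intro a; rw [two_mul, hF_add, two_mul]
  -- the two central-valued identities
  have hstar : ∀ x : R,
      IsCtr (F (x * star x + star x * x) - d (x * star x - star x * x)) := by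
    intro x
    have h := hplus (star x)
    rw [star_star] at h
    rw [add_comm (star x * x), show star x * x - x * star x
      = -(x * star x - star x * x) by abel, dneg, ← sub_eq_add_neg] at h
    exact h
  have h1 : ∀ x : R, IsCtr (d (x * star x - star x * x)) := by
    intro x
    have h := ctr_sub (hplus x) (hstar x)
    have e : (F (x * star x + star x * x) + d (x * star x - star x * x))
        - (F (x * star x + star x * x) - d (x * star x - star x * x))
        = 2 * d (x * star x - star x * x) := by noncomm_ring
    rw [e] at h
    exact ctr_two h2tor h
  have h2 : ∀ x : R, IsCtr (F (x * star x + star x * x)) := by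
    intro x
    have h := ctr_add (hplus x) (hstar x)
    have e : (F (x * star x + star x * x) + d (x * star x - star x * x))
        + (F (x * star x + star x * x) - d (x * star x - star x * x))
        = 2 * F (x * star x + star x * x) := by noncomm_ring
    rw [e] at h
    exact ctr_two h2tor h
  -- linearization of h1
  have I1 : ∀ x w : R,
      IsCtr (d (x * w - w * x + (star w * star x - star x * star w))) := by
    intro x w
    have hA := h1 (x + star w)
    have e : (x + star w) * star (x + star w) - star (x + star w) * (x + star w)
        = (x * star x - star x * x) + (star w * w - w * star w)
          + (x * w - w * x + (star w * star x - star x * star w)) := by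
      simp only [star_add, star_star]; noncomm_ring
    rw [e, hd_add, hd_add] at hA
    have hB := h1 (star w)
    rw [star_star] at hB
    have hC := ctr_sub (ctr_sub hA (h1 x)) hB
    have e2 : d (x * star x - star x * x) + d (star w * w - w * star w)
          + d (x * w - w * x + (star w * star x - star x * star w))
        - d (x * star x - star x * x) - d (star w * w - w * star w)
        = d (x * w - w * x + (star w * star x - star x * star w)) := by abel
    rwa [e2] at hC
  -- substitution helpers
  have eP : ∀ x w : R, x * (s * w) - s * w * x = s * (x * w - w * x) := by
    intro x w
    rw [ctr_pull hsC, mul_assoc, ← mul_sub]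
  have eQ : ∀ x w : R, star (s * w) * star x - star x * star (s * w)
      = -(s * (star w * star x - star x * star w)) := by
    intro x w
    have hsw : star (s * w) = -(s * star w) := by
      rw [star_mul, hss, mul_neg, ctr_swap hsC]
    rw [hsw, neg_mul, mul_neg, mul_assoc, ctr_pull hsC]
    simp only [mul_sub]
    abel
  -- R1
  have R1 : ∀ x w : R,
      IsCtr (d s * (x * w - w * x) - d s * (star w * star x - star x * star w)
        + 2 * (s * d (x * w - w * x))) := by
    intro x w
    have hA := I1 x (s * w)
    rw [eP, eQ] at hA
    have e : s * (x * w - w * x) + -(s * (star w * star x - star x * star w))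
        = s * ((x * w - w * x) - (star w * star x - star x * star w)) := by
      simp only [mul_sub]; abel
    rw [e] at hA
    rw [hd_mul, dsub] at hA
    have hB := ctr_mul hsC (I1 x w)
    have hC := ctr_add hA hB
    have e2 : d s * (x * w - w * x - (star w * star x - star x * star w))
          + s * (d (x * w - w * x) - d (star w * star x - star x * star w))
          + s * d (x * w - w * x + (star w * star x - star x * star w))
        = d s * (x * w - w * x) - d s * (star w * star x - star x * star w)
          + 2 * (s * d (x * w - w * x)) := by
      rw [hd_add]; noncomm_ring
    rwa [e2] at hC
  by_cases hds : d s = 0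
  · ----- case d s = 0
    have hdcomm : ∀ u v : R, IsCtr (d (u * v - v * u)) := by
      intro u v
      have h := R1 u v
      rw [hds] at h
      simp only [zero_mul, sub_zero, zero_add, sub_self] at h
      exact ctr_factor hprime hsC hsne (ctr_two h2tor h)
    -- linearization of h2
    have I2 : ∀ x w : R,
        IsCtr (F (x * w + star w * star x + (w * x + star x * star w))) := by
      intro x w
      have hA := h2 (x + star w)
      have e : (x + star w) * star (x + star w) + star (x + star w) * (x + star w)
          = (x * star x + star x * x) + (star w * w + w * star w)
            + (x * w + star w * star x + (w * x + star x * star w)) := by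
        simp only [star_add, star_star]; noncomm_ring
      rw [e, hF_add, hF_add] at hA
      have hB := h2 (star w)
      rw [star_star] at hB
      have hC := ctr_sub (ctr_sub hA (h2 x)) hB
      have e2 : F (x * star x + star x * x) + F (star w * w + w * star w)
            + F (x * w + star w * star x + (w * x + star x * star w))
          - F (x * star x + star x * x) - F (star w * w + w * star w)
          = F (x * w + star w * star x + (w * x + star x * star w)) := by abel
      rwa [e2] at hC
    have K : ∀ x : R, IsCtr (F (s * (x - star x))) := by
      intro x
      have hA := I2 x s
      have e : x * s + star s * star x + (s * x + star x * star s)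
          = 2 * (s * (x - star x)) := by
        rw [hss, ctr_swap hsC x, neg_mul, mul_neg, ctr_swap hsC (star x), mul_sub]
        noncomm_ring
      rw [e, F2] at hA
      exact ctr_two h2tor hA
    have L : ∀ x : R, IsCtr (F s * x + s * d x) := by
      intro x
      have hA := K (s * x)
      have e1 : s * (s * x - star (s * x)) = s * (s * (x + star x)) := by
        rw [star_mul, hss, mul_neg, ctr_swap hsC]
        simp only [sub_neg_eq_add, mul_add]
      rw [e1] at hA
      have edb : d (s * (x + star x)) = s * (d x + d (star x)) := by
        rw [hd_mul, hds, zero_mul, zero_add, hd_add]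
      have e2 : F (s * (s * (x + star x)))
          = F s * (s * (x + star x)) + s * (s * (d x + d (star x))) := by
        rw [hF_mul, edb]
      rw [e2] at hA
      have hB := K x
      rw [hF_mul, dsub] at hB
      have hC := ctr_add hA (ctr_mul hsC hB)
      have e3 : F s * (s * (x + star x)) + s * (s * (d x + d (star x)))
            + s * (F s * (x - star x) + s * (d x - d (star x)))
          = 2 * (s * (F s * x + s * d x)) := by
        rw [mul_add s (F s * (x - star x)), ctr_pull hsC (F s)]
        noncomm_ring
      rw [e3] at hC
      exact ctr_factor hprime hsC hsne (ctr_two h2tor hC)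
    have CFs : IsCtr (F s) := by
      have h := L 1
      rwa [d1, mul_one, mul_zero, add_zero] at h
    have N : ∀ x r : R, F s * (x * r - r * x) + s * (d x * r - r * d x) = 0 := by
      intro x r
      have hL := L x r
      have e : F s * (x * r - r * x) + s * (d x * r - r * d x)
          = (F s * x + s * d x) * r - r * (F s * x + s * d x) := by
        rw [mul_add r, ctr_pull CFs r x, ctr_pull hsC r (d x)]
        noncomm_ring
      rw [e, hL, sub_self]
    by_cases hFs : F s = 0
    · -- F s = 0 : d has central values
      have hdC : ∀ x : R, IsCtr (d x) := by
        intro x r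
        have h := N x r
        rw [hFs, zero_mul, zero_add] at h
        have h' := ctr_cancel hprime hsC hsne h
        rwa [sub_eq_zero] at h'
      have W : ∀ x y r : R,
          d x * (y * r - r * y) + d y * (x * r - r * x) = 0 := by
        intro x y r
        have h := hdC (x * y) r
        rw [hd_mul] at h
        have t1 : r * (d x * y) = d x * (r * y) := ctr_pull (hdC x) r y
        have t2 : r * (x * d y) = d y * (r * x) := by
          rw [← mul_assoc, ctr_swap (hdC y)]
        have t3 : x * d y * r = d y * (x * r) := by
          rw [mul_assoc, hdC y r, ← mul_assoc, ctr_swap (hdC y)]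
        have e : d x * (y * r - r * y) + d y * (x * r - r * x)
            = (d x * y + x * d y) * r - r * (d x * y + x * d y) := by
          rw [mul_add r, t1, t2, add_mul, mul_assoc (d x), t3]
          noncomm_ring
        rw [e, h, sub_self]
      obtain ⟨a, hda⟩ := hd_ne
      have ha : IsCtr a := by
        intro r
        have h := W a a r
        rw [← two_mul] at h
        have h' := h2tor _ h
        have h'' := ctr_cancel hprime (hdC a) hda h'
        rwa [sub_eq_zero] at h''
      intro u v
      have h := W u a v
      rw [ha v, sub_self, mul_zero, zero_add] at h
      have h' := ctr_cancel hprime (hdC a) hda h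
      rwa [sub_eq_zero] at h'
    · -- F s ≠ 0
      apply comm_of_comm hprime
      intro u v r
      have h := N (u * v - v * u) r
      rw [hdcomm u v r, sub_self, mul_zero, add_zero] at h
      have h' := ctr_cancel hprime CFs hFs h
      rwa [sub_eq_zero] at h'
  · ----- case d s ≠ 0
    have hdsC : IsCtr (d s) := ctr_d hd_mul hsC
    have R2 : ∀ x w : R,
        IsCtr (s * (d s * ((x * w - w * x)
          + (star w * star x - star x * star w)))) := by
      intro x w
      have hA := R1 x (s * w)
      rw [eP, eQ] at hA
      rw [hd_mul] at hA
      have hB := ctr_mul hsC (R1 x w)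
      have hC := ctr_sub hA hB
      have e : d s * (s * (x * w - w * x))
            - d s * -(s * (star w * star x - star x * star w))
            + 2 * (s * (d s * (x * w - w * x) + s * d (x * w - w * x)))
            - s * (d s * (x * w - w * x)
              - d s * (star w * star x - star x * star w)
              + 2 * (s * d (x * w - w * x)))
          = 2 * (s * (d s * ((x * w - w * x)
            + (star w * star x - star x * star w)))) := by
        rw [mul_neg, ctr_pull hsC (d s) (x * w - w * x),
          ctr_pull hsC (d s) (star w * star x - star x * star w)]
        noncomm_ring
      rw [e] at hC
      exact ctr_two h2tor hC
    have J : ∀ x w : R,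
        IsCtr ((x * w - w * x) + (star w * star x - star x * star w)) := by
      intro x w
      exact ctr_factor hprime hdsC hds
        (ctr_factor hprime hsC hsne (R2 x w))
    apply comm_of_comm hprime
    intro u v
    have hJ1 := J u v
    have hJ2 := J u (s * v)
    rw [eP, eQ] at hJ2
    have e : s * (u * v - v * u) + -(s * (star v * star u - star u * star v))
        = s * ((u * v - v * u) - (star v * star u - star u * star v)) := by
      simp only [mul_sub]; abel
    rw [e] at hJ2
    have hJ3 := ctr_factor hprime hsC hsne hJ2
    have hsum := ctr_add hJ1 hJ3
    have e2 : (u * v - v * u) + (star v * star u - star u * star v)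
          + ((u * v - v * u) - (star v * star u - star u * star v))
        = 2 * (u * v - v * u) := by noncomm_ring
    rw [e2] at hsum
    exact ctr_two h2tor hsum

end St4

/-- Corollary 3.
Let `R` be a 2-torsion free prime ring with involution `*` of the second kind, and let
`F` be a generalized derivation of `R` associated with a nonzero derivation `d`.  Then
`F(x ∘ x*) ± d([x, x*]) ∈ Z(R)` for all `x ∈ R` if and only if `R` is an integral
domain (for either choice of sign). -/
theorem statement4 {R : Type*} [Ring R] [StarRing R]
    (hprime : ∀ a b : R, (∀ r : R, a * r * b = 0) → a = 0 ∨ b = 0)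
    (h2tor : ∀ a : R, 2 * a = 0 → a = 0)
    (hsecond : ∃ s : R, (∀ r : R, s * r = r * s) ∧ star s = -s ∧ s ≠ 0)
    (F d : R → R)
    (hd_add : ∀ x y : R, d (x + y) = d x + d y)
    (hd_mul : ∀ x y : R, d (x * y) = d x * y + x * d y)
    (hd_ne : ∃ x : R, d x ≠ 0)
    -- `F` is a generalized derivation associated with `d`
    (hF_add : ∀ x y : R, F (x + y) = F x + F y)
    (hF_mul : ∀ x y : R, F (x * y) = F x * y + x * d y) :
    ((∀ x r : R,
        (F (x * star x + star x * x) + d (x * star x - star x * x)) * r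
          = r * (F (x * star x + star x * x) + d (x * star x - star x * x)))
      ↔ ((0 : R) ≠ 1 ∧ (∀ a b : R, a * b = b * a) ∧
          (∀ a b : R, a * b = 0 → a = 0 ∨ b = 0)))
    ∧
    ((∀ x r : R,
        (F (x * star x + star x * x) - d (x * star x - star x * x)) * r
          = r * (F (x * star x + star x * x) - d (x * star x - star x * x)))
      ↔ ((0 : R) ≠ 1 ∧ (∀ a b : R, a * b = b * a) ∧
          (∀ a b : R, a * b = 0 → a = 0 ∨ b = 0))) := by
  obtain ⟨s, hsC, hss, hsne⟩ := hsecond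
  have hzo : (0 : R) ≠ 1 := by
    intro h
    exact hsne (by rw [← mul_one s, ← h, mul_zero])
  have hdom : (∀ a b : R, a * b = b * a) →
      ∀ a b : R, a * b = 0 → a = 0 ∨ b = 0 := by
    intro hcomm a b hab
    exact hprime a b fun r => by
      rw [mul_assoc, hcomm r b, ← mul_assoc, hab, zero_mul]
  have d0 : d 0 = 0 := by
    have h := hd_add 0 0
    rw [add_zero] at h
    exact (left_eq_add.mp h)
  have dneg : ∀ x : R, d (-x) = -d x := by
    intro x
    have h := hd_add x (-x)
    rw [add_neg_cancel, d0] at h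
    exact (neg_eq_of_add_eq_zero_right h.symm).symm
  constructor
  · constructor
    · intro h
      have hcomm := St4.main_comm hprime h2tor s hsC hss hsne F d hd_add hd_mul
        hd_ne hF_add hF_mul (fun x => h x)
      exact ⟨hzo, hcomm, hdom hcomm⟩
    · rintro ⟨-, hcomm, -⟩ x r
      exact hcomm _ _
  · constructor
    · intro h
      have hplus : ∀ x : R,
          St4.IsCtr (F (x * star x + star x * x) + d (x * star x - star x * x)) := by
        intro x
        have hx : St4.IsCtr (F (star x * star (star x) + star (star x) * star x)
            - d (star x * star (star x) - star (star x) * star x)) := h (star x)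
        rw [star_star] at hx
        rw [add_comm (star x * x), show star x * x - x * star x
          = -(x * star x - star x * x) by abel, dneg, sub_neg_eq_add] at hx
        exact hx
      have hcomm := St4.main_comm hprime h2tor s hsC hss hsne F d hd_add hd_mul
        hd_ne hF_add hF_mul hplus
      exact ⟨hzo, hcomm, hdom hcomm⟩
    · rintro ⟨-, hcomm, -⟩ x r
      exact hcomm _ _
end

section
/- Let R be an associative ring with involution *, let P be a prime ideal of R such that R/P has characteristic different from 2, and suppose * is of P-second kind (Z(R) ∩ S(R) is not contained in P). If d₁ and d₂ are derivations of R such that the image of d₁(x) ∘ x* + x ∘ d₂(x*) lies in Z(R/P) for all x ∈ R, then R/P is an integral domain, or both d₁(R) ⊆ P and d₂(R) ⊆ P. -/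
set_option linter.unusedSectionVars false
set_option maxHeartbeats 1000000

section StAux
variable {R : Type*} [Ring R] [StarRing R]

/-- Auxiliary: `T x z = d₁ x ∘ z* + x ∘ d₂ z*`. -/
def stTf (d₁ d₂ : R → R) (x z : R) : R :=
  (d₁ x * star z + star z * d₁ x) + (x * d₂ (star z) + d₂ (star z) * x)

/-- Auxiliary: expression `B`. -/
def stBf (d₁ d₂ : R → R) (s x z : R) : R :=
  2 * (s * stTf d₁ d₂ x z) + d₂ s * (x * star z + star z * x)
    - d₁ s * (z * star x + star x * z)

/-- Auxiliary: expression `C`. -/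
def stCf (d₁ d₂ : R → R) (s x z : R) : R :=
  s * (s * stTf d₁ d₂ x z) + s * (d₂ s * (x * star z + star z * x))

/-- Auxiliary: centrality modulo `P`. -/
def cenP (P : TwoSidedIdeal R) (a : R) : Prop := ∀ r : R, a * r - r * a ∈ P

variable (P : TwoSidedIdeal R)

lemma cenP_add {a b : R} (ha : cenP P a) (hb : cenP P b) : cenP P (a + b) := by
  intro r
  have e : (a + b) * r - r * (a + b) = (a * r - r * a) + (b * r - r * b) := by noncomm_ring
  rw [e]; exact P.add_mem (ha r) (hb r)

lemma cenP_sub {a b : R} (ha : cenP P a) (hb : cenP P b) : cenP P (a - b) := by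
  intro r
  have e : (a - b) * r - r * (a - b) = (a * r - r * a) - (b * r - r * b) := by noncomm_ring
  rw [e]; exact P.sub_mem (ha r) (hb r)

lemma cenP_smul {u a : R} (hu : ∀ r : R, u * r = r * u) (ha : cenP P a) : cenP P (u * a) := by
  intro r
  have e : (u * a) * r - r * (u * a) = u * (a * r - r * a) := by
    simp only [mul_sub, ← mul_assoc, ← hu r]
  rw [e]; exact P.mul_mem_left _ _ (ha r)

lemma cenP_of_eq {a b : R} (e : a = b) (hb : cenP P b) : cenP P a := e ▸ hb

end StAux

/-- Theorem 2.
Let `R` be a ring with involution `*`, `P` a prime ideal of `R` with `char (R/P) ≠ 2`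
(equivalently, since `P` is proper, `(2 : R) ∉ P`), and suppose `*` is of `P`-second kind
(`Z(R) ∩ S(R) ⊄ P`).  If `d₁, d₂` are derivations of `R` such that the image of
`d₁(x) ∘ x* + x ∘ d₂(x*)` lies in `Z(R/P)` for all `x ∈ R`, then `R/P` is an integral
domain, or both `d₁(R) ⊆ P` and `d₂(R) ⊆ P`. -/
theorem statement5 {R : Type*} [Ring R] [StarRing R] (P : TwoSidedIdeal R)
    (hP_proper : (1 : R) ∉ P)
    (hP_prime : ∀ a b : R, (∀ r : R, a * r * b ∈ P) → a ∈ P ∨ b ∈ P)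
    (hchar : (2 : R) ∉ P)
    (hsecond : ∃ s : R, (∀ r : R, s * r = r * s) ∧ star s = -s ∧ s ∉ P)
    (d₁ d₂ : R → R)
    (hd₁_add : ∀ x y : R, d₁ (x + y) = d₁ x + d₁ y)
    (hd₁_mul : ∀ x y : R, d₁ (x * y) = d₁ x * y + x * d₁ y)
    (hd₂_add : ∀ x y : R, d₂ (x + y) = d₂ x + d₂ y)
    (hd₂_mul : ∀ x y : R, d₂ (x * y) = d₂ x * y + x * d₂ y)
    -- `d₁(x) ∘ x* + x ∘ d₂(x*)` is central modulo `P` for all `x`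
    (h : ∀ x r : R,
      ((d₁ x * star x + star x * d₁ x) + (x * d₂ (star x) + d₂ (star x) * x)) * r
        - r * ((d₁ x * star x + star x * d₁ x) + (x * d₂ (star x) + d₂ (star x) * x)) ∈ P) :
    ((1 : R) ∉ P ∧ (∀ x y : R, x * y - y * x ∈ P) ∧
        (∀ x y : R, x * y ∈ P → x ∈ P ∨ y ∈ P))
      ∨ ((∀ x : R, d₁ x ∈ P) ∧ (∀ x : R, d₂ x ∈ P)) := by
  obtain ⟨s, hs_comm, hs_star, hs_nP⟩ := hsecond
  -- basic facts about the derivations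
  have hd₁0 : d₁ 0 = 0 := by
    have h0 := hd₁_add 0 0; rw [add_zero, left_eq_add] at h0; exact h0
  have hd₂0 : d₂ 0 = 0 := by
    have h0 := hd₂_add 0 0; rw [add_zero, left_eq_add] at h0; exact h0
  have hd₁neg : ∀ a : R, d₁ (-a) = -(d₁ a) := by
    intro a
    have h0 := hd₁_add a (-a); rw [add_neg_cancel, hd₁0] at h0
    exact eq_neg_of_add_eq_zero_right h0.symm
  have hd₂neg : ∀ a : R, d₂ (-a) = -(d₂ a) := by
    intro a
    have h0 := hd₂_add a (-a); rw [add_neg_cancel, hd₂0] at h0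
    exact eq_neg_of_add_eq_zero_right h0.symm
  have hd₁1 : d₁ 1 = 0 := by
    have h0 := hd₁_mul 1 1; simp only [one_mul, mul_one] at h0
    rw [left_eq_add] at h0; exact h0
  have hd₂1 : d₂ 1 = 0 := by
    have h0 := hd₂_mul 1 1; simp only [one_mul, mul_one] at h0
    rw [left_eq_add] at h0; exact h0
  -- moving central elements to the left
  have mv_s : ∀ a b : R, a * (s * b) = s * (a * b) := fun a b => by
    rw [← mul_assoc, ← hs_comm, mul_assoc]
  have mv_s' : ∀ a : R, a * s = s * a := fun a => (hs_comm a).symm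
  have hd₁s_cen : ∀ a : R, d₁ s * a = a * d₁ s := by
    intro a
    have h1 := hd₁_mul s a
    have h2 := hd₁_mul a s
    rw [hs_comm] at h1
    have h3 : d₁ s * a + s * d₁ a = d₁ a * s + a * d₁ s := h1.symm.trans h2
    rw [← mv_s' (d₁ a), add_comm (d₁ a * s) (a * d₁ s)] at h3
    exact add_right_cancel h3
  have hd₂s_cen : ∀ a : R, d₂ s * a = a * d₂ s := by
    intro a
    have h1 := hd₂_mul s a
    have h2 := hd₂_mul a s
    rw [hs_comm] at h1
    have h3 : d₂ s * a + s * d₂ a = d₂ a * s + a * d₂ s := h1.symm.trans h2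
    rw [← mv_s' (d₂ a), add_comm (d₂ a * s) (a * d₂ s)] at h3
    exact add_right_cancel h3
  have mv_t₁ : ∀ a b : R, a * (d₁ s * b) = d₁ s * (a * b) := fun a b => by
    rw [← mul_assoc, ← hd₁s_cen, mul_assoc]
  have mv_t₁' : ∀ a : R, a * d₁ s = d₁ s * a := fun a => (hd₁s_cen a).symm
  have mv_t₂ : ∀ a b : R, a * (d₂ s * b) = d₂ s * (a * b) := fun a b => by
    rw [← mul_assoc, ← hd₂s_cen, mul_assoc]
  have mv_t₂' : ∀ a : R, a * d₂ s = d₂ s * a := fun a => (hd₂s_cen a).symm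
  have hstar_s : ∀ z : R, star (s * z) = -(s * star z) := by
    intro z; rw [star_mul, hs_star, mul_neg, mv_s']
  -- cancellation lemmas
  have hP2 : ∀ a : R, (2 : R) * a ∈ P → a ∈ P := by
    intro a ha
    rcases hP_prime 2 a (fun r => by
      rw [show (2 : R) * r * a = r * ((2 : R) * a) by
        rw [show (2 : R) * r = r * 2 by rw [two_mul, mul_two], mul_assoc]]
      exact P.mul_mem_left _ _ ha) with h2 | hh
    · exact absurd h2 hchar
    · exact hh
  have hPs : ∀ a : R, s * a ∈ P → a ∈ P := by
    intro a ha
    rcases hP_prime s a (fun r => by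
      rw [show s * r * a = r * (s * a) by rw [hs_comm, mul_assoc]]
      exact P.mul_mem_left _ _ ha) with h2 | hh
    · exact absurd h2 hs_nP
    · exact hh
  have cen2 : ∀ a : R, cenP P ((2 : R) * a) → cenP P a := by
    intro a ha r
    apply hP2
    have e : (2 : R) * (a * r - r * a) = ((2 : R) * a) * r - r * ((2 : R) * a) := by
      all_goals (first | noncomm_ring | abel)
    rw [e]; exact ha r
  -- Step 0 : hypothesis in terms of `stTf`
  have hc0 : ∀ x : R, cenP P (stTf d₁ d₂ x x) := fun x => h x
  -- Step 1 : linearization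
  have hΦ : ∀ x z : R, cenP P (stTf d₁ d₂ x z + stTf d₁ d₂ z x) := by
    intro x z
    have e : stTf d₁ d₂ x z + stTf d₁ d₂ z x
        = stTf d₁ d₂ (x + z) (x + z) - stTf d₁ d₂ x x - stTf d₁ d₂ z z := by
      simp only [stTf, star_add, hd₁_add, hd₂_add]; noncomm_ring
    exact cenP_of_eq P e (cenP_sub P (cenP_sub P (hc0 (x + z)) (hc0 x)) (hc0 z))
  -- substitution formulas
  have hTxsz : ∀ x z : R, stTf d₁ d₂ x (s * z)
      = -(s * stTf d₁ d₂ x z) - d₂ s * (x * star z + star z * x) := by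
    intro x z
    simp only [stTf, hstar_s, hd₂neg, hd₂_mul]
    simp only [mul_add, add_mul, mul_neg, neg_mul, mul_sub, sub_mul, mul_assoc, mv_t₂, mv_t₂']
    simp only [mul_add, add_mul, mul_neg, neg_mul, mul_sub, sub_mul, mul_assoc, mv_s, mv_s']
    all_goals (first | noncomm_ring | abel)
  have hTszx : ∀ x z : R, stTf d₁ d₂ (s * z) x
      = s * stTf d₁ d₂ z x + d₁ s * (z * star x + star x * z) := by
    intro x z
    simp only [stTf, hd₁_mul]
    simp only [mul_add, add_mul, mul_neg, neg_mul, mul_sub, sub_mul, mul_assoc, mv_t₁, mv_t₁']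
    simp only [mul_add, add_mul, mul_neg, neg_mul, mul_sub, sub_mul, mul_assoc, mv_s, mv_s']
    all_goals (first | noncomm_ring | abel)
  -- Step 2 : the expression `B` is central mod `P`
  have hB : ∀ x z : R, cenP P (stBf d₁ d₂ s x z) := by
    intro x z
    have e : stBf d₁ d₂ s x z
        = s * (stTf d₁ d₂ x z + stTf d₁ d₂ z x)
          - (stTf d₁ d₂ x (s * z) + stTf d₁ d₂ (s * z) x) := by
      rw [hTxsz, hTszx]; simp only [stBf]; noncomm_ring
    exact cenP_of_eq P e (cenP_sub P (cenP_smul P hs_comm (hΦ x z)) (hΦ x (s * z)))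
  -- Step 3 : the expression `C` is central mod `P`
  have hC : ∀ x z : R, cenP P (stCf d₁ d₂ s x z) := by
    intro x z
    have e : (2 : R) * ((2 : R) * stCf d₁ d₂ s x z)
        = s * stBf d₁ d₂ s x z - stBf d₁ d₂ s x (s * z) := by
      simp only [stBf, stCf, hTxsz, hstar_s]
      simp only [mul_add, add_mul, mul_neg, neg_mul, mul_sub, sub_mul, mul_assoc, mv_s, mv_s']
      all_goals (first | noncomm_ring | abel)
    have h1 : cenP P ((2 : R) * ((2 : R) * stCf d₁ d₂ s x z)) :=
      cenP_of_eq P e (cenP_sub P (cenP_smul P hs_comm (hB x z)) (hB x (s * z)))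
    exact cen2 _ (cen2 _ h1)
  -- Step 4 : `s³ * T` is central mod `P`
  have h2comm : ∀ r : R, (2 : R) * r = r * 2 := fun r => by rw [two_mul, mul_two]
  have hE : ∀ x z : R, cenP P (s * (s * (s * stTf d₁ d₂ x z))) := by
    intro x z
    have e : s * (s * (s * stTf d₁ d₂ x z))
        = (2 : R) * (s * stCf d₁ d₂ s x z) + stCf d₁ d₂ s x (s * z) := by
      simp only [stCf, hTxsz, hstar_s]
      simp only [mul_add, add_mul, mul_neg, neg_mul, mul_sub, sub_mul, mul_assoc, mv_s, mv_s']
      all_goals (first | noncomm_ring | abel)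
    exact cenP_of_eq P e
      (cenP_add P (cenP_smul P h2comm (cenP_smul P hs_comm (hC x z))) (hC x (s * z)))
  -- Step 5 : `T` itself is central mod `P`
  have hT : ∀ x z : R, cenP P (stTf d₁ d₂ x z) := by
    intro x z r
    have h3 := hE x z r
    have e : (s * (s * (s * stTf d₁ d₂ x z))) * r - r * (s * (s * (s * stTf d₁ d₂ x z)))
        = s * (s * (s * (stTf d₁ d₂ x z * r - r * stTf d₁ d₂ x z))) := by
      simp only [mul_sub, sub_mul, mul_assoc, mv_s, mv_s']
      all_goals (first | noncomm_ring | abel)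
    rw [e] at h3
    exact hPs _ (hPs _ (hPs _ h3))
  -- Step 6 : star-free version
  have hF : ∀ x w : R, cenP P ((d₁ x * w + w * d₁ x) + (x * d₂ w + d₂ w * x)) := by
    intro x w
    refine cenP_of_eq P ?_ (hT x (star w))
    simp only [stTf, star_star]
  -- Step 7 : each derivation is central mod `P`
  have hd1c : ∀ x : R, cenP P (d₁ x) := by
    intro x
    have h0 := hF x 1
    simp only [mul_one, one_mul, hd₂1, add_zero, mul_zero, zero_mul] at h0
    exact cen2 _ (cenP_of_eq P (two_mul (d₁ x)) h0)
  have hd2c : ∀ w : R, cenP P (d₂ w) := by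
    intro w
    have h0 := hF 1 w
    simp only [mul_one, one_mul, hd₁1, zero_add, mul_zero, zero_mul, add_zero] at h0
    exact cen2 _ (cenP_of_eq P (two_mul (d₂ w)) h0)
  -- Step 8 : `d₁ x * [w, x] ∈ P` and `d₂ w * [x, w] ∈ P`
  have hA1 : ∀ x w : R, d₁ x * (w * x - x * w) ∈ P := by
    intro x w
    apply hP2
    have hj1 := hF x w x
    have hj2 : d₂ w * (x * x) - (x * x) * d₂ w ∈ P := hd2c w (x * x)
    have hj3 : (d₁ x * x - x * d₁ x) * w ∈ P := P.mul_mem_right _ _ (hd1c x x)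
    have hj4 : w * (d₁ x * x - x * d₁ x) ∈ P := P.mul_mem_left _ _ (hd1c x x)
    have hj5 : (w * x - x * w) * d₁ x - d₁ x * (w * x - x * w) ∈ P := by
      have h0 := P.neg_mem (hd1c x (w * x - x * w)); rwa [neg_sub] at h0
    have key : (2 : R) * (d₁ x * (w * x - x * w))
        = (((d₁ x * w + w * d₁ x) + (x * d₂ w + d₂ w * x)) * x
            - x * ((d₁ x * w + w * d₁ x) + (x * d₂ w + d₂ w * x)))
          - (d₂ w * (x * x) - (x * x) * d₂ w)
          - ((d₁ x * x - x * d₁ x) * w)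
          - (w * (d₁ x * x - x * d₁ x))
          - ((w * x - x * w) * d₁ x - d₁ x * (w * x - x * w)) := by noncomm_ring
    rw [key]
    exact P.sub_mem (P.sub_mem (P.sub_mem (P.sub_mem hj1 hj2) hj3) hj4) hj5
  have hA2 : ∀ x w : R, d₂ w * (x * w - w * x) ∈ P := by
    intro x w
    apply hP2
    have hj1 := hF x w w
    have hj2 : d₁ x * (w * w) - (w * w) * d₁ x ∈ P := hd1c x (w * w)
    have hj3 : (d₂ w * w - w * d₂ w) * x ∈ P := P.mul_mem_right _ _ (hd2c w w)
    have hj4 : x * (d₂ w * w - w * d₂ w) ∈ P := P.mul_mem_left _ _ (hd2c w w)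
    have hj5 : (x * w - w * x) * d₂ w - d₂ w * (x * w - w * x) ∈ P := by
      have h0 := P.neg_mem (hd2c w (x * w - w * x)); rwa [neg_sub] at h0
    have key : (2 : R) * (d₂ w * (x * w - w * x))
        = (((d₁ x * w + w * d₁ x) + (x * d₂ w + d₂ w * x)) * w
            - w * ((d₁ x * w + w * d₁ x) + (x * d₂ w + d₂ w * x)))
          - (d₁ x * (w * w) - (w * w) * d₁ x)
          - ((d₂ w * w - w * d₂ w) * x)
          - (x * (d₂ w * w - w * d₂ w))
          - ((x * w - w * x) * d₂ w - d₂ w * (x * w - w * x)) := by noncomm_ring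
    rw [key]
    exact P.sub_mem (P.sub_mem (P.sub_mem (P.sub_mem hj1 hj2) hj3) hj4) hj5
  -- Step 9 : the prime splitting
  have hsplit₁ : ∀ x w : R, d₁ x ∈ P ∨ w * x - x * w ∈ P := by
    intro x w
    refine hP_prime _ _ (fun r => ?_)
    have key : d₁ x * r * (w * x - x * w)
        = r * (d₁ x * (w * x - x * w)) + (d₁ x * r - r * d₁ x) * (w * x - x * w) := by
      all_goals (first | noncomm_ring | abel)
    rw [key]
    exact P.add_mem (P.mul_mem_left _ _ (hA1 x w)) (P.mul_mem_right _ _ (hd1c x r))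
  have hsplit₂ : ∀ w x : R, d₂ w ∈ P ∨ x * w - w * x ∈ P := by
    intro w x
    refine hP_prime _ _ (fun r => ?_)
    have key : d₂ w * r * (x * w - w * x)
        = r * (d₂ w * (x * w - w * x)) + (d₂ w * r - r * d₂ w) * (x * w - w * x) := by
      all_goals (first | noncomm_ring | abel)
    rw [key]
    exact P.add_mem (P.mul_mem_left _ _ (hA2 x w)) (P.mul_mem_right _ _ (hd2c w r))
  -- Final case analysis
  by_cases hcomm : ∀ x y : R, x * y - y * x ∈ P
  · left
    refine ⟨hP_proper, hcomm, ?_⟩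
    intro x y hxy
    refine hP_prime x y (fun r => ?_)
    have key : x * r * y = r * (x * y) + (x * r - r * x) * y := by noncomm_ring
    rw [key]
    exact P.add_mem (P.mul_mem_left _ _ hxy) (P.mul_mem_right _ _ (hcomm x r))
  · right
    push_neg at hcomm
    obtain ⟨x₀, y₀, hx₀⟩ := hcomm
    have hx₀' : y₀ * x₀ - x₀ * y₀ ∉ P := by
      intro hmem
      exact hx₀ (by have := P.neg_mem hmem; rwa [neg_sub] at this)
    -- for every `x`, either both `d₁ x, d₂ x ∈ P`, or `x` is central mod `P`
    have hnc : ∀ x : R, (d₁ x ∈ P ∧ d₂ x ∈ P) ∨ (∀ w : R, w * x - x * w ∈ P) := by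
      intro x
      by_cases hx : ∀ w : R, w * x - x * w ∈ P
      · exact Or.inr hx
      · push_neg at hx
        obtain ⟨w, hw⟩ := hx
        left
        constructor
        · rcases hsplit₁ x w with h1 | h1
          · exact h1
          · exact absurd h1 hw
        · rcases hsplit₂ x w with h1 | h1
          · exact h1
          · exact absurd h1 hw
    have hx₀d : d₁ x₀ ∈ P ∧ d₂ x₀ ∈ P := by
      rcases hnc x₀ with hd | hcen'
      · exact hd
      · exact absurd (hcen' y₀) hx₀'
    have hmain : ∀ x : R, d₁ x ∈ P ∧ d₂ x ∈ P := by
      intro x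
      rcases hnc x with hd | hcen'
      · exact hd
      · -- `x` central mod `P`, so `x + x₀` is not central mod `P`
        rcases hnc (x + x₀) with hd | hcen''
        · constructor
          · have e : d₁ x = d₁ (x + x₀) - d₁ x₀ := by rw [hd₁_add]; abel
            rw [e]; exact P.sub_mem hd.1 hx₀d.1
          · have e : d₂ x = d₂ (x + x₀) - d₂ x₀ := by rw [hd₂_add]; abel
            rw [e]; exact P.sub_mem hd.2 hx₀d.2
        · exfalso
          apply hx₀'
          have h1 := hcen'' y₀
          have h2 := hcen' y₀
          have e : y₀ * x₀ - x₀ * y₀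
              = (y₀ * (x + x₀) - (x + x₀) * y₀) - (y₀ * x - x * y₀) := by noncomm_ring
          rw [e]; exact P.sub_mem h1 h2
    exact ⟨fun x => (hmain x).1, fun x => (hmain x).2⟩
end

section
/- Let R be an associative ring with involution *, let P be a prime ideal of R such that R/P has characteristic different from 2, and suppose * is of P-second kind (Z(R) ∩ S(R) is not contained in P). If d is a derivation of R such that the image of d(x ∘ x*) lies in Z(R/P) for all x ∈ R, then R/P is an integral domain or d(R) ⊆ P. -/
/-- Corollary 4.
Let `R` be a ring with involution `*`, `P` a prime ideal of `R` with `char (R/P) ≠ 2`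
(equivalently, since `P` is proper, `(2 : R) ∉ P`), and suppose `*` is of `P`-second kind
(`Z(R) ∩ S(R) ⊄ P`).  If `d` is a derivation of `R` such that the image of `d(x ∘ x*)`
lies in `Z(R/P)` for all `x ∈ R`, then `R/P` is an integral domain or `d(R) ⊆ P`. -/
theorem statement6 {R : Type*} [Ring R] [StarRing R] (P : TwoSidedIdeal R)
    (hP_proper : (1 : R) ∉ P)
    (hP_prime : ∀ a b : R, (∀ r : R, a * r * b ∈ P) → a ∈ P ∨ b ∈ P)
    (hchar : (2 : R) ∉ P)
    (hsecond : ∃ s : R, (∀ r : R, s * r = r * s) ∧ star s = -s ∧ s ∉ P)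
    (d : R → R)
    (hd_add : ∀ x y : R, d (x + y) = d x + d y)
    (hd_mul : ∀ x y : R, d (x * y) = d x * y + x * d y)
    -- `d(x ∘ x*)` is central modulo `P` for all `x`
    (h : ∀ x r : R,
      d (x * star x + star x * x) * r - r * d (x * star x + star x * x) ∈ P) :
    ((1 : R) ∉ P ∧ (∀ x y : R, x * y - y * x ∈ P) ∧
        (∀ x y : R, x * y ∈ P → x ∈ P ∨ y ∈ P))
      ∨ (∀ x : R, d x ∈ P) := by
  obtain ⟨s, hs_comm, hs_star, hs_not⟩ := hsecond
  -- basic facts about d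
  have hd1 : d 1 = 0 := by
    have h1 := hd_mul 1 1
    simp only [mul_one, one_mul] at h1
    exact left_eq_add.mp h1
  have hd0 : d 0 = 0 := by
    have h1 := hd_add 0 0
    simp only [add_zero] at h1
    exact left_eq_add.mp h1
  have hdneg : ∀ x : R, d (-x) = - d x := by
    intro x
    have h1 := hd_add x (-x)
    simp only [add_neg_cancel, hd0] at h1
    exact eq_neg_of_add_eq_zero_right h1.symm
  have hdsub : ∀ x y : R, d (x - y) = d x - d y := by
    intro x y
    rw [sub_eq_add_neg, hd_add, hdneg, ← sub_eq_add_neg]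
  -- cancellation of 2
  have mem2 : ∀ t : R, t + t ∈ P → t ∈ P := by
    intro t ht
    rcases hP_prime 2 t (fun r => by
      have e : (2 : R) * r * t = r * (t + t) := by noncomm_ring
      rw [e]; exact P.mul_mem_left _ _ ht) with h2 | h2
    · exact absurd h2 hchar
    · exact h2
  -- cancellation of s
  have mems : ∀ t : R, s * t ∈ P → t ∈ P := by
    intro t ht
    rcases hP_prime s t (fun r => by
      have e : s * r * t = r * (s * t) := by rw [hs_comm r]; noncomm_ring
      rw [e]; exact P.mul_mem_left _ _ ht) with h2 | h2
    · exact absurd h2 hs_not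
    · exact h2
  -- d of the square of a hermitian element is central mod P
  have hermC2 : ∀ a : R, star a = a → ∀ r : R, d (a * a) * r - r * d (a * a) ∈ P := by
    intro a ha r
    have h1 := h a r
    rw [ha, hd_add] at h1
    apply mem2
    have e2 : (d (a*a) * r - r * d (a*a)) + (d (a*a) * r - r * d (a*a))
        = (d (a*a) + d (a*a)) * r - r * (d (a*a) + d (a*a)) := by noncomm_ring
    rw [e2]; exact h1
  have hermC : ∀ a : R, star a = a → ∀ r : R, d a * r - r * d a ∈ P := by
    intro a ha r
    have h1 := h (a + 1) r
    have hstar : star (a + 1) = a + 1 := by rw [star_add, ha, star_one]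
    rw [hstar] at h1
    have e : (a + 1) * (a + 1) + (a + 1) * (a + 1)
        = (a * a + a * a) + ((a + a) + ((a + a) + (1 + 1))) := by noncomm_ring
    have h1' : d ((a + 1) * (a + 1) + (a + 1) * (a + 1))
        = (d (a*a) + d (a*a)) + ((d a + d a) + (d a + d a)) := by
      rw [e]
      simp only [hd_add, hd1, add_zero]
    rw [h1'] at h1
    have h2 := hermC2 a ha r
    have h3 : (d a * r - r * d a) + (d a * r - r * d a)
        + ((d a * r - r * d a) + (d a * r - r * d a)) ∈ P := by
      have e2 : (d a * r - r * d a) + (d a * r - r * d a)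
          + ((d a * r - r * d a) + (d a * r - r * d a))
          = (((d (a*a) + d (a*a)) + ((d a + d a) + (d a + d a))) * r
              - r * ((d (a*a) + d (a*a)) + ((d a + d a) + (d a + d a))))
            - ((d (a*a) * r - r * d (a*a)) + (d (a*a) * r - r * d (a*a))) := by noncomm_ring
      rw [e2]
      exact P.sub_mem h1 (P.add_mem h2 h2)
    exact mem2 _ (mem2 _ h3)
  -- key: d a * [a, r] ∈ P for hermitian a
  have key : ∀ a : R, star a = a → ∀ r : R, d a * (a * r - r * a) ∈ P := by
    intro a ha r
    have hcomm : d a * a - a * d a ∈ P := hermC a ha a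
    have h2 : d a * a * r - r * (d a * a) ∈ P := by
      apply mem2
      have h3 : d (a * a) * r - r * d (a * a) ∈ P := hermC2 a ha r
      have h4 : (d a * a - a * d a) * r - r * (d a * a - a * d a) ∈ P :=
        P.sub_mem (P.mul_mem_right _ _ hcomm) (P.mul_mem_left _ _ hcomm)
      have e : (d a * a * r - r * (d a * a)) + (d a * a * r - r * (d a * a))
          = (d (a*a) * r - r * d (a*a))
            + ((d a * a - a * d a) * r - r * (d a * a - a * d a)) := by
        rw [hd_mul]; noncomm_ring
      rw [e]; exact P.add_mem h3 h4
    have h5 : (r * d a - d a * r) * a ∈ P := by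
      apply P.mul_mem_right
      have h6 := hermC a ha r
      have e : r * d a - d a * r = -(d a * r - r * d a) := by noncomm_ring
      rw [e]; exact P.neg_mem h6
    have e : d a * (a * r - r * a)
        = (d a * a * r - r * (d a * a)) + (r * d a - d a * r) * a := by noncomm_ring
    rw [e]; exact P.add_mem h2 h5
  -- dichotomy for hermitian elements
  have dich : ∀ a : R, star a = a → d a ∉ P → ∀ r : R, a * r - r * a ∈ P := by
    intro a ha hda r
    rcases hP_prime (d a) (a * r - r * a) (fun t => by
      have h1 : t * (d a * (a * r - r * a)) ∈ P := P.mul_mem_left _ _ (key a ha r)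
      have h2 : (d a * t - t * d a) * (a * r - r * a) ∈ P :=
        P.mul_mem_right _ _ (hermC a ha t)
      have e : d a * t * (a * r - r * a)
          = t * (d a * (a * r - r * a)) + (d a * t - t * d a) * (a * r - r * a) := by
        noncomm_ring
      rw [e]; exact P.add_mem h1 h2) with h2 | h2
    · exact absurd h2 hda
    · exact h2
  by_cases hall : ∀ a : R, star a = a → d a ∈ P
  · -- then d(R) ⊆ P
    right
    have hss : star (s * s) = s * s := by rw [star_mul, hs_star]; noncomm_ring
    have hds : d s ∈ P := by
      have h1 : d (s * s) ∈ P := hall _ hss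
      rw [hd_mul] at h1
      rw [hs_comm (d s)] at h1
      apply mems
      apply mem2
      rw [show s * d s + s * d s = d s * s + d s * s by rw [hs_comm (d s)]]
      exact h1
    intro x
    have h1 : d x + d (star x) ∈ P := by
      have hh : star (x + star x) = x + star x := by
        rw [star_add, star_star, add_comm]
      have h2 := hall _ hh
      rwa [hd_add] at h2
    have hskewherm : star (s * (x - star x)) = s * (x - star x) := by
      rw [star_mul, star_sub, star_star, hs_star, hs_comm (x - star x)]
      noncomm_ring
    have h2 : d x - d (star x) ∈ P := by
      have h3 := hall _ hskewherm
      rw [hd_mul] at h3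
      have h5 : d s * (x - star x) ∈ P := P.mul_mem_right _ _ hds
      have h4 : s * d (x - star x) ∈ P := by
        rw [show s * d (x - star x)
            = (d s * (x - star x) + s * d (x - star x)) - d s * (x - star x) by
          noncomm_ring]
        exact P.sub_mem h3 h5
      have h6 := mems _ h4
      rwa [hdsub] at h6
    apply mem2
    rw [show d x + d x = (d x + d (star x)) + (d x - d (star x)) by noncomm_ring]
    exact P.add_mem h1 h2
  · -- R/P is a commutative domain
    left
    push_neg at hall
    obtain ⟨b, hb_herm, hb_not⟩ := hall
    have hbC : ∀ r : R, b * r - r * b ∈ P := dich b hb_herm hb_not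
    have hermCent : ∀ a : R, star a = a → ∀ r : R, a * r - r * a ∈ P := by
      intro a ha r
      by_cases hda : d a ∈ P
      · have hab : star (a + b) = a + b := by rw [star_add, ha, hb_herm]
        have hdab : d (a + b) ∉ P := by
          intro hmem
          apply hb_not
          rw [show d b = d (a + b) - d a by rw [hd_add]; noncomm_ring]
          exact P.sub_mem hmem hda
        have h1 := dich (a + b) hab hdab r
        rw [show a * r - r * a = ((a + b) * r - r * (a + b)) - (b * r - r * b) by
          noncomm_ring]
        exact P.sub_mem h1 (hbC r)
      · exact dich a ha hda r
    have cent : ∀ x r : R, x * r - r * x ∈ P := by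
      intro x r
      have h1 : (x + star x) * r - r * (x + star x) ∈ P :=
        hermCent _ (by rw [star_add, star_star, add_comm]) r
      have h2 : (x - star x) * r - r * (x - star x) ∈ P := by
        have hh : star (s * (x - star x)) = s * (x - star x) := by
          rw [star_mul, star_sub, star_star, hs_star, hs_comm (x - star x)]
          noncomm_ring
        have h3 := hermCent _ hh r
        apply mems
        rw [show s * ((x - star x) * r - r * (x - star x))
            = (s * (x - star x)) * r - r * (s * (x - star x)) by
          rw [show r * (s * (x - star x)) = s * (r * (x - star x)) by
            rw [← mul_assoc, ← hs_comm r, mul_assoc]]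
          noncomm_ring]
        exact h3
      apply mem2
      rw [show (x * r - r * x) + (x * r - r * x)
          = ((x + star x) * r - r * (x + star x))
            + ((x - star x) * r - r * (x - star x)) by noncomm_ring]
      exact P.add_mem h1 h2
    refine ⟨hP_proper, cent, ?_⟩
    intro x y hxy
    exact hP_prime x y (fun r => by
      have h1 : r * (x * y) ∈ P := P.mul_mem_left _ _ hxy
      have h2 : (x * r - r * x) * y ∈ P := P.mul_mem_right _ _ (cent x r)
      rw [show x * r * y = (x * r - r * x) * y + r * (x * y) by noncomm_ring]
      exact P.add_mem h2 h1)
end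

section
/- Let R be a 2-torsion free prime ring with involution * of the second kind (Z(R) ∩ S(R) ≠ {0}), and let d₁ and d₂ be nonzero derivations of R. Then d₁(x) ∘ x* + x ∘ d₂(x*) ∈ Z(R) for all x ∈ R if and only if R is an integral domain; likewise, d₁(x) ∘ x* − x ∘ d₂(x*) ∈ Z(R) for all x ∈ R if and only if R is an integral domain. -/
/-! Auxiliary machinery for Statement 7. -/

section Aux

variable {R : Type*} [Ring R]

lemma csw {z : R} (hz : ∀ r, z * r = r * z) (x y : R) :
    x * (z * y) = z * (x * y) := by rw [← mul_assoc, ← hz, mul_assoc]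

lemma csw' {z : R} (hz : ∀ r, z * r = r * z) (x : R) :
    x * z = z * x := (hz x).symm

lemma cz_add {s t : R} (hs : ∀ r, s * r = r * s) (ht : ∀ r, t * r = r * t) :
    ∀ r, (s + t) * r = r * (s + t) := by
  intro r; rw [add_mul, mul_add, hs, ht]

lemma cz_sub {s t : R} (hs : ∀ r, s * r = r * s) (ht : ∀ r, t * r = r * t) :
    ∀ r, (s - t) * r = r * (s - t) := by
  intro r; rw [sub_mul, mul_sub, hs, ht]

lemma cz_mul {s t : R} (hs : ∀ r, s * r = r * s) (ht : ∀ r, t * r = r * t) :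
    ∀ r, (s * t) * r = r * (s * t) := by
  intro r; rw [mul_assoc, ht, ← mul_assoc, hs, mul_assoc]

lemma cz_congr {s t : R} (h : s = t) (hs : ∀ r, s * r = r * s) :
    ∀ r, t * r = r * t := h ▸ hs

lemma cz_of_neg {t : R} (h : ∀ r, (-t) * r = r * (-t)) : ∀ r, t * r = r * t := by
  intro r
  have := h r
  rw [neg_mul, mul_neg, neg_inj] at this
  exact this

/-- A nonzero central element is regular in a prime ring. -/
lemma reg (hprime : ∀ a b : R, (∀ r : R, a * r * b = 0) → a = 0 ∨ b = 0)
    {z : R} (hz : ∀ r, z * r = r * z) (hz0 : z ≠ 0) {u : R} (h : z * u = 0) : u = 0 := by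
  rcases hprime z u (fun r => by rw [hz r, mul_assoc, h, mul_zero]) with h' | h'
  · exact absurd h' hz0
  · exact h'

/-- Cancellation of a nonzero central factor in a centrality statement. -/
lemma cancel (hprime : ∀ a b : R, (∀ r : R, a * r * b = 0) → a = 0 ∨ b = 0)
    {z : R} (hz : ∀ r, z * r = r * z) (hz0 : z ≠ 0) {t : R}
    (h : ∀ r, (z * t) * r = r * (z * t)) : ∀ r, t * r = r * t := by
  intro r
  have key : z * (t * r - r * t) = 0 := by
    rw [mul_sub, ← mul_assoc, h r, ← mul_assoc, ← hz r, mul_assoc]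
    exact sub_self _
  exact sub_eq_zero.mp (reg hprime hz hz0 key)

lemma halfC (h2tor : ∀ a : R, 2 * a = 0 → a = 0) {t : R}
    (h : ∀ r, (t + t) * r = r * (t + t)) : ∀ r, t * r = r * t := by
  intro r
  have key : 2 * (t * r - r * t) = 0 := by
    have := h r
    rw [add_mul, mul_add] at this
    linear_combination (norm := noncomm_ring) this
  exact sub_eq_zero.mp (h2tor _ key)

section Der

variable (d : R → R) (hd_add : ∀ x y : R, d (x + y) = d x + d y)

include hd_add

lemma d_zero : d 0 = 0 := by
  have := hd_add 0 0
  rw [add_zero] at this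
  linear_combination (norm := noncomm_ring) -this

lemma d_neg (x : R) : d (-x) = - d x := by
  have := hd_add x (-x)
  rw [add_neg_cancel, d_zero d hd_add] at this
  linear_combination (norm := noncomm_ring) -this

omit hd_add in
/-- A derivation maps central elements to central elements. -/
lemma d_central (hd_mul : ∀ x y : R, d (x * y) = d x * y + x * d y)
    {z : R} (hz : ∀ r, z * r = r * z) : ∀ r, d z * r = r * d z := by
  intro r
  have h1 : d (z * r) = d z * r + z * d r := hd_mul z r
  have h2 : d (r * z) = d r * z + r * d z := hd_mul r z
  have h3 : z * r = r * z := hz r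
  rw [h3, h2] at h1
  have h4 := csw' hz (d r)
  linear_combination (norm := noncomm_ring) h4 - h1

/-- If a nonzero derivation has central range in a prime ring, the ring is commutative. -/
lemma comm_of_d_central (hprime : ∀ a b : R, (∀ r : R, a * r * b = 0) → a = 0 ∨ b = 0)
    (hd_mul : ∀ x y : R, d (x * y) = d x * y + x * d y)
    (hd_ne : ∃ x : R, d x ≠ 0)
    (hc : ∀ z r : R, d z * r = r * d z) : ∀ x r : R, x * r = r * x := by
  have step1 : ∀ x y : R, d x * (y * x - x * y) = 0 := by
    intro x y
    have h1 := hc (x * y) x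
    rw [hd_mul] at h1
    have e1 : (d x * y + x * d y) * x = d x * (y * x) + x * (x * d y) := by
      rw [add_mul, mul_assoc, mul_assoc]
      congr 1
      rw [hc y x]
    have e2 : x * (d x * y + x * d y) = d x * (x * y) + x * (x * d y) := by
      rw [mul_add, ← mul_assoc, ← hc x x, mul_assoc, ← mul_assoc x x (d y)]
    rw [e1, e2] at h1
    have h5 : d x * (y * x) = d x * (x * y) := by
      linear_combination (norm := noncomm_ring) h1
    rw [mul_sub, h5]
    exact sub_self _
  have step2 : ∀ x y z : R, d x * y * (z * x - x * z) = 0 := by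
    intro x y z
    have h1 := step1 x (y * z)
    have h2 := step1 x y
    have h3 : d x * ((y * z) * x - x * (y * z))
        = d x * (y * (z * x - x * z)) + d x * (y * x - x * y) * z := by
      noncomm_ring
    rw [h1] at h3
    rw [h2, zero_mul, add_zero] at h3
    rw [mul_assoc, ← h3]
  have step3 : ∀ x : R, d x ≠ 0 → ∀ r : R, x * r = r * x := by
    intro x hx r
    rcases hprime (d x) (r * x - x * r) (fun y => step2 x y r) with h | h
    · exact absurd h hx
    · exact (sub_eq_zero.mp h).symm
  obtain ⟨x₀, hx₀⟩ := hd_ne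
  intro x r
  by_cases hx : d x = 0
  · have hxx : d (x + x₀) ≠ 0 := by
      rw [hd_add, hx, zero_add]; exact hx₀
    have c1 := step3 _ hxx
    have c0 := step3 _ hx₀
    have e : x = (x + x₀) - x₀ := by abel
    rw [e, sub_mul, mul_sub, c1 r, c0 r]
  · exact step3 x hx r

end Der

end Aux

section Star

variable {R : Type*} [Ring R] [StarRing R]

/-- If `x ∘ x*` is central for all `x`, with involution of the second kind,
then `R` is commutative. -/
lemma comm_of_anticomm (hprime : ∀ a b : R, (∀ r : R, a * r * b = 0) → a = 0 ∨ b = 0)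
    (h2tor : ∀ a : R, 2 * a = 0 → a = 0)
    {h : R} (hh : ∀ r, h * r = r * h) (hsh : star h = -h) (hne : h ≠ 0)
    (hc : ∀ x r : R, (x * star x + star x * x) * r = r * (x * star x + star x * x)) :
    ∀ x r : R, x * r = r * x := by
  have lin : ∀ x y r : R,
      (x * star y + star y * x + (y * star x + star x * y)) * r
        = r * (x * star y + star y * x + (y * star x + star x * y)) := by
    intro x y r
    have h1 := hc (x + y) r
    have h2 := hc x r
    have h3 := hc y r
    rw [star_add] at h1
    linear_combination (norm := noncomm_ring) h1 - h2 - h3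
  have skewc : ∀ x : R, ∀ r : R, (star x - x) * r = r * (star x - x) := by
    intro x
    have key : ∀ r : R, (h * (star x - x) + h * (star x - x)) * r
        = r * (h * (star x - x) + h * (star x - x)) := by
      intro r
      have h1 := lin x h r
      rw [hsh] at h1
      have e : x * (-h) + (-h) * x + (h * star x + star x * h)
          = h * (star x - x) + h * (star x - x) := by
        simp only [mul_neg, neg_mul, mul_sub, csw' hh]
        noncomm_ring
      rw [e] at h1
      exact h1
    exact cancel hprime hh hne (halfC h2tor key)
  have hermc : ∀ x : R, ∀ r : R, (star x + x) * r = r * (star x + x) := by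
    intro x
    have key := skewc (x * h)
    have e : star (x * h) - x * h = -(h * (star x + x)) := by
      rw [star_mul, hsh]
      simp only [neg_mul, mul_add, csw' hh]
      noncomm_ring
    rw [e] at key
    exact cancel hprime hh hne (cz_of_neg key)
  intro x
  have key : ∀ r, (x + x) * r = r * (x + x) := by
    intro r
    have h1 := skewc x r
    have h2 := hermc x r
    have e : (x + x) = (star x + x) - (star x - x) := by abel
    rw [e, sub_mul, mul_sub, h1, h2]
  exact halfC h2tor key

/-- The expression `d₁(x) ∘ x* + e · (x ∘ d₂(x*))`. -/
def Fe (d₁ d₂ : R → R) (e : R) (x : R) : R :=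
  (d₁ x * star x + star x * d₁ x) + e * (x * d₂ (star x) + d₂ (star x) * x)

lemma id1 (d₁ d₂ : R → R)
    (hd₁_add : ∀ x y : R, d₁ (x + y) = d₁ x + d₁ y)
    (hd₁_mul : ∀ x y : R, d₁ (x * y) = d₁ x * y + x * d₁ y)
    (hd₂_add : ∀ x y : R, d₂ (x + y) = d₂ x + d₂ y)
    (hd₂_mul : ∀ x y : R, d₂ (x * y) = d₂ x * y + x * d₂ y)
    (hd₂_neg : ∀ x : R, d₂ (-x) = - d₂ x)
    (e : R) (he : ∀ r, e * r = r * e)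
    (h : R) (hh : ∀ r, h * r = r * h) (hsh : star h = -h)
    (ha : ∀ r, d₁ h * r = r * d₁ h) (hb : ∀ r, d₂ h * r = r * d₂ h)
    (x : R) : Fe d₁ d₂ e (x + x * h) - Fe d₁ d₂ e x - Fe d₁ d₂ e (x * h)
      = (d₁ h - e * d₂ h) * (x * star x + star x * x) := by
  simp only [Fe, star_add, star_mul, hsh, neg_mul]
  simp only [hd₁_add, hd₂_add, hd₁_mul, hd₂_neg, hd₂_mul]
  simp only [mul_add, add_mul, mul_assoc, neg_mul, mul_neg, neg_neg, sub_eq_add_neg, neg_add,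
    csw hh, csw' hh]
  simp only [csw ha, csw' ha]
  simp only [csw hb, csw' hb]
  simp only [csw he, csw' he]
  abel

lemma id2 (d₁ d₂ : R → R)
    (hd₁_mul : ∀ x y : R, d₁ (x * y) = d₁ x * y + x * d₁ y)
    (hd₂_add : ∀ x y : R, d₂ (x + y) = d₂ x + d₂ y)
    (hd₂_mul : ∀ x y : R, d₂ (x * y) = d₂ x * y + x * d₂ y)
    (hd₂_neg : ∀ x : R, d₂ (-x) = - d₂ x)
    (e : R) (he : ∀ r, e * r = r * e)
    (h : R) (hh : ∀ r, h * r = r * h) (hsh : star h = -h)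
    (ha : ∀ r, d₁ h * r = r * d₁ h) (hb : ∀ r, d₂ h * r = r * d₂ h)
    (x : R) : Fe d₁ d₂ e (x * h) + (h * h) * Fe d₁ d₂ e x
      = -((h * (d₁ h + e * d₂ h)) * (x * star x + star x * x)) := by
  simp only [Fe, star_add, star_mul, hsh, neg_mul]
  simp only [hd₂_add, hd₁_mul, hd₂_neg, hd₂_mul]
  simp only [mul_add, add_mul, mul_assoc, neg_mul, mul_neg, neg_neg, sub_eq_add_neg, neg_add,
    csw hh, csw' hh]
  simp only [csw ha, csw' ha]
  simp only [csw hb, csw' hb]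
  simp only [csw he, csw' he]
  abel

lemma id3 (d₁ d₂ : R → R)
    (hd₁_add : ∀ x y : R, d₁ (x + y) = d₁ x + d₁ y)
    (hd₂_add : ∀ x y : R, d₂ (x + y) = d₂ x + d₂ y)
    (hd₂_neg : ∀ x : R, d₂ (-x) = - d₂ x)
    (e : R) (he : ∀ r, e * r = r * e)
    (h : R) (hh : ∀ r, h * r = r * h) (hsh : star h = -h)
    (ha0 : d₁ h = 0) (hb0 : d₂ h = 0)
    (x : R) : Fe d₁ d₂ e (x + h) - Fe d₁ d₂ e x - Fe d₁ d₂ e h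
      = (e * (h * d₂ (star x)) - h * d₁ x) + (e * (h * d₂ (star x)) - h * d₁ x) := by
  simp only [Fe, star_add, hsh]
  simp only [hd₁_add, hd₂_add, hd₂_neg, ha0, hb0, neg_zero, zero_mul, mul_zero, add_zero,
    zero_add]
  simp only [mul_add, add_mul, mul_assoc, neg_mul, mul_neg, neg_neg, sub_eq_add_neg, neg_add,
    csw hh, csw' hh]
  simp only [csw he, csw' he]
  abel

lemma id4 (d₁ d₂ : R → R)
    (hd₁_mul : ∀ x y : R, d₁ (x * y) = d₁ x * y + x * d₁ y)
    (hd₂_mul : ∀ x y : R, d₂ (x * y) = d₂ x * y + x * d₂ y)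
    (hd₂_neg : ∀ x : R, d₂ (-x) = - d₂ x)
    (e : R) (he : ∀ r, e * r = r * e)
    (h : R) (hh : ∀ r, h * r = r * h) (hsh : star h = -h)
    (ha0 : d₁ h = 0) (hb0 : d₂ h = 0)
    (x : R) : h * (e * (h * d₂ (star x)) - h * d₁ x)
        + (e * (h * d₂ (star (x * h))) - h * d₁ (x * h))
      = -((h * (h * d₁ x)) + (h * (h * d₁ x))) := by
  simp only [star_mul, hsh, neg_mul]
  simp only [hd₁_mul, hd₂_neg, hd₂_mul, ha0, hb0, neg_zero, zero_mul, mul_zero, add_zero,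
    zero_add]
  simp only [mul_add, add_mul, mul_assoc, neg_mul, mul_neg, neg_neg, sub_eq_add_neg, neg_add,
    csw hh, csw' hh]
  simp only [csw he, csw' he]
  abel

/-- Main forward lemma: centrality of `Fe` forces commutativity. -/
lemma forward (hprime : ∀ a b : R, (∀ r : R, a * r * b = 0) → a = 0 ∨ b = 0)
    (h2tor : ∀ a : R, 2 * a = 0 → a = 0)
    (hsecond : ∃ s : R, (∀ r : R, s * r = r * s) ∧ star s = -s ∧ s ≠ 0)
    (d₁ d₂ : R → R)
    (hd₁_add : ∀ x y : R, d₁ (x + y) = d₁ x + d₁ y)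
    (hd₁_mul : ∀ x y : R, d₁ (x * y) = d₁ x * y + x * d₁ y)
    (hd₂_add : ∀ x y : R, d₂ (x + y) = d₂ x + d₂ y)
    (hd₂_mul : ∀ x y : R, d₂ (x * y) = d₂ x * y + x * d₂ y)
    (hd₁_ne : ∃ x : R, d₁ x ≠ 0)
    (e : R) (he : ∀ r, e * r = r * e) (he2 : e * e = 1)
    (H : ∀ x r : R, Fe d₁ d₂ e x * r = r * Fe d₁ d₂ e x) :
    ∀ x r : R, x * r = r * x := by
  obtain ⟨h, hh, hsh, hne⟩ := hsecond
  have ha := d_central d₁ hd₁_mul hh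
  have hb := d_central d₂ hd₂_mul hh
  have hd₂_neg := d_neg d₂ hd₂_add
  by_cases hc1 : d₁ h - e * d₂ h = 0
  · by_cases hc2 : d₁ h + e * d₂ h = 0
    · -- both coefficients vanish
      have ha0 : d₁ h = 0 := by
        apply h2tor
        linear_combination (norm := noncomm_ring) hc1 + hc2
      have hb0 : d₂ h = 0 := by
        have h1 : e * d₂ h = 0 := by rw [ha0, zero_add] at hc2; exact hc2
        rw [← one_mul (d₂ h), ← he2, mul_assoc, h1, mul_zero]
      have hP : ∀ x : R, ∀ r, (e * (h * d₂ (star x)) - h * d₁ x) * r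
          = r * (e * (h * d₂ (star x)) - h * d₁ x) := by
        intro x
        exact halfC h2tor (cz_congr
          (id3 d₁ d₂ hd₁_add hd₂_add hd₂_neg e he h hh hsh ha0 hb0 x)
          (cz_sub (cz_sub (H (x + h)) (H x)) (H h)))
      have hQ : ∀ x : R, ∀ r, d₁ x * r = r * d₁ x := by
        intro x
        have c := cz_add (cz_mul hh (hP x)) (hP (x * h))
        have c2 := cz_congr
          (id4 d₁ d₂ hd₁_mul hd₂_mul hd₂_neg e he h hh hsh ha0 hb0 x) c
        have c4 := halfC h2tor (cz_of_neg c2)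
        exact cancel hprime hh hne (cancel hprime hh hne c4)
      exact comm_of_d_central d₁ hd₁_add hprime hd₁_mul hd₁_ne hQ
    · -- d₁ h + e d₂ h ≠ 0
      have hxx : ∀ x r : R, (x * star x + star x * x) * r
          = r * (x * star x + star x * x) := by
        intro x
        have c := cz_add (H (x * h)) (cz_mul (cz_mul hh hh) (H x))
        have c2 := cz_congr
          (id2 d₁ d₂ hd₁_mul hd₂_add hd₂_mul hd₂_neg e he h hh hsh ha hb x) c
        have c3 := cz_congr
          (mul_assoc h (d₁ h + e * d₂ h) (x * star x + star x * x)) (cz_of_neg c2)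
        exact cancel hprime (cz_add ha (cz_mul he hb)) hc2
          (cancel hprime hh hne c3)
      exact comm_of_anticomm hprime h2tor hh hsh hne hxx
  · -- d₁ h - e d₂ h ≠ 0
    have hxx : ∀ x r : R, (x * star x + star x * x) * r
        = r * (x * star x + star x * x) := by
      intro x
      have c := cz_sub (cz_sub (H (x + x * h)) (H x)) (H (x * h))
      have c2 := cz_congr
        (id1 d₁ d₂ hd₁_add hd₁_mul hd₂_add hd₂_mul hd₂_neg e he h hh hsh ha hb x) c
      exact cancel hprime (cz_sub ha (cz_mul he hb)) hc1 c2
    exact comm_of_anticomm hprime h2tor hh hsh hne hxx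

end Star

/-- Corollary 5.
Let `R` be a 2-torsion free prime ring with involution `*` of the second kind, and let
`d₁, d₂` be nonzero derivations of `R`.  Then `d₁(x) ∘ x* ± x ∘ d₂(x*) ∈ Z(R)` for all
`x ∈ R` if and only if `R` is an integral domain (for either choice of sign). -/
theorem statement7 {R : Type*} [Ring R] [StarRing R]
    (hprime : ∀ a b : R, (∀ r : R, a * r * b = 0) → a = 0 ∨ b = 0)
    (h2tor : ∀ a : R, 2 * a = 0 → a = 0)
    (hsecond : ∃ s : R, (∀ r : R, s * r = r * s) ∧ star s = -s ∧ s ≠ 0)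
    (d₁ d₂ : R → R)
    (hd₁_add : ∀ x y : R, d₁ (x + y) = d₁ x + d₁ y)
    (hd₁_mul : ∀ x y : R, d₁ (x * y) = d₁ x * y + x * d₁ y)
    (hd₂_add : ∀ x y : R, d₂ (x + y) = d₂ x + d₂ y)
    (hd₂_mul : ∀ x y : R, d₂ (x * y) = d₂ x * y + x * d₂ y)
    (hd₁_ne : ∃ x : R, d₁ x ≠ 0) (hd₂_ne : ∃ x : R, d₂ x ≠ 0) :
    ((∀ x r : R,
        ((d₁ x * star x + star x * d₁ x) + (x * d₂ (star x) + d₂ (star x) * x)) * r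
          = r * ((d₁ x * star x + star x * d₁ x) + (x * d₂ (star x) + d₂ (star x) * x)))
      ↔ ((0 : R) ≠ 1 ∧ (∀ a b : R, a * b = b * a) ∧
          (∀ a b : R, a * b = 0 → a = 0 ∨ b = 0)))
    ∧
    ((∀ x r : R,
        ((d₁ x * star x + star x * d₁ x) - (x * d₂ (star x) + d₂ (star x) * x)) * r
          = r * ((d₁ x * star x + star x * d₁ x) - (x * d₂ (star x) + d₂ (star x) * x)))
      ↔ ((0 : R) ≠ 1 ∧ (∀ a b : R, a * b = b * a) ∧
          (∀ a b : R, a * b = 0 → a = 0 ∨ b = 0))) := by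
  have post : (∀ a b : R, a * b = b * a) →
      ((0 : R) ≠ 1 ∧ (∀ a b : R, a * b = b * a) ∧
        (∀ a b : R, a * b = 0 → a = 0 ∨ b = 0)) := by
    intro hcomm
    refine ⟨?_, hcomm, ?_⟩
    · intro h01
      obtain ⟨x, hx⟩ := hd₁_ne
      apply hx
      calc d₁ x = d₁ x * 1 := (mul_one _).symm
        _ = d₁ x * 0 := by rw [← h01]
        _ = 0 := mul_zero _
    · intro a b hab
      refine hprime a b (fun r => ?_)
      rw [hcomm a r, mul_assoc, hab, mul_zero]
  constructor
  · constructor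
    · intro H
      apply post
      refine forward hprime h2tor hsecond d₁ d₂ hd₁_add hd₁_mul hd₂_add hd₂_mul hd₁_ne
        1 (fun r => by rw [one_mul, mul_one]) (one_mul 1) ?_
      intro x r
      simpa only [Fe, one_mul] using H x r
    · rintro ⟨h01, hcomm, hdom⟩ x r
      exact hcomm _ _
  · constructor
    · intro H
      apply post
      refine forward hprime h2tor hsecond d₁ d₂ hd₁_add hd₁_mul hd₂_add hd₂_mul hd₁_ne
        (-1) (fun r => by rw [neg_one_mul, mul_neg_one]) (by norm_num) ?_
      intro x r
      simpa only [Fe, neg_one_mul, ← sub_eq_add_neg] using H x r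
    · rintro ⟨h01, hcomm, hdom⟩ x r
      exact hcomm _ _
end
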